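/- arXiv:1301.4847 — 8 statements merged into one kernel-verified Lean document; each statement's English description precedes it below -/
import Mathlib

section
/- For every δ∈(0,1) and every classical solution (u,φ) of the bistable system with diffusion δ, one has ∫_{-1}^1 u(t,x) dx ≤ ∫_{-1}^1 u₀(x) dx + 2 r (1−a) T for all t∈[0,T]. -/
open Set MeasureTheory intervalIntegral Metric

noncomputable def pnorm (p : ℝ) (f : ℝ → ℝ) : ℝ :=
  (∫ x in (-1:ℝ)..1, |f x| ^ p) ^ (1 / p)

noncomputable def supnorm (f : ℝ → ℝ) : ℝ :=
  sSup ((fun x => |f x|) '' Set.Icc (-1:ℝ) 1)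

/-- A classical solution of the bistable system with diffusion `δ`:
`∂ₜu = δ ∂ₓ²u − ∂ₓ(u φ) + r u (1−u)(u−a)`, `−ε ∂ₓ²φ + φ = (−2u+a+1) ∂ₓu`,
Neumann b.c. for `u`, Dirichlet b.c. for `φ`, initial datum `u₀`. -/
structure IsBistableSol (T ε r a δ : ℝ) (u₀ : ℝ → ℝ) (u φ : ℝ → ℝ → ℝ) : Prop where
  smooth_u : ContDiff ℝ (⊤ : ℕ∞) (fun q : ℝ × ℝ => u q.1 q.2)
  smooth_phi : ContDiff ℝ (⊤ : ℕ∞) (fun q : ℝ × ℝ => φ q.1 q.2)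
  nonneg : ∀ t ∈ Set.Icc (0:ℝ) T, ∀ x ∈ Set.Icc (-1:ℝ) 1, 0 ≤ u t x
  eq_u : ∀ t ∈ Set.Icc (0:ℝ) T, ∀ x ∈ Set.Icc (-1:ℝ) 1,
    deriv (fun s => u s x) t =
      δ * deriv (deriv (u t)) x - deriv (fun y => u t y * φ t y) x
        + r * u t x * (1 - u t x) * (u t x - a)
  eq_phi : ∀ t ∈ Set.Icc (0:ℝ) T, ∀ x ∈ Set.Icc (-1:ℝ) 1,
    -ε * deriv (deriv (φ t)) x + φ t x = (-2 * u t x + a + 1) * deriv (u t) x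
  bc_u : ∀ t ∈ Set.Icc (0:ℝ) T, deriv (u t) (-1) = 0 ∧ deriv (u t) 1 = 0
  bc_phi : ∀ t ∈ Set.Icc (0:ℝ) T, φ t (-1) = 0 ∧ φ t 1 = 0
  init : ∀ x ∈ Set.Icc (-1:ℝ) 1, u 0 x = u₀ x

theorem mass_bound_bistable_aux (T ε r a : ℝ) (u₀ : ℝ → ℝ)
    (hT : 0 < T) (hε : 0 < ε) (hr : 0 ≤ r) (ha : a ∈ Set.Ioo (0:ℝ) 1)
    (hu₀ : ContDiff ℝ (⊤ : ℕ∞) u₀) (hu₀nonneg : ∀ x ∈ Set.Icc (-1:ℝ) 1, 0 ≤ u₀ x) :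
    ∀ δ ∈ Set.Ioo (0:ℝ) 1, ∀ u φ : ℝ → ℝ → ℝ,
      (ContDiff ℝ (⊤ : ℕ∞) (fun q : ℝ × ℝ => u q.1 q.2)) →
      (ContDiff ℝ (⊤ : ℕ∞) (fun q : ℝ × ℝ => φ q.1 q.2)) →
      (∀ t ∈ Set.Icc (0:ℝ) T, ∀ x ∈ Set.Icc (-1:ℝ) 1, 0 ≤ u t x) →
      (∀ t ∈ Set.Icc (0:ℝ) T, ∀ x ∈ Set.Icc (-1:ℝ) 1,
        deriv (fun s => u s x) t =
          δ * deriv (deriv (u t)) x - deriv (fun y => u t y * φ t y) x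
            + r * u t x * (1 - u t x) * (u t x - a)) →
      (∀ t ∈ Set.Icc (0:ℝ) T, deriv (u t) (-1) = 0 ∧ deriv (u t) 1 = 0) →
      (∀ t ∈ Set.Icc (0:ℝ) T, φ t (-1) = 0 ∧ φ t 1 = 0) →
      (∀ x ∈ Set.Icc (-1:ℝ) 1, u 0 x = u₀ x) →
      ∀ t ∈ Set.Icc (0:ℝ) T,
        (∫ x in (-1:ℝ)..1, u t x) ≤ (∫ x in (-1:ℝ)..1, u₀ x) + 2 * r * (1 - a) * T := by
  rintro δ hδ u φ hGsm hPsm hnn heq hbcu hbcphi hinit t ht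
  obtain ⟨ha0, ha1⟩ := ha
  set G : ℝ × ℝ → ℝ := fun q => u q.1 q.2 with hGdef
  -- partial t-derivative
  set ut : ℝ → ℝ → ℝ := fun s x => fderiv ℝ G (s, x) (1, 0) with hutdef
  have hut : ∀ (s x : ℝ), HasDerivAt (fun s' => u s' x) (ut s x) s := by
    intro s x
    have h1 : HasDerivAt (fun s' : ℝ => ((s' : ℝ), x)) ((1:ℝ), (0:ℝ)) s :=
      (hasDerivAt_id s).prodMk (hasDerivAt_const s x)
    exact ((hGsm.differentiable (by simp) (s, x)).hasFDerivAt.comp_hasDerivAt s h1)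
  have hutc : Continuous (fun q : ℝ × ℝ => ut q.1 q.2) := by
    exact ((hGsm.continuous_fderiv (by simp)).clm_apply continuous_const)
  -- x-sections are smooth
  have hsec : ∀ s : ℝ, ContDiff ℝ (⊤ : ℕ∞) (u s) := by
    intro s
    exact hGsm.comp ((contDiff_const : ContDiff ℝ (⊤ : ℕ∞) (fun _ : ℝ => s)).prodMk contDiff_id)
  have hsecφ : ∀ s : ℝ, ContDiff ℝ (⊤ : ℕ∞) (φ s) := by
    intro s
    exact hPsm.comp ((contDiff_const : ContDiff ℝ (⊤ : ℕ∞) (fun _ : ℝ => s)).prodMk contDiff_id)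
  have hcu : ∀ s : ℝ, Continuous (u s) := fun s => (hsec s).continuous
  -- derivative of the mass
  have hM : ∀ s : ℝ, HasDerivAt (fun s' => ∫ x in (-1:ℝ)..1, u s' x)
      (∫ x in (-1:ℝ)..1, ut s x) s := by
    intro s
    obtain ⟨C, hC⟩ :=
      ((isCompact_Icc (a := s - 1) (b := s + 1)).prod
        (isCompact_Icc (a := (-1:ℝ)) (b := 1))).exists_bound_of_continuousOn
        hutc.continuousOn
    refine (intervalIntegral.hasDerivAt_integral_of_dominated_loc_of_deriv_le
      (F := fun s' x => u s' x) (F' := ut) (x₀ := s) (bound := fun _ => |C|)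
      (s := Metric.ball s 1) (Metric.ball_mem_nhds s one_pos) ?_ ?_ ?_ ?_ ?_ ?_).2
    · exact Filter.Eventually.of_forall fun s' => (hcu s').aestronglyMeasurable
    · exact (hcu s).intervalIntegrable _ _
    · exact (hutc.comp (continuous_const.prodMk continuous_id)).aestronglyMeasurable
    · refine Filter.Eventually.of_forall fun x hx s' hs' => ?_
      refine (hC (s', x) ⟨?_, ?_⟩).trans (le_abs_self C)
      · have := Real.ball_eq_Ioo s 1 ▸ hs'
        exact ⟨by linarith [this.1], by linarith [this.2]⟩
      · have := uIoc_of_le (by norm_num : (-1:ℝ) ≤ 1) ▸ hx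
        exact ⟨le_of_lt this.1, this.2⟩
    · exact intervalIntegrable_const
    · exact Filter.Eventually.of_forall fun x _ s' _ => hut s' x
  -- bound on the derivative for s ∈ [0,T]
  have key : ∀ s ∈ Set.Icc (0:ℝ) T, (∫ x in (-1:ℝ)..1, ut s x) ≤ 2 * r * (1 - a) := by
    intro s hs
    have hsec' : ContDiff ℝ ((⊤:ℕ∞) : WithTop ℕ∞) (u s) := (hsec s).of_le (by simp)
    have hds : ContDiff ℝ ((⊤:ℕ∞) : WithTop ℕ∞) (deriv (u s)) :=
      (contDiff_infty_iff_deriv.mp hsec').2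
    have hdds : Continuous (deriv (deriv (u s))) :=
      (contDiff_infty_iff_deriv.mp hds).2.continuous
    have huφ : ContDiff ℝ ((⊤:ℕ∞) : WithTop ℕ∞) (fun y => u s y * φ s y) :=
      (hsec'.mul ((hsecφ s).of_le (by simp)))
    have hduφ : Continuous (deriv (fun y => u s y * φ s y)) :=
      (contDiff_infty_iff_deriv.mp huφ).2.continuous
    have hreac : Continuous (fun x => r * u s x * (1 - u s x) * (u s x - a)) :=
      ((continuous_const.mul (hcu s)).mul (continuous_const.sub (hcu s))).mul
        ((hcu s).sub continuous_const)
    have hcong : (∫ x in (-1:ℝ)..1, ut s x) =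
        ∫ x in (-1:ℝ)..1, (δ * deriv (deriv (u s)) x
          - deriv (fun y => u s y * φ s y) x
          + r * u s x * (1 - u s x) * (u s x - a)) := by
      refine intervalIntegral.integral_congr fun x hx => ?_
      have hx' : x ∈ Set.Icc (-1:ℝ) 1 := by
        rwa [uIcc_of_le (by norm_num : (-1:ℝ) ≤ 1)] at hx
      rw [← heq s hs x hx']
      exact ((hut s x).deriv).symm
    have hI1 : (∫ x in (-1:ℝ)..1, deriv (deriv (u s)) x) = 0 := by
      rw [intervalIntegral.integral_deriv_eq_sub
        (fun x _ => (hds.differentiable (by simp)).differentiableAt)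
        (hdds.intervalIntegrable _ _)]
      rw [(hbcu s hs).1, (hbcu s hs).2, sub_zero]
    have hI2 : (∫ x in (-1:ℝ)..1, deriv (fun y => u s y * φ s y) x) = 0 := by
      rw [intervalIntegral.integral_deriv_eq_sub
        (fun x _ => (huφ.differentiable (by simp)).differentiableAt)
        (hduφ.intervalIntegrable _ _)]
      rw [(hbcphi s hs).1, (hbcphi s hs).2, mul_zero, mul_zero, sub_zero]
    have hI3 : (∫ x in (-1:ℝ)..1, r * u s x * (1 - u s x) * (u s x - a)) ≤
        ∫ x in (-1:ℝ)..1, r * (1 - a) := by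
      refine intervalIntegral.integral_mono_on (by norm_num)
        (hreac.intervalIntegrable _ _) intervalIntegrable_const ?_
      intro x hx
      have hv : 0 ≤ u s x := hnn s hs x hx
      set v := u s x
      have h : v * (1 - v) * (v - a) ≤ 1 - a := by
        nlinarith [sq_nonneg (v - 1), sq_nonneg v, sq_nonneg (v*(1-v)), mul_nonneg hv hv]
      calc r * v * (1 - v) * (v - a) = r * (v * (1-v) * (v-a)) := by ring
        _ ≤ r * (1 - a) := mul_le_mul_of_nonneg_left h hr
    rw [hcong]
    rw [intervalIntegral.integral_add (f := fun x => δ * deriv (deriv (u s)) x - deriv (fun y => u s y * φ s y) x) (((continuous_const.mul hdds).sub hduφ).intervalIntegrable _ _)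
        (hreac.intervalIntegrable _ _),
      intervalIntegral.integral_sub (f := fun x => δ * deriv (deriv (u s)) x) ((continuous_const.mul hdds).intervalIntegrable _ _)
        (hduφ.intervalIntegrable _ _),
      intervalIntegral.integral_const_mul, hI1, hI2]
    have hconst : (∫ _x in (-1:ℝ)..1, r * (1 - a)) = 2 * r * (1 - a) := by
      simp [intervalIntegral.integral_const]; ring
    linarith [hI3, hconst.le, hconst.ge]
  -- Gronwall-type conclusion
  set c : ℝ := 2 * r * (1 - a) with hc
  have hc0 : 0 ≤ c := by
    have : 0 ≤ 1 - a := by linarith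
    positivity
  set g : ℝ → ℝ := fun s => (∫ x in (-1:ℝ)..1, u s x) - c * s with hg
  have hg' : ∀ s : ℝ, HasDerivAt g ((∫ x in (-1:ℝ)..1, ut s x) - c) s := by
    intro s
    have h := (hM s).sub ((hasDerivAt_id s).const_mul c)
    rw [mul_one] at h
    exact h
  have hanti : AntitoneOn g (Set.Icc 0 T) := by
    refine antitoneOn_of_deriv_nonpos (convex_Icc 0 T)
      (fun s _ => (hg' s).continuousAt.continuousWithinAt)
      (fun s _ => ((hg' s).differentiableAt).differentiableWithinAt) ?_
    intro s hs
    rw [interior_Icc] at hs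
    rw [(hg' s).deriv]
    have := key s ⟨le_of_lt hs.1, le_of_lt hs.2⟩
    linarith
  have h0T : (0:ℝ) ∈ Set.Icc (0:ℝ) T := ⟨le_refl _, le_of_lt hT⟩
  have hgle := hanti h0T ht ht.1
  have hinit' : (∫ x in (-1:ℝ)..1, u 0 x) = ∫ x in (-1:ℝ)..1, u₀ x := by
    refine intervalIntegral.integral_congr fun x hx => ?_
    exact hinit x (by rwa [uIcc_of_le (by norm_num : (-1:ℝ) ≤ 1)] at hx)
  have : g t ≤ g 0 := hgle
  simp only [hg, mul_zero, sub_zero] at this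
  rw [hinit'] at this
  have hct : c * t ≤ c * T := mul_le_mul_of_nonneg_left ht.2 hc0
  calc (∫ x in (-1:ℝ)..1, u t x) ≤ (∫ x in (-1:ℝ)..1, u₀ x) + c * t := by linarith
    _ ≤ (∫ x in (-1:ℝ)..1, u₀ x) + c * T := by linarith
    _ = (∫ x in (-1:ℝ)..1, u₀ x) + 2 * r * (1 - a) * T := by rw [hc]


theorem mass_bound_bistable (T ε r a : ℝ) (u₀ : ℝ → ℝ)
    (hT : 0 < T) (hε : 0 < ε) (hr : 0 ≤ r) (ha : a ∈ Set.Ioo (0:ℝ) 1)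
    (hu₀ : ContDiff ℝ (⊤ : ℕ∞) u₀) (hu₀nonneg : ∀ x ∈ Set.Icc (-1:ℝ) 1, 0 ≤ u₀ x) :
    ∀ δ ∈ Set.Ioo (0:ℝ) 1, ∀ u φ : ℝ → ℝ → ℝ, IsBistableSol T ε r a δ u₀ u φ →
      ∀ t ∈ Set.Icc (0:ℝ) T,
        (∫ x in (-1:ℝ)..1, u t x) ≤ (∫ x in (-1:ℝ)..1, u₀ x) + 2 * r * (1 - a) * T := by
  intro δ hδ u φ hsol
  exact mass_bound_bistable_aux T ε r a u₀ hT hε hr ha hu₀ hu₀nonneg δ hδ u φ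
    hsol.smooth_u hsol.smooth_phi hsol.nonneg hsol.eq_u hsol.bc_u hsol.bc_phi hsol.init
end

section
/- There exists a constant C₁ > 0, depending only on T, ε, r, a and u₀ (but not on δ), such that for every δ∈(0,1) and every classical solution (u,φ) of the bistable system with diffusion δ: (i) ∫₀^T ( (ε/2)‖∂ₓφ(t,·)‖₂² + ‖φ(t,·)‖₂² + 2 δ ‖∂ₓu(t,·)‖₂² ) dt ≤ C₁; (ii) ‖u(t,·)‖₂ ≤ C₁ for all t∈[0,T]; and (iii) ∫₀^T ‖φ(t,·)‖_∞² dt ≤ C₁. -/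
open Set MeasureTheory
open scoped ContDiff

lemma pnorm_sq_eq (f : ℝ → ℝ) : pnorm 2 f ^ 2 = ∫ x in (-1:ℝ)..1, (f x)^2 := by
  have h1 : (∫ x in (-1:ℝ)..1, |f x| ^ (2:ℝ)) = ∫ x in (-1:ℝ)..1, (f x)^2 := by
    apply intervalIntegral.integral_congr
    intro x _
    rw [show ((2:ℝ)) = ((2:ℕ):ℝ) by norm_num]
    simp [Real.rpow_natCast, sq_abs]
  have h2 : 0 ≤ ∫ x in (-1:ℝ)..1, (f x)^2 :=
    intervalIntegral.integral_nonneg (by norm_num) (fun x _ => sq_nonneg _)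
  unfold pnorm
  rw [h1, ← Real.rpow_natCast ((∫ x in (-1:ℝ)..1, (f x)^2) ^ ((1:ℝ)/2)) 2,
    ← Real.rpow_mul h2]
  norm_num

lemma ptwise (ε r a G H : ℝ) (hε : 0 < ε) (hr : 0 ≤ r) :
    -(a+1)*(G*H) + r*(2*G^2*(1-G)*(G-a))
      ≤ ε/2*H^2 + ((a+1)^2/(2*ε) + 2*r*((1-a)/2)^2)*G^2 := by
  have h1 : ε/2*H^2 + ((a+1)^2/(2*ε))*G^2 + (a+1)*(G*H) = (ε*H+(a+1)*G)^2/(2*ε) := by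
    field_simp
    ring
  have h2 : 0 ≤ (ε*H+(a+1)*G)^2/(2*ε) := by positivity
  have h3 : (1-G)*(G-a) ≤ ((1-a)/2)^2 := by nlinarith [sq_nonneg (G-(1+a)/2)]
  have h4 : 2*r*G^2*((1-G)*(G-a)) ≤ 2*r*G^2*(((1-a)/2)^2) :=
    mul_le_mul_of_nonneg_left h3 (by positivity)
  nlinarith [h1, h2, h4]

lemma abs_le_half_add (d l : ℝ) (hl : 0 < l) : |d| ≤ l/2 + d^2/(2*l) := by
  have habs : d^2 = |d|^2 := (sq_abs d).symm
  have key : l/2 + d^2/(2*l) - |d| = (|d| - l)^2/(2*l) := by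
    field_simp
    linear_combination habs
  have h2 : 0 ≤ (|d| - l)^2/(2*l) := by positivity
  linarith

section KeySpatial

variable {ε r a δ : ℝ} {g h w : ℝ → ℝ}

lemma ibp_gen (f G : ℝ → ℝ) (hf : ContDiff ℝ ∞ f) (hG : ContDiff ℝ ∞ G) :
    ∫ x in (-1:ℝ)..1, f x * deriv G x
      = f 1 * G 1 - f (-1) * G (-1) - ∫ x in (-1:ℝ)..1, deriv f x * G x := by
  have h1 : (1:WithTop ℕ∞) ≤ ∞ := by exact_mod_cast le_top
  exact intervalIntegral.integral_mul_deriv_eq_deriv_mul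
    (fun x _ => (hf.differentiable (by simp) x).hasDerivAt)
    (fun x _ => (hG.differentiable (by simp) x).hasDerivAt)
    ((hf.continuous_deriv h1).intervalIntegrable _ _)
    ((hG.continuous_deriv h1).intervalIntegrable _ _)

lemma key_spatial (hε : 0 < ε) (hr : 0 ≤ r) (hδ : 0 ≤ δ)
    (hg : ContDiff ℝ ∞ g) (hh : ContDiff ℝ ∞ h) (hw : Continuous w)
    (hgbc1 : deriv g (-1) = 0) (hgbc2 : deriv g 1 = 0)
    (hhbc1 : h (-1) = 0) (hhbc2 : h 1 = 0)
    (hequ : ∀ x ∈ Icc (-1:ℝ) 1, w x = δ * deriv (deriv g) x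
        - deriv (fun y => g y * h y) x + r * g x * (1 - g x) * (g x - a))
    (heqphi : ∀ x ∈ Icc (-1:ℝ) 1,
        -ε * deriv (deriv h) x + h x = (-2 * g x + a + 1) * deriv g x) :
    (∫ x in (-1:ℝ)..1, 2 * g x * w x) + 2*δ*(∫ x in (-1:ℝ)..1, (deriv g x)^2)
      + ε/2*(∫ x in (-1:ℝ)..1, (deriv h x)^2) + (∫ x in (-1:ℝ)..1, (h x)^2)
      ≤ ((a+1)^2/(2*ε) + 2*r*((1-a)/2)^2) * ∫ x in (-1:ℝ)..1, (g x)^2 := by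
  have h1 : (1:WithTop ℕ∞) ≤ ∞ := by exact_mod_cast le_top
  have hicc : uIcc (-1:ℝ) 1 = Icc (-1:ℝ) 1 := uIcc_of_le (by norm_num)
  have hgd : ∀ x, HasDerivAt g (deriv g x) x := fun x => (hg.differentiable (by simp) x).hasDerivAt
  have hhd : ∀ x, HasDerivAt h (deriv h x) x := fun x => (hh.differentiable (by simp) x).hasDerivAt
  have hg' : ContDiff ℝ ∞ (deriv g) := (contDiff_infty_iff_deriv.mp hg).2
  have hh' : ContDiff ℝ ∞ (deriv h) := (contDiff_infty_iff_deriv.mp hh).2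
  have cg : Continuous g := hg.continuous
  have ch : Continuous h := hh.continuous
  have cg' : Continuous (deriv g) := hg'.continuous
  have ch' : Continuous (deriv h) := hh'.continuous
  have cg'' : Continuous (deriv (deriv g)) := hg'.continuous_deriv h1
  have ch'' : Continuous (deriv (deriv h)) := hh'.continuous_deriv h1
  have hgh : ContDiff ℝ ∞ (fun y => g y * h y) := hg.mul hh
  have cgh' : Continuous (deriv (fun y => g y * h y)) := hgh.continuous_deriv h1
  set D := ∫ x in (-1:ℝ)..1, (deriv g x)^2 with hD
  set P := ∫ x in (-1:ℝ)..1, (deriv h x)^2 with hP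
  set Q := ∫ x in (-1:ℝ)..1, (h x)^2 with hQ
  set Eg := ∫ x in (-1:ℝ)..1, (g x)^2 with hEg
  -- I1 : ∫ g * (deriv g)' = -D
  have I1 : ∫ x in (-1:ℝ)..1, g x * deriv (deriv g) x = -D := by
    rw [ibp_gen g (deriv g) hg hg', hgbc1, hgbc2, hD]
    have : ∫ x in (-1:ℝ)..1, deriv g x * deriv g x = ∫ x in (-1:ℝ)..1, (deriv g x)^2 :=
      intervalIntegral.integral_congr (fun x _ => (sq (deriv g x)).symm)
    rw [this]; ring
  -- I2 : ∫ g * (g*h)' = (1/2) ∫ g^2 * h'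
  have I2 : ∫ x in (-1:ℝ)..1, g x * deriv (fun y => g y * h y) x
      = (1/2) * ∫ x in (-1:ℝ)..1, (g x)^2 * deriv h x := by
    have step1 : ∫ x in (-1:ℝ)..1, g x * deriv (fun y => g y * h y) x
        = - ∫ x in (-1:ℝ)..1, deriv g x * (g x * h x) := by
      rw [ibp_gen g (fun y => g y * h y) hg hgh, hhbc1, hhbc2]; ring
    have hg2 : ContDiff ℝ ∞ (fun y => (g y)^2) := hg.pow 2
    have step2 : ∫ x in (-1:ℝ)..1, (g x)^2 * deriv h x
        = - ∫ x in (-1:ℝ)..1, deriv (fun y => (g y)^2) x * h x := by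
      rw [ibp_gen (fun y => (g y)^2) h hg2 hh, hhbc1, hhbc2]; ring
    have hder2 : ∀ x, deriv (fun y => (g y)^2) x = 2 * g x * deriv g x := by
      intro x
      have := ((hgd x).pow 2).deriv
      simp at this; exact this
    have step3 : ∫ x in (-1:ℝ)..1, deriv (fun y => (g y)^2) x * h x
        = ∫ x in (-1:ℝ)..1, 2 * (deriv g x * (g x * h x)) := by
      apply intervalIntegral.integral_congr
      intro x _
      simp only []
      rw [hder2 x]; ring
    have step4 : ∫ x in (-1:ℝ)..1, 2 * (deriv g x * (g x * h x))
        = 2 * ∫ x in (-1:ℝ)..1, deriv g x * (g x * h x) :=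
      intervalIntegral.integral_const_mul _ _
    rw [step1, step2, step3, step4]; ring
  -- I3 : ε P + Q = ∫ (g^2 - (a+1) g) * h'
  have I3 : ε * P + Q = ∫ x in (-1:ℝ)..1, ((g x)^2 - (a+1) * g x) * deriv h x := by
    have lhs1 : ∫ x in (-1:ℝ)..1, (-ε * deriv (deriv h) x + h x) * h x
        = ∫ x in (-1:ℝ)..1, ((-2 * g x + a + 1) * deriv g x) * h x := by
      apply intervalIntegral.integral_congr
      intro x hx
      simp only []
      rw [heqphi x (hicc ▸ hx)]
    have lhs2 : ∫ x in (-1:ℝ)..1, (-ε * deriv (deriv h) x + h x) * h x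
        = -ε * (∫ x in (-1:ℝ)..1, h x * deriv (deriv h) x) + Q := by
      have hsplit : ∫ x in (-1:ℝ)..1, (-ε * deriv (deriv h) x + h x) * h x
          = ∫ x in (-1:ℝ)..1, (-ε * (h x * deriv (deriv h) x) + (h x)^2) := by
        apply intervalIntegral.integral_congr
        intro x _; ring
      rw [hsplit, intervalIntegral.integral_add, intervalIntegral.integral_const_mul]
      · exact ((continuous_const.mul (ch.mul ch'')).intervalIntegrable _ _)
      · exact ((ch.pow 2).intervalIntegrable _ _)
    have ihh : ∫ x in (-1:ℝ)..1, h x * deriv (deriv h) x = -P := by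
      rw [ibp_gen h (deriv h) hh hh', hhbc1, hhbc2, hP]
      have : ∫ x in (-1:ℝ)..1, deriv h x * deriv h x = ∫ x in (-1:ℝ)..1, (deriv h x)^2 :=
        intervalIntegral.integral_congr (fun x _ => (sq (deriv h x)).symm)
      rw [this]; ring
    -- RHS via W
    have hW : ContDiff ℝ ∞ (fun y => -(g y)^2 + (a+1) * g y) :=
      (hg.pow 2).neg.add (contDiff_const.mul hg)
    have hWd : ∀ x, deriv (fun y => -(g y)^2 + (a+1) * g y) x
        = (-2 * g x + a + 1) * deriv g x := by
      intro x
      have hd : HasDerivAt (fun y => -(g y)^2 + (a+1) * g y)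
          (-(2 * g x ^ 1 * deriv g x) + (a+1) * deriv g x) x :=
        ((hgd x).pow 2).neg.add ((hgd x).const_mul (a+1))
      rw [hd.deriv]; ring
    have rhs1 : ∫ x in (-1:ℝ)..1, ((-2 * g x + a + 1) * deriv g x) * h x
        = ∫ x in (-1:ℝ)..1, deriv (fun y => -(g y)^2 + (a+1) * g y) x * h x := by
      apply intervalIntegral.integral_congr
      intro x _
      simp only []
      rw [hWd x]
    have rhs2 : ∫ x in (-1:ℝ)..1, (-(g x)^2 + (a+1) * g x) * deriv h x
        = - ∫ x in (-1:ℝ)..1, deriv (fun y => -(g y)^2 + (a+1) * g y) x * h x := by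
      rw [ibp_gen (fun y => -(g y)^2 + (a+1) * g y) h hW hh, hhbc1, hhbc2]; ring
    have rhs3 : ∫ x in (-1:ℝ)..1, ((g x)^2 - (a+1) * g x) * deriv h x
        = - ∫ x in (-1:ℝ)..1, (-(g x)^2 + (a+1) * g x) * deriv h x := by
      rw [← intervalIntegral.integral_neg]
      apply intervalIntegral.integral_congr
      intro x _; ring
    rw [rhs3, rhs2, neg_neg, ← rhs1, ← lhs1, lhs2, ihh]; ring
  -- expand e-term
  have e_eq : ∫ x in (-1:ℝ)..1, 2 * g x * w x
      = 2*δ*(∫ x in (-1:ℝ)..1, g x * deriv (deriv g) x)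
        - 2*(∫ x in (-1:ℝ)..1, g x * deriv (fun y => g y * h y) x)
        + ∫ x in (-1:ℝ)..1, 2 * r * ((g x)^2 * ((1 - g x) * (g x - a))) := by
    have hcongr : ∫ x in (-1:ℝ)..1, 2 * g x * w x
        = ∫ x in (-1:ℝ)..1, (2*δ*(g x * deriv (deriv g) x)
            - 2*(g x * deriv (fun y => g y * h y) x)
            + 2 * r * ((g x)^2 * ((1 - g x) * (g x - a)))) := by
      apply intervalIntegral.integral_congr
      intro x hx
      simp only []
      rw [hequ x (hicc ▸ hx)]; ring
    rw [hcongr, intervalIntegral.integral_add, intervalIntegral.integral_sub,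
      intervalIntegral.integral_const_mul, intervalIntegral.integral_const_mul]
    · exact (continuous_const.mul (cg.mul cg'')).intervalIntegrable _ _
    · exact (continuous_const.mul (cg.mul cgh')).intervalIntegrable _ _
    · exact (((continuous_const.mul (cg.mul cg'')).sub
        (continuous_const.mul (cg.mul cgh')))).intervalIntegrable _ _
    · exact (by fun_prop : Continuous fun x => 2 * r * ((g x)^2 * ((1 - g x) * (g x - a)))).intervalIntegrable _ _
  -- split I3 integral
  have I3' : ∫ x in (-1:ℝ)..1, (g x)^2 * deriv h x
      = ε * P + Q + (a+1) * ∫ x in (-1:ℝ)..1, g x * deriv h x := by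
    have hsplit : ∫ x in (-1:ℝ)..1, ((g x)^2 - (a+1) * g x) * deriv h x
        = (∫ x in (-1:ℝ)..1, (g x)^2 * deriv h x)
          - (a+1) * ∫ x in (-1:ℝ)..1, g x * deriv h x := by
      rw [← intervalIntegral.integral_const_mul, ← intervalIntegral.integral_sub]
      · apply intervalIntegral.integral_congr
        intro x _; ring
      · exact ((cg.pow 2).mul ch').intervalIntegrable _ _
      · exact (continuous_const.mul (cg.mul ch')).intervalIntegrable _ _
    rw [← I3] at hsplit
    linarith [hsplit]
  -- final bound on the remaining terms
  have final : -(a+1) * (∫ x in (-1:ℝ)..1, g x * deriv h x)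
      + ∫ x in (-1:ℝ)..1, 2 * r * ((g x)^2 * ((1 - g x) * (g x - a)))
      ≤ ε/2 * P + ((a+1)^2/(2*ε) + 2*r*((1-a)/2)^2) * Eg := by
    have hcomb : -(a+1) * (∫ x in (-1:ℝ)..1, g x * deriv h x)
        + ∫ x in (-1:ℝ)..1, 2 * r * ((g x)^2 * ((1 - g x) * (g x - a)))
        = ∫ x in (-1:ℝ)..1, (-(a+1) * (g x * deriv h x)
            + r * (2*(g x)^2*(1 - g x)*(g x - a))) := by
      rw [← intervalIntegral.integral_const_mul, ← intervalIntegral.integral_add]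
      · apply intervalIntegral.integral_congr
        intro x _; ring
      · exact (continuous_const.mul (cg.mul ch')).intervalIntegrable _ _
      · exact (by fun_prop : Continuous fun x => 2 * r * ((g x)^2 * ((1 - g x) * (g x - a)))).intervalIntegrable _ _
    have hsplit2 : ε/2 * P + ((a+1)^2/(2*ε) + 2*r*((1-a)/2)^2) * Eg
        = ∫ x in (-1:ℝ)..1, (ε/2 * (deriv h x)^2
            + ((a+1)^2/(2*ε) + 2*r*((1-a)/2)^2) * (g x)^2) := by
      rw [intervalIntegral.integral_add, intervalIntegral.integral_const_mul,
        intervalIntegral.integral_const_mul]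
      · exact (continuous_const.mul (ch'.pow 2)).intervalIntegrable _ _
      · exact (continuous_const.mul (cg.pow 2)).intervalIntegrable _ _
    rw [hcomb, hsplit2]
    apply intervalIntegral.integral_mono_on (by norm_num)
    · exact (by fun_prop : Continuous fun x => -(a+1) * (g x * deriv h x)
        + r * (2*(g x)^2*(1 - g x)*(g x - a))).intervalIntegrable _ _
    · exact (by fun_prop : Continuous fun x => ε/2 * (deriv h x)^2
        + ((a+1)^2/(2*ε) + 2*r*((1-a)/2)^2) * (g x)^2).intervalIntegrable _ _
    · intro x _
      exact ptwise ε r a (g x) (deriv h x) hε hr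
  have hr3 : ∫ x in (-1:ℝ)..1, 2 * r * ((g x)^2 * ((1 - g x) * (g x - a)))
      = ∫ x in (-1:ℝ)..1, r * (2*(g x)^2*(1 - g x)*(g x - a)) := by
    apply intervalIntegral.integral_congr; intro x _; ring
  rw [e_eq, I1, I2, I3']
  linarith [final]

end KeySpatial

lemma rpow_half_sq (I : ℝ) (hI : 0 ≤ I) : (I ^ ((1:ℝ)/2)) ^ (2:ℕ) = I := by
  rw [← Real.rpow_natCast (I ^ ((1:ℝ)/2)) 2, ← Real.rpow_mul hI]
  norm_num

set_option maxHeartbeats 2000000 in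
theorem energy_estimates_bistable (T ε r a : ℝ) (u₀ : ℝ → ℝ)
    (hT : 0 < T) (hε : 0 < ε) (hr : 0 ≤ r) (ha : a ∈ Set.Ioo (0:ℝ) 1)
    (hu₀ : ContDiff ℝ (⊤ : ℕ∞) u₀) (hu₀nonneg : ∀ x ∈ Set.Icc (-1:ℝ) 1, 0 ≤ u₀ x) :
    ∃ C₁ > (0:ℝ), ∀ δ ∈ Set.Ioo (0:ℝ) 1, ∀ u φ : ℝ → ℝ → ℝ, IsBistableSol T ε r a δ u₀ u φ →
      ((∫ t in (0:ℝ)..T,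
          (ε / 2 * pnorm 2 (deriv (φ t)) ^ 2 + pnorm 2 (φ t) ^ 2
            + 2 * δ * pnorm 2 (deriv (u t)) ^ 2)) ≤ C₁) ∧
      (∀ t ∈ Set.Icc (0:ℝ) T, pnorm 2 (u t) ≤ C₁) ∧
      ((∫ t in (0:ℝ)..T, supnorm (φ t) ^ 2) ≤ C₁) := by
  obtain ⟨ha0, ha1⟩ := ha
  set E0 : ℝ := ∫ x in (-1:ℝ)..1, (u₀ x)^2 with hE0def
  set K : ℝ := (a+1)^2/(2*ε) + 2*r*((1-a)/2)^2 with hKdef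
  set B : ℝ := E0 * Real.exp (K*T) with hBdef
  set A : ℝ := K*T*B + E0 + 1 with hAdef
  have hE0nn : 0 ≤ E0 :=
    intervalIntegral.integral_nonneg (by norm_num) fun x _ => sq_nonneg _
  have hK : 0 < K := by
    have h1 : 0 < (a+1)^2/(2*ε) := by
      apply div_pos
      · nlinarith
      · linarith
    have h2 : 0 ≤ 2*r*((1-a)/2)^2 := by positivity
    rw [hKdef]
    linarith
  have hBnn : 0 ≤ B := mul_nonneg hE0nn (Real.exp_pos _).le
  have hA : 1 ≤ A := by nlinarith [mul_nonneg (mul_nonneg hK.le hT.le) hBnn]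
  have hAC : A ≤ max (max A (B ^ ((1:ℝ)/2))) (4/ε*A) :=
    le_trans (le_max_left _ _) (le_max_left _ _)
  refine ⟨max (max A (B ^ ((1:ℝ)/2))) (4/ε*A), by linarith, ?_⟩
  intro δ hδ u φ S
  have h1le : (1:WithTop ℕ∞) ≤ ∞ := by exact_mod_cast le_top
  have hFs : ContDiff ℝ ∞ (fun q : ℝ × ℝ => u q.1 q.2) := S.smooth_u.of_le (by simp)
  have hGs : ContDiff ℝ ∞ (fun q : ℝ × ℝ => φ q.1 q.2) := S.smooth_phi.of_le (by simp)
  have hu_cont : Continuous (fun q : ℝ × ℝ => u q.1 q.2) := hFs.continuous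
  set ut : ℝ → ℝ → ℝ :=
    fun t x => fderiv ℝ (fun q : ℝ × ℝ => u q.1 q.2) (t, x) (1, 0) with hutdef
  have hut : ∀ t x, HasDerivAt (fun s => u s x) (ut t x) t := by
    intro t x
    have hd := (hFs.differentiable (by simp) (t, x)).hasFDerivAt
    have hc : HasDerivAt (fun s : ℝ => (s, x)) ((1:ℝ), (0:ℝ)) t :=
      (hasDerivAt_id t).prodMk (hasDerivAt_const t x)
    exact hd.comp_hasDerivAt t hc
  have hut_cont : Continuous (fun q : ℝ × ℝ => ut q.1 q.2) :=
    (hFs.continuous_fderiv (by simp)).clm_apply continuous_const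
  have hu_slice : ∀ t, ContDiff ℝ ∞ (u t) :=
    fun t => hFs.comp (contDiff_const.prodMk contDiff_id)
  have hφ_slice : ∀ t, ContDiff ℝ ∞ (φ t) :=
    fun t => hGs.comp (contDiff_const.prodMk contDiff_id)
  set E : ℝ → ℝ := fun t => ∫ x in (-1:ℝ)..1, (u t x)^2 with hEdef
  set e : ℝ → ℝ := fun t => ∫ x in (-1:ℝ)..1, 2 * u t x * ut t x with hedef
  set DD : ℝ → ℝ := fun t => ∫ x in (-1:ℝ)..1, (deriv (u t) x)^2 with hDDdef
  set PP : ℝ → ℝ := fun t => ∫ x in (-1:ℝ)..1, (deriv (φ t) x)^2 with hPPdef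
  set QQ : ℝ → ℝ := fun t => ∫ x in (-1:ℝ)..1, (φ t x)^2 with hQQdef
  have hcont2 : Continuous (fun q : ℝ × ℝ => 2 * u q.1 q.2 * ut q.1 q.2) :=
    (continuous_const.mul hu_cont).mul hut_cont
  have hE' : ∀ t : ℝ, HasDerivAt E (e t) t := by
    intro t
    have hcp : IsCompact ((Set.Icc (t-1) (t+1)) ×ˢ (Set.Icc (-1:ℝ) 1)) :=
      isCompact_Icc.prod isCompact_Icc
    obtain ⟨C, hC⟩ := hcp.exists_bound_of_continuousOn hcont2.continuousOn
    have main := intervalIntegral.hasDerivAt_integral_of_dominated_loc_of_deriv_le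
      (F := fun s x => (u s x)^2) (F' := fun s x => 2 * u s x * ut s x) (x₀ := t)
      (a := (-1:ℝ)) (b := 1) (μ := volume) (bound := fun _ => |C|) (s := Metric.ball t 1) (Metric.ball_mem_nhds t one_pos)
      (Filter.Eventually.of_forall fun s =>
        (((hu_slice s).continuous).pow 2).aestronglyMeasurable)
      ((((hu_slice t).continuous).pow 2).intervalIntegrable _ _)
      ((hcont2.comp (continuous_const.prodMk continuous_id)).aestronglyMeasurable)
      ?_ intervalIntegrable_const ?_
    · exact main.2
    · refine ae_of_all _ ?_
      intro x hx s hs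
      have hxI : x ∈ Set.Icc (-1:ℝ) 1 := by
        rw [Set.uIoc_of_le (by norm_num : (-1:ℝ) ≤ 1)] at hx
        exact Set.Ioc_subset_Icc_self hx
      have hsI : s ∈ Set.Icc (t-1) (t+1) := by
        rw [Metric.mem_ball, Real.dist_eq] at hs
        have h2 := abs_lt.mp hs
        constructor <;> [linarith [h2.1]; linarith [h2.2]]
      exact (hC (s, x) (Set.mk_mem_prod hsI hxI)).trans (le_abs_self C)
    · refine ae_of_all _ ?_
      intro x hx s hs
      have h2 := (hut s x).pow 2
      simp at h2; exact h2
  have hE_cont : Continuous E := continuous_iff_continuousAt.mpr fun t => (hE' t).continuousAt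
  have he_cont : Continuous e := by
    have h2 : Continuous (fun t => ∫ x in Set.Icc (-1:ℝ) 1, 2 * u t x * ut t x) :=
      continuous_parametric_integral_of_continuous (μ := volume)
        (f := fun t x => 2 * u t x * ut t x) hcont2 isCompact_Icc
    have h3 : e = fun t => ∫ x in Set.Icc (-1:ℝ) 1, 2 * u t x * ut t x := by
      rw [hedef]
      funext t
      rw [intervalIntegral.integral_of_le (by norm_num : (-1:ℝ) ≤ 1),
        ← MeasureTheory.integral_Icc_eq_integral_Ioc]
    rw [h3]
    exact h2
  have hest : ∀ t ∈ Set.Icc (0:ℝ) T, e t + 2*δ*DD t + ε/2*PP t + QQ t ≤ K * E t := by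
    intro t ht
    have hequ : ∀ x ∈ Set.Icc (-1:ℝ) 1, ut t x = δ * deriv (deriv (u t)) x
        - deriv (fun y => u t y * φ t y) x + r * u t x * (1 - u t x) * (u t x - a) := by
      intro x hx
      rw [← (hut t x).deriv]
      exact S.eq_u t ht x hx
    have hwc : Continuous (fun x => ut t x) :=
      hut_cont.comp (continuous_const.prodMk continuous_id)
    have hks := key_spatial (g := u t) (h := φ t) (w := fun x => ut t x)
      hε hr hδ.1.le (hu_slice t) (hφ_slice t) hwc
      (S.bc_u t ht).1 (S.bc_u t ht).2 (S.bc_phi t ht).1 (S.bc_phi t ht).2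
      hequ (S.eq_phi t ht)
    rw [← hKdef] at hks
    exact hks
  have hDnn : ∀ t, 0 ≤ DD t :=
    fun t => intervalIntegral.integral_nonneg (by norm_num) fun x _ => sq_nonneg _
  have hPnn : ∀ t, 0 ≤ PP t :=
    fun t => intervalIntegral.integral_nonneg (by norm_num) fun x _ => sq_nonneg _
  have hQnn : ∀ t, 0 ≤ QQ t :=
    fun t => intervalIntegral.integral_nonneg (by norm_num) fun x _ => sq_nonneg _
  have hEnn : ∀ t, 0 ≤ E t :=
    fun t => intervalIntegral.integral_nonneg (by norm_num) fun x _ => sq_nonneg _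
  have hE00 : E 0 = E0 := by
    apply intervalIntegral.integral_congr
    intro x hx
    simp only []
    rw [S.init x (by rwa [Set.uIcc_of_le (by norm_num)] at hx)]
  have hPPt : ∀ t, (∫ x in (-1:ℝ)..1, (deriv (φ t) x)^2) = PP t := fun _ => rfl
  have hQQt : ∀ t, (∫ x in (-1:ℝ)..1, (φ t x)^2) = QQ t := fun _ => rfl
  have hDDt : ∀ t, (∫ x in (-1:ℝ)..1, (deriv (u t) x)^2) = DD t := fun _ => rfl
  have hEt' : ∀ t, (∫ x in (-1:ℝ)..1, (u t x)^2) = E t := fun _ => rfl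
  clear_value E0 K B A ut E e DD PP QQ
  have hKE : ∀ t ∈ Set.Icc (0:ℝ) T, e t ≤ K * E t := by
    intro t ht
    have h2 := hest t ht
    have h3 : 0 ≤ 2*δ*DD t := mul_nonneg (by linarith [hδ.1.le]) (hDnn t)
    have h4 : 0 ≤ ε/2*PP t := mul_nonneg (by linarith) (hPnn t)
    linarith only [h2, h3, h4, hQnn t]
  have hGd : ∀ s : ℝ, HasDerivAt (fun τ => E τ * Real.exp (-K*τ))
      (e s * Real.exp (-K*s) + E s * (Real.exp (-K*s) * (-K*1))) s := by
    intro s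
    exact (hE' s).mul (((hasDerivAt_id s).const_mul (-K)).exp)
  have hanti : AntitoneOn (fun τ => E τ * Real.exp (-K*τ)) (Set.Icc 0 T) := by
    apply antitoneOn_of_deriv_nonpos (convex_Icc 0 T)
    · exact (hE_cont.mul (Real.continuous_exp.comp
        (continuous_const.mul continuous_id))).continuousOn
    · intro x hx
      exact (hGd x).differentiableAt.differentiableWithinAt
    · intro x hx
      rw [(hGd x).deriv]
      rw [interior_Icc] at hx
      have h2 := hKE x (Set.Ioo_subset_Icc_self hx)
      have hexp : 0 < Real.exp (-K*x) := Real.exp_pos _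
      nlinarith [mul_nonneg (by linarith : (0:ℝ) ≤ K * E x - e x) hexp.le]
  have hEB : ∀ t ∈ Set.Icc (0:ℝ) T, E t ≤ B := by
    intro t ht
    have h0 : (0:ℝ) ∈ Set.Icc (0:ℝ) T := ⟨le_refl 0, hT.le⟩
    have h1 := hanti h0 ht ht.1
    simp only [] at h1
    rw [show -K*(0:ℝ) = 0 from by ring, Real.exp_zero, mul_one, hE00] at h1
    have hexp2 : Real.exp (-K*t) * Real.exp (K*t) = 1 := by
      rw [← Real.exp_add, show -K*t + K*t = 0 by ring, Real.exp_zero]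
    have hEt : E t = E t * Real.exp (-K*t) * Real.exp (K*t) := by
      rw [mul_assoc, hexp2, mul_one]
    rw [hBdef, hEt]
    calc E t * Real.exp (-K*t) * Real.exp (K*t) ≤ E0 * Real.exp (K*t) :=
        mul_le_mul_of_nonneg_right h1 (Real.exp_pos _).le
      _ ≤ E0 * Real.exp (K*T) := mul_le_mul_of_nonneg_left
          (Real.exp_le_exp.mpr (mul_le_mul_of_nonneg_left ht.2 hK.le)) hE0nn
  have hintE : ∫ t in (0:ℝ)..T, (K * E t - e t) ≤ K*T*B + E0 := by
    have hftc : ∫ t in (0:ℝ)..T, e t = E T - E 0 :=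
      intervalIntegral.integral_eq_sub_of_hasDerivAt (fun s _ => hE' s)
        (he_cont.intervalIntegrable _ _)
    rw [intervalIntegral.integral_sub (f := fun t => K * E t)
      ((continuous_const.mul hE_cont).intervalIntegrable _ _)
      (he_cont.intervalIntegrable _ _),
      intervalIntegral.integral_const_mul, hftc]
    have hIE : ∫ t in (0:ℝ)..T, E t ≤ T * B := by
      calc ∫ t in (0:ℝ)..T, E t ≤ ∫ t in (0:ℝ)..T, B :=
          intervalIntegral.integral_mono_on hT.le (hE_cont.intervalIntegrable _ _)
            intervalIntegrable_const (fun t ht => hEB t ht)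
        _ = (T - 0) • B := intervalIntegral.integral_const B
        _ = T * B := by rw [smul_eq_mul, sub_zero]
    have hET : 0 ≤ E T := hEnn T
    nlinarith [mul_le_mul_of_nonneg_left hIE hK.le]
  refine ⟨?_, ?_, ?_⟩
  · -- part (i)
    by_cases hint : IntervalIntegrable (fun t => ε / 2 * pnorm 2 (deriv (φ t)) ^ 2
        + pnorm 2 (φ t) ^ 2 + 2 * δ * pnorm 2 (deriv (u t)) ^ 2) volume 0 T
    · have hKEint : IntervalIntegrable (fun t => K * E t - e t) volume 0 T :=
        ((continuous_const.mul hE_cont).sub he_cont).intervalIntegrable _ _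
      have hmono := intervalIntegral.integral_mono_on hT.le hint hKEint ?_
      · refine hmono.trans (hintE.trans ?_)
        have h8 : K*T*B + E0 ≤ A := by rw [hAdef]; linarith
        exact le_trans h8 hAC
      · intro t ht
        have h2 := hest t ht
        rw [pnorm_sq_eq, pnorm_sq_eq, pnorm_sq_eq, hPPt t, hQQt t, hDDt t]
        linarith only [h2]
    · rw [intervalIntegral.integral_undef hint]
      linarith
  · -- part (ii)
    intro t ht
    have hsq : pnorm 2 (u t) ^ 2 = E t := (pnorm_sq_eq (u t)).trans (hEt' t)
    have hpn : 0 ≤ pnorm 2 (u t) := by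
      apply Real.rpow_nonneg
      apply intervalIntegral.integral_nonneg (by norm_num)
      intro x _
      positivity
    have hBs : (B ^ ((1:ℝ)/2)) ^ (2:ℕ) = B := rpow_half_sq B hBnn
    have hBsnn : 0 ≤ B ^ ((1:ℝ)/2) := Real.rpow_nonneg hBnn _
    have h2 : pnorm 2 (u t) ≤ B ^ ((1:ℝ)/2) := by
      nlinarith [hEB t ht, hsq, hpn, hBsnn, hBs]
    exact h2.trans (le_trans (le_max_right A _) (le_max_left _ _))
  · -- part (iii)
    have hsupb : ∀ t ∈ Set.Icc (0:ℝ) T,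
        0 ≤ supnorm (φ t) ∧ supnorm (φ t)^2 ≤ 2 * PP t := by
      intro t ht
      have hφ'c : Continuous (deriv (φ t)) := (hφ_slice t).continuous_deriv h1le
      set I1 : ℝ := ∫ y in (-1:ℝ)..1, |deriv (φ t) y| with hI1def
      have hI1nn : 0 ≤ I1 :=
        intervalIntegral.integral_nonneg (by norm_num) fun y _ => abs_nonneg _
      have hbd : ∀ x ∈ Set.Icc (-1:ℝ) 1, |φ t x| ≤ I1 := by
        intro x hx
        have hftc : ∫ y in (-1:ℝ)..x, deriv (φ t) y = φ t x - φ t (-1) :=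
          intervalIntegral.integral_eq_sub_of_hasDerivAt
            (fun y _ => (((hφ_slice t).differentiable (by simp)) y).hasDerivAt)
            (hφ'c.intervalIntegrable _ _)
        rw [(S.bc_phi t ht).1, sub_zero] at hftc
        calc |φ t x| = |∫ y in (-1:ℝ)..x, deriv (φ t) y| := by rw [hftc]
          _ ≤ ∫ y in (-1:ℝ)..x, |deriv (φ t) y| :=
              intervalIntegral.abs_integral_le_integral_abs hx.1
          _ ≤ I1 := intervalIntegral.integral_mono_interval (le_refl (-1:ℝ)) hx.1 hx.2
              (Filter.Eventually.of_forall fun y => abs_nonneg _)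
              (hφ'c.abs.intervalIntegrable _ _)
      have hub : supnorm (φ t) ≤ I1 := by
        apply Real.sSup_le _ hI1nn
        rintro y ⟨x, hx, rfl⟩
        exact hbd x hx
      have hnn : 0 ≤ supnorm (φ t) := by
        apply le_csSup
        · exact ⟨I1, by rintro y ⟨x, hx, rfl⟩; exact hbd x hx⟩
        · exact ⟨-1, ⟨by norm_num, by norm_num⟩, by show |φ t (-1)| = 0; rw [(S.bc_phi t ht).1, abs_zero]⟩
      have hIlam : ∀ l : ℝ, 0 < l → I1 ≤ l + PP t * (1/(2*l)) := by
        intro l hl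
        have hmono2 : I1 ≤ ∫ y in (-1:ℝ)..1, (l/2 + (deriv (φ t) y)^2 * (1/(2*l))) := by
          apply intervalIntegral.integral_mono_on (by norm_num)
            (hφ'c.abs.intervalIntegrable _ _)
            ((by fun_prop : Continuous fun y =>
              l/2 + (deriv (φ t) y)^2 * (1/(2*l))).intervalIntegrable _ _)
          intro y _
          have h3 := abs_le_half_add (deriv (φ t) y) l hl
          rw [mul_one_div]
          exact h3
        have hsplit : ∫ y in (-1:ℝ)..1, (l/2 + (deriv (φ t) y)^2 * (1/(2*l)))
            = l + PP t * (1/(2*l)) := by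
          rw [intervalIntegral.integral_add (g := fun y => (deriv (φ t) y)^2 * (1/(2*l)))
            intervalIntegrable_const
            (((hφ'c.pow 2).mul continuous_const).intervalIntegrable _ _),
            intervalIntegral.integral_const, intervalIntegral.integral_mul_const]
          rw [smul_eq_mul, hPPt t]
          ring
        rw [hsplit] at hmono2
        exact hmono2
      refine ⟨hnn, ?_⟩
      rcases eq_or_lt_of_le (hPnn t) with hP0 | hPpos
      · have h4 : ∀ l : ℝ, 0 < l → I1 ≤ 0 + l := by
          intro l hl
          have h5 := hIlam l hl
          rw [← hP0] at h5
          simpa using h5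
        have hI0 : I1 ≤ 0 := by
          by_contra hpos
          push_neg at hpos
          have h5 := h4 (I1/2) (by linarith)
          linarith
        have hI10 : I1 = 0 := le_antisymm hI0 hI1nn
        have hsup0 : supnorm (φ t) = 0 :=
          le_antisymm (le_trans hub (le_of_eq hI10)) hnn
        rw [hsup0]
        norm_num
        linarith [hPnn t]
      · set l := Real.sqrt (PP t / 2) with hldef
        have hl : 0 < l := Real.sqrt_pos.mpr (by linarith)
        have hl2 : l^2 = PP t / 2 := Real.sq_sqrt (by linarith)
        have hPP2 : PP t = 2*l^2 := by linarith
        have h2l : PP t * (1/(2*l)) = l := by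
          rw [hPP2, mul_one_div, div_eq_iff (by positivity : (2*l) ≠ 0)]
          ring
        have h6 := hIlam l hl
        rw [h2l] at h6
        have h7 : supnorm (φ t) ≤ 2*l := by linarith
        have h8 : supnorm (φ t)^2 ≤ (2*l)^2 := pow_le_pow_left₀ hnn h7 2
        calc supnorm (φ t)^2 ≤ (2*l)^2 := h8
          _ = 2*(2*l^2) := by ring
          _ = 2 * PP t := by rw [← hPP2]
    by_cases hint : IntervalIntegrable (fun t => supnorm (φ t)^2) volume 0 T
    · have hrhs : IntervalIntegrable (fun t => (4/ε) * (K * E t - e t)) volume 0 T :=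
        (continuous_const.mul ((continuous_const.mul hE_cont).sub he_cont)).intervalIntegrable _ _
      have hmono := intervalIntegral.integral_mono_on hT.le hint hrhs ?_
      · refine hmono.trans ?_
        rw [intervalIntegral.integral_const_mul]
        have h4 : (0:ℝ) ≤ 4/ε := by positivity
        have h5 := mul_le_mul_of_nonneg_left hintE h4
        refine h5.trans ?_
        have h6 : K*T*B + E0 ≤ A := by rw [hAdef]; linarith
        have h7 : 4/ε * (K*T*B + E0) ≤ 4/ε*A := mul_le_mul_of_nonneg_left h6 h4
        exact h7.trans (le_max_right _ _)
      · intro t ht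
        have h1 := (hsupb t ht).2
        have h2 := hest t ht
        have hPle : ε/2 * PP t ≤ K * E t - e t := by
          have h3 : 0 ≤ 2*δ*DD t := mul_nonneg (by linarith [hδ.1.le]) (hDnn t)
          linarith [hQnn t]
        have h4X : 2 * PP t ≤ 4/ε * (K * E t - e t) := by
          rw [div_mul_eq_mul_div, le_div_iff₀ hε]
          linarith [hPle]
        linarith
    · rw [intervalIntegral.integral_undef hint]
      linarith
end

section
/- There exists a constant C₂ > 0, depending only on T, ε, r, a and u₀ (but not on δ), such that for every δ∈(0,1) and every classical solution (u,φ) of the bistable system with diffusion δ, ‖φ(t,·)‖₂ ≤ C₂ for all t∈[0,T]. -/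
open Set MeasureTheory Filter Topology ContDiff

private lemma smooth_hasDerivAt {f : ℝ → ℝ} (h : ContDiff ℝ ∞ f) (x : ℝ) :
    HasDerivAt f (deriv f x) x :=
  ((contDiff_infty_iff_deriv.mp h).1 x).hasDerivAt

private lemma smooth_deriv {f : ℝ → ℝ} (h : ContDiff ℝ ∞ f) : ContDiff ℝ ∞ (deriv f) :=
  (contDiff_infty_iff_deriv.mp h).2

/-- At a max over `[a,b]` with `t₀ > a`, the (two-sided) derivative is nonneg. -/
lemma deriv_nonneg_of_max {f : ℝ → ℝ} {a b t₀ : ℝ} (hf : ContDiff ℝ ∞ f)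
    (hat : a < t₀) (ht : t₀ ∈ Icc a b) (hmax : IsMaxOn f (Icc a b) t₀) :
    0 ≤ deriv f t₀ := by
  by_contra hcon
  push_neg at hcon
  have hc : Continuous (deriv f) := (smooth_deriv hf).continuous
  have hev : ∀ᶠ y in 𝓝 t₀, deriv f y < 0 :=
    hc.continuousAt.eventually_lt continuousAt_const hcon
  obtain ⟨η, hη, hb⟩ := Metric.eventually_nhds_iff.mp hev
  set c := max a (t₀ - η / 2) with hc_def
  have hct : c < t₀ := max_lt hat (by linarith)
  have hanti : StrictAntiOn f (Icc c t₀) := by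
    apply strictAntiOn_of_deriv_neg (convex_Icc _ _) hf.continuous.continuousOn
    intro y hy
    rw [interior_Icc] at hy
    apply hb
    rw [Real.dist_eq, abs_lt]
    constructor
    · have : t₀ - η / 2 ≤ c := le_max_right _ _
      linarith [hy.1, hy.2]
    · linarith [hy.1, hy.2]
  have h1 : f t₀ < f c := hanti ⟨le_refl c, hct.le⟩ ⟨hct.le, le_refl t₀⟩ hct
  have h2 : f c ≤ f t₀ := hmax ⟨le_max_left _ _, le_trans hct.le ht.2⟩
  linarith

/-- Second-derivative test at a max point where the first derivative vanishes,
including boundary points. -/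
lemma second_deriv_nonpos_of_max {f : ℝ → ℝ} {a b x₀ : ℝ} (hf : ContDiff ℝ ∞ f)
    (hab : a < b) (hx : x₀ ∈ Icc a b) (hmax : IsMaxOn f (Icc a b) x₀)
    (hd : deriv f x₀ = 0) : deriv (deriv f) x₀ ≤ 0 := by
  by_contra hcon
  push_neg at hcon
  have hD : HasDerivAt (deriv f) (deriv (deriv f) x₀) x₀ :=
    smooth_hasDerivAt (smooth_deriv hf) x₀
  have hs : ∀ᶠ y in 𝓝[≠] x₀, 0 < slope (deriv f) x₀ y :=
    (hasDerivAt_iff_tendsto_slope.mp hD).eventually (eventually_gt_nhds hcon)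
  rw [eventually_nhdsWithin_iff] at hs
  obtain ⟨η, hη, hb⟩ := Metric.eventually_nhds_iff.mp hs
  have hslope : ∀ y, y ≠ x₀ → |y - x₀| < η → 0 < deriv f y / (y - x₀) := by
    intro y hy hd'
    have := hb (by rwa [Real.dist_eq]) hy
    rwa [slope_def_field, hd, sub_zero] at this
  rcases hx.2.lt_or_eq with hxb | hxb
  · -- x₀ < b : f is strictly increasing just to the right
    set c := min b (x₀ + η / 2) with hc_def
    have hxc : x₀ < c := lt_min hxb (by linarith)
    have hmono : StrictMonoOn f (Icc x₀ c) := by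
      apply strictMonoOn_of_deriv_pos (convex_Icc _ _) hf.continuous.continuousOn
      intro y hy
      rw [interior_Icc] at hy
      have hyx : 0 < y - x₀ := by linarith [hy.1]
      have habs : |y - x₀| < η := by
        rw [abs_lt]
        have : c ≤ x₀ + η / 2 := min_le_right _ _
        constructor <;> [linarith [hy.1]; linarith [hy.2]]
      have := hslope y (by intro h; rw [h] at hyx; linarith) habs
      rcases div_pos_iff.mp this with ⟨h1, h2⟩ | ⟨h1, h2⟩
      · exact h1
      · linarith
    have h1 : f x₀ < f c := hmono ⟨le_refl x₀, hxc.le⟩ ⟨hxc.le, le_refl c⟩ hxc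
    have h2 : f c ≤ f x₀ := hmax ⟨le_trans hx.1 hxc.le, min_le_left _ _⟩
    linarith
  · -- x₀ = b, so a < x₀ : f is strictly decreasing just to the left
    have hax : a < x₀ := hxb ▸ hab
    set c := max a (x₀ - η / 2) with hc_def
    have hxc : c < x₀ := max_lt hax (by linarith)
    have hanti : StrictAntiOn f (Icc c x₀) := by
      apply strictAntiOn_of_deriv_neg (convex_Icc _ _) hf.continuous.continuousOn
      intro y hy
      rw [interior_Icc] at hy
      have hyx : y - x₀ < 0 := by linarith [hy.2]
      have habs : |y - x₀| < η := by
        rw [abs_lt]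
        have : x₀ - η / 2 ≤ c := le_max_right _ _
        constructor <;> [linarith [hy.1]; linarith [hy.2]]
      have hq := hslope y (by intro h; rw [h] at hyx; linarith) habs
      rcases div_pos_iff.mp hq with ⟨h1, h2⟩ | ⟨h1, h2⟩
      · linarith
      · exact h1
    have h1 : f x₀ < f c := hanti ⟨le_refl c, hxc.le⟩ ⟨hxc.le, le_refl x₀⟩ hxc
    have h2 : f c ≤ f x₀ := hmax ⟨le_max_left _ _, le_trans hxc.le hx.2⟩
    linarith

/-- First derivative vanishes at an interior-or-Neumann max on `[-1,1]`. -/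
lemma deriv_eq_zero_of_max {f : ℝ → ℝ} {x₀ : ℝ}
    (hx : x₀ ∈ Icc (-1:ℝ) 1) (hmax : IsMaxOn f (Icc (-1:ℝ) 1) x₀)
    (hbc : deriv f (-1) = 0 ∧ deriv f 1 = 0) : deriv f x₀ = 0 := by
  rcases hx.1.eq_or_lt with h1 | h1
  · rw [← h1]; exact hbc.1
  rcases hx.2.eq_or_lt with h2 | h2
  · rw [h2]; exact hbc.2
  exact (hmax.isLocalMax (Icc_mem_nhds h1 h2)).deriv_eq_zero

/-- Maximum principle for the Neumann problem `ε h'' = h - g` on `[-1,1]`. -/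
lemma neumann_upper {ε : ℝ} (hε : 0 < ε) {h g : ℝ → ℝ} (hh : ContDiff ℝ ∞ h)
    (heq : ∀ x ∈ Icc (-1:ℝ) 1, ε * deriv (deriv h) x = h x - g x)
    (hbc : deriv h (-1) = 0 ∧ deriv h 1 = 0)
    {G : ℝ} (hG : ∀ x ∈ Icc (-1:ℝ) 1, g x ≤ G) :
    ∀ x ∈ Icc (-1:ℝ) 1, h x ≤ G := by
  obtain ⟨x₀, hx₀, hmax⟩ := (isCompact_Icc (a := (-1:ℝ)) (b := 1)).exists_isMaxOn
    ⟨0, by norm_num⟩ hh.continuous.continuousOn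
  have hd0 : deriv h x₀ = 0 := deriv_eq_zero_of_max hx₀ hmax hbc
  have hd2 : deriv (deriv h) x₀ ≤ 0 :=
    second_deriv_nonpos_of_max hh (by norm_num) hx₀ hmax hd0
  have h1 : h x₀ ≤ g x₀ := by nlinarith [heq x₀ hx₀]
  intro x hx
  exact le_trans (hmax hx) (le_trans h1 (hG x₀ hx₀))

lemma neumann_lower {ε : ℝ} (hε : 0 < ε) {h g : ℝ → ℝ} (hh : ContDiff ℝ ∞ h)
    (heq : ∀ x ∈ Icc (-1:ℝ) 1, ε * deriv (deriv h) x = h x - g x)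
    (hbc : deriv h (-1) = 0 ∧ deriv h 1 = 0)
    {G : ℝ} (hG : ∀ x ∈ Icc (-1:ℝ) 1, G ≤ g x) :
    ∀ x ∈ Icc (-1:ℝ) 1, G ≤ h x := by
  have hneg : ∀ x ∈ Icc (-1:ℝ) 1, (fun y => -h y) x ≤ -G := by
    have e1 : deriv (fun y => -h y) = fun y => -deriv h y := by
      funext y; exact deriv.neg
    apply neumann_upper hε hh.neg (g := fun y => -g y)
    · intro x hx
      have e2 : deriv (deriv fun y => -h y) x = -deriv (deriv h) x := by
        rw [e1]; exact deriv.neg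
      rw [e2]
      have := heq x hx
      ring_nf
      ring_nf at this
      linarith
    · rw [e1]; simp [hbc.1, hbc.2]
    · intro x hx; exact neg_le_neg (hG x hx)
  intro x hx
  have := hneg x hx
  simp only at this
  linarith

/-- Elliptic step: with `w = (a+1)u - u²` and `h = ε φ' + w`, the function `h`
solves the Neumann problem `ε h'' = h - w` on `[-1,1]`, hence is bounded by
the bounds on `w`. -/
lemma elliptic_package {ε a : ℝ} (hε : 0 < ε) (ut φt : ℝ → ℝ)
    (hu : ContDiff ℝ ∞ ut) (hφ : ContDiff ℝ ∞ φt)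
    (heq : ∀ x ∈ Icc (-1:ℝ) 1,
      -ε * deriv (deriv φt) x + φt x = (-2 * ut x + a + 1) * deriv ut x)
    (hbc : φt (-1) = 0 ∧ φt 1 = 0) :
    (∀ B, (∀ y ∈ Icc (-1:ℝ) 1, B ≤ (a+1) * ut y - (ut y)^2) →
      ∀ x ∈ Icc (-1:ℝ) 1, B ≤ ε * deriv φt x + ((a+1) * ut x - (ut x)^2)) ∧
    (∀ B, (∀ y ∈ Icc (-1:ℝ) 1, (a+1) * ut y - (ut y)^2 ≤ B) →
      ∀ x ∈ Icc (-1:ℝ) 1, ε * deriv φt x + ((a+1) * ut x - (ut x)^2) ≤ B) := by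
  set w : ℝ → ℝ := fun x => (a+1) * ut x - (ut x)^2 with hw_def
  set h : ℝ → ℝ := fun x => ε * deriv φt x + w x with hh_def
  have hud : ∀ x, HasDerivAt ut (deriv ut x) x := fun x =>
    ((contDiff_infty_iff_deriv.mp hu).1 x).hasDerivAt
  have hφd : ContDiff ℝ ∞ (deriv φt) := (contDiff_infty_iff_deriv.mp hφ).2
  have hφdd : ∀ x, HasDerivAt (deriv φt) (deriv (deriv φt) x) x := fun x =>
    ((contDiff_infty_iff_deriv.mp hφd).1 x).hasDerivAt
  -- derivative of w
  have hwD : ∀ x, HasDerivAt w ((-2 * ut x + a + 1) * deriv ut x) x := by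
    intro x
    have h1 : HasDerivAt w ((a+1) * deriv ut x - 2 * ut x ^ (2-1) * deriv ut x) x :=
      ((hud x).const_mul (a+1)).sub ((hud x).pow 2)
    convert h1 using 1
    ring_nf
  have hwsm : ContDiff ℝ ∞ w := (contDiff_const.mul hu).sub (hu.pow 2)
  have hhsm : ContDiff ℝ ∞ h := (contDiff_const.mul hφd).add hwsm
  -- deriv h = φt on Icc
  have hderh : ∀ x, deriv h x = ε * deriv (deriv φt) x + (-2 * ut x + a + 1) * deriv ut x := by
    intro x
    exact (((hφdd x).const_mul ε).add (hwD x)).deriv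
  have hEq1 : EqOn (deriv h) φt (Icc (-1:ℝ) 1) := by
    intro x hx
    have := heq x hx
    rw [hderh x]
    linarith
  -- second derivative of h equals deriv φt on Icc
  have hEq2 : EqOn (deriv (deriv h)) (deriv φt) (Icc (-1:ℝ) 1) := by
    have hIoo : EqOn (deriv (deriv h)) (deriv φt) (Ioo (-1:ℝ) 1) := by
      intro x hx
      have hmem : Icc (-1:ℝ) 1 ∈ 𝓝 x := Icc_mem_nhds hx.1 hx.2
      exact Filter.EventuallyEq.deriv_eq (Filter.eventuallyEq_of_mem hmem hEq1)
    have hcl := hIoo.closure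
      ((contDiff_infty_iff_deriv.mp (contDiff_infty_iff_deriv.mp hhsm).2).2).continuous
      hφd.continuous
    rwa [closure_Ioo (by norm_num : (-1:ℝ) ≠ 1)] at hcl
  have heqN : ∀ x ∈ Icc (-1:ℝ) 1, ε * deriv (deriv h) x = h x - w x := by
    intro x hx
    rw [hEq2 hx]
    simp only [hh_def]
    ring
  have hbcN : deriv h (-1) = 0 ∧ deriv h 1 = 0 := by
    constructor
    · rw [hEq1 (by norm_num : (-1:ℝ) ∈ Icc (-1:ℝ) 1)]; exact hbc.1
    · rw [hEq1 (by norm_num : (1:ℝ) ∈ Icc (-1:ℝ) 1)]; exact hbc.2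
  constructor
  · intro B hB x hx
    exact neumann_lower hε hhsm heqN hbcN hB x hx
  · intro B hB x hx
    exact neumann_upper hε hhsm heqN hbcN hB x hx


set_option maxHeartbeats 2000000 in
theorem phi_L2_bound_bistable (T ε r a : ℝ) (u₀ : ℝ → ℝ)
    (hT : 0 < T) (hε : 0 < ε) (hr : 0 ≤ r) (ha : a ∈ Set.Ioo (0:ℝ) 1)
    (hu₀ : ContDiff ℝ (⊤ : ℕ∞) u₀) (hu₀nonneg : ∀ x ∈ Set.Icc (-1:ℝ) 1, 0 ≤ u₀ x) :
    ∃ C₂ > (0:ℝ), ∀ δ ∈ Set.Ioo (0:ℝ) 1, ∀ u φ : ℝ → ℝ → ℝ, IsBistableSol T ε r a δ u₀ u φ →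
      ∀ t ∈ Set.Icc (0:ℝ) T, pnorm 2 (φ t) ≤ C₂ := by
  obtain ⟨xm, hxm, hmax₀⟩ := (isCompact_Icc (a := (-1:ℝ)) (b := 1)).exists_isMaxOn
    ⟨0, by norm_num⟩ hu₀.continuous.continuousOn
  set K : ℝ := max (a+1) (u₀ xm) with hK_def
  have hK1 : a + 1 ≤ K := le_max_left _ _
  have hKpos : 0 < K := lt_of_lt_of_le (by linarith [ha.1]) hK1
  set W : ℝ := (a+1) * K + K^2 with hW_def
  have hWpos : 0 < W := by nlinarith [ha.1]
  set c : ℝ := 4 * W / ε with hc_def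
  have hcpos : 0 < c := by positivity
  refine ⟨Real.sqrt (2 * c^2), Real.sqrt_pos.mpr (by positivity), ?_⟩
  intro δ hδ u φ sol t ht
  have hsu : ∀ s : ℝ, ContDiff ℝ ∞ (u s) := fun s =>
    (sol.smooth_u.of_le (by simp)).comp (contDiff_const.prodMk contDiff_id)
  have hsφ : ∀ s : ℝ, ContDiff ℝ ∞ (φ s) := fun s =>
    (sol.smooth_phi.of_le (by simp)).comp (contDiff_const.prodMk contDiff_id)
  have hsut : ∀ x : ℝ, ContDiff ℝ ∞ (fun s => u s x) := fun x =>
    (sol.smooth_u.of_le (by simp)).comp (contDiff_id.prodMk contDiff_const)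
  -- Step 1 : uniform pointwise bound on u via the parabolic maximum principle
  have key : ∀ t' ∈ Icc (0:ℝ) T, ∀ x ∈ Icc (-1:ℝ) 1, u t' x ≤ K := by
    intro t' ht' x hx
    apply le_of_forall_pos_le_add
    intro ε' hε'
    set η := ε' / T with hη_def
    have hηpos : 0 < η := div_pos hε' hT
    have hηT : η * T = ε' := div_mul_cancel₀ _ hT.ne'
    have hmain : u t' x ≤ K + η * T := by
      by_contra hcon
      push_neg at hcon
      have hRc : IsCompact (Icc (0:ℝ) T ×ˢ Icc (-1:ℝ) 1) := isCompact_Icc.prod isCompact_Icc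
      set F : ℝ × ℝ → ℝ := fun q => u q.1 q.2 - η * q.1 with hF_def
      have hFc : Continuous F :=
        (sol.smooth_u.continuous).sub (continuous_const.mul continuous_fst)
      obtain ⟨q₀, hq₀, hmaxF⟩ := hRc.exists_isMaxOn
        ⟨(0, 0), Set.mk_mem_prod (by constructor <;> norm_num [hT.le]) (by norm_num)⟩
        hFc.continuousOn
      obtain ⟨t₀, x₀⟩ := q₀
      have ht₀ : t₀ ∈ Icc (0:ℝ) T := hq₀.1
      have hx₀ : x₀ ∈ Icc (-1:ℝ) 1 := hq₀.2
      have hFval : K < F (t₀, x₀) := by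
        have h1 : F (t', x) ≤ F (t₀, x₀) := hmaxF (Set.mk_mem_prod ht' hx)
        have h2 : η * t' ≤ η * T := by nlinarith [ht'.2]
        simp only [hF_def] at h1 ⊢
        linarith
      set M := u t₀ x₀ with hM_def
      have hMK : K < M := by
        have h0 : 0 ≤ η * t₀ := by nlinarith [ht₀.1]
        simp only [hF_def] at hFval
        linarith
      have ht₀0 : 0 < t₀ := by
        rcases ht₀.1.eq_or_lt with h | h
        · exfalso
          have hinit : u 0 x₀ = u₀ x₀ := sol.init x₀ hx₀
          have : M ≤ K := by
            rw [hM_def, ← h, hinit]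
            exact le_trans (hmax₀ hx₀) (le_max_right _ _)
          linarith
        · exact h
      have hmaxt : IsMaxOn (fun s => u s x₀ - η * s) (Icc (0:ℝ) T) t₀ := fun s hs =>
        hmaxF (Set.mk_mem_prod hs hx₀)
      have hft : ContDiff ℝ ∞ (fun s => u s x₀ - η * s) :=
        (hsut x₀).sub (contDiff_const.mul contDiff_id)
      have h10 : 0 ≤ deriv (fun s => u s x₀ - η * s) t₀ :=
        deriv_nonneg_of_max hft ht₀0 ht₀ hmaxt
      have hdsub : deriv (fun s => u s x₀ - η * s) t₀ = deriv (fun s => u s x₀) t₀ - η := by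
        have h1 : HasDerivAt (fun s => u s x₀) (deriv (fun s => u s x₀) t₀) t₀ :=
          ((contDiff_infty_iff_deriv.mp (hsut x₀)).1 t₀).hasDerivAt
        have h2 : HasDerivAt (fun s => u s x₀ - η * s)
            (deriv (fun s => u s x₀) t₀ - η * 1) t₀ :=
          h1.sub ((hasDerivAt_id t₀).const_mul η)
        rw [h2.deriv]; ring
      have hut : η ≤ deriv (fun s => u s x₀) t₀ := by rw [hdsub] at h10; linarith
      have hmaxx : IsMaxOn (u t₀) (Icc (-1:ℝ) 1) x₀ := by
        intro y hy
        have h := hmaxF (Set.mk_mem_prod ht₀ hy)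
        simp only [hF_def, Set.mem_setOf_eq] at h ⊢
        linarith
      have hdx0 : deriv (u t₀) x₀ = 0 := deriv_eq_zero_of_max hx₀ hmaxx (sol.bc_u t₀ ht₀)
      have hdxx : deriv (deriv (u t₀)) x₀ ≤ 0 :=
        second_deriv_nonpos_of_max (hsu t₀) (by norm_num) hx₀ hmaxx hdx0
      have hMa : a + 1 ≤ M := le_trans hK1 hMK.le
      have hwlow : ∀ y ∈ Icc (-1:ℝ) 1,
          (a+1) * M - M^2 ≤ (a+1) * u t₀ y - (u t₀ y)^2 := by
        intro y hy
        have h0 : 0 ≤ u t₀ y := sol.nonneg t₀ ht₀ y hy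
        have h1 : u t₀ y ≤ M := hmaxx hy
        nlinarith
      have hell := (elliptic_package hε (u t₀) (φ t₀) (hsu t₀) (hsφ t₀)
        (sol.eq_phi t₀ ht₀) (sol.bc_phi t₀ ht₀)).1 _ hwlow x₀ hx₀
      rw [← hM_def] at hell
      have hφx : 0 ≤ deriv (φ t₀) x₀ := by nlinarith
      have hprod : deriv (fun y => u t₀ y * φ t₀ y) x₀ = M * deriv (φ t₀) x₀ := by
        have h1 : HasDerivAt (u t₀) (deriv (u t₀) x₀) x₀ :=
          ((contDiff_infty_iff_deriv.mp (hsu t₀)).1 x₀).hasDerivAt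
        have h2 : HasDerivAt (φ t₀) (deriv (φ t₀) x₀) x₀ :=
          ((contDiff_infty_iff_deriv.mp (hsφ t₀)).1 x₀).hasDerivAt
        rw [show (fun y => u t₀ y * φ t₀ y) = u t₀ * φ t₀ from rfl, (h1.mul h2).deriv, hdx0, ← hM_def]
        ring
      have hequ := sol.eq_u t₀ ht₀ x₀ hx₀
      rw [hprod, ← hM_def] at hequ
      have hMpos : 0 < M := lt_trans hKpos hMK
      have hM1 : 1 < M := by linarith [ha.1]
      have hMa2 : a < M := by linarith
      have t1 : δ * deriv (deriv (u t₀)) x₀ ≤ 0 :=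
        mul_nonpos_of_nonneg_of_nonpos hδ.1.le hdxx
      have t2 : 0 ≤ M * deriv (φ t₀) x₀ := mul_nonneg hMpos.le hφx
      have t3 : r * M * (1 - M) * (M - a) ≤ 0 := by
        nlinarith [mul_nonneg (mul_nonneg (mul_nonneg hr hMpos.le)
          (sub_nonneg.mpr hMa2.le)) (sub_nonneg.mpr hM1.le)]
      linarith [hequ, hut]
    linarith [hηT]
  -- Step 2 : bound on φ via the elliptic problem
  have hwbound : ∀ y ∈ Icc (-1:ℝ) 1, |(a+1) * u t y - (u t y)^2| ≤ W := by
    intro y hy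
    have h0 : 0 ≤ u t y := sol.nonneg t ht y hy
    have h1 : u t y ≤ K := key t ht y hy
    rw [abs_le]
    constructor <;> nlinarith [ha.1]
  have pack := elliptic_package hε (u t) (φ t) (hsu t) (hsφ t)
    (sol.eq_phi t ht) (sol.bc_phi t ht)
  have hhub := pack.2 W (fun y hy => (abs_le.mp (hwbound y hy)).2)
  have hhlb := pack.1 (-W) (fun y hy => (abs_le.mp (hwbound y hy)).1)
  have hφ' : ∀ y ∈ Icc (-1:ℝ) 1, |deriv (φ t) y| ≤ 2 * W / ε := by
    intro y hy
    have h1 := hhub y hy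
    have h2 := hhlb y hy
    have h3 := abs_le.mp (hwbound y hy)
    rw [abs_le]
    constructor
    · rw [← neg_div, div_le_iff₀ hε]
      nlinarith
    · rw [le_div_iff₀ hε]
      nlinarith
  have hφval : ∀ x ∈ Icc (-1:ℝ) 1, |φ t x| ≤ c := by
    intro x hx
    have hint : ∫ y in (-1:ℝ)..x, deriv (φ t) y = φ t x - φ t (-1) :=
      intervalIntegral.integral_deriv_eq_sub
        (fun y _ => ((contDiff_infty_iff_deriv.mp (hsφ t)).1 y))
        (((contDiff_infty_iff_deriv.mp (hsφ t)).2.continuous).intervalIntegrable _ _)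
    have hbcφ := (sol.bc_phi t ht).1
    have hnorm : |∫ y in (-1:ℝ)..x, deriv (φ t) y| ≤ (2*W/ε) * |x - (-1)| := by
      have h := intervalIntegral.norm_integral_le_of_norm_le_const
        (C := 2*W/ε) (f := deriv (φ t)) (a := (-1:ℝ)) (b := x) (fun y hy => by
          rw [uIoc_of_le hx.1] at hy
          simpa [Real.norm_eq_abs] using hφ' y ⟨hy.1.le, hy.2.trans hx.2⟩)
      simpa [Real.norm_eq_abs] using h
    rw [hint, hbcφ, sub_zero] at hnorm
    have habs2 : |x - (-1)| ≤ 2 := by rw [abs_le]; constructor <;> linarith [hx.1, hx.2]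
    calc |φ t x| ≤ (2*W/ε) * |x - (-1)| := hnorm
      _ ≤ (2*W/ε) * 2 := by
          apply mul_le_mul_of_nonneg_left habs2
          positivity
      _ = c := by rw [hc_def]; ring
  have hint1 : (∫ x in (-1:ℝ)..1, |φ t x| ^ (2:ℝ)) = ∫ x in (-1:ℝ)..1, (φ t x)^2 := by
    apply intervalIntegral.integral_congr
    intro x _
    have h2 : ((2:ℝ)) = ((2:ℕ):ℝ) := by norm_num
    simp only [h2, Real.rpow_natCast, sq_abs]
  have hint2 : (∫ x in (-1:ℝ)..1, (φ t x)^2) ≤ ∫ x in (-1:ℝ)..1, (c:ℝ)^2 := by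
    apply intervalIntegral.integral_mono_on (by norm_num)
      (((hsφ t).continuous.pow 2).intervalIntegrable _ _) intervalIntegrable_const
    intro x hx
    have h := abs_le.mp (hφval x hx)
    rw [Pi.pow_apply]
    nlinarith
  have hint3 : (∫ x in (-1:ℝ)..1, (c:ℝ)^2) = 2 * c^2 := by
    rw [intervalIntegral.integral_const, smul_eq_mul]
    norm_num
  have hnn : 0 ≤ ∫ x in (-1:ℝ)..1, (φ t x)^2 :=
    intervalIntegral.integral_nonneg (by norm_num) (fun x _ => sq_nonneg _)
  calc pnorm 2 (φ t) = (∫ x in (-1:ℝ)..1, |φ t x| ^ (2:ℝ)) ^ (1/(2:ℝ)) := rfl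
    _ = (∫ x in (-1:ℝ)..1, (φ t x)^2) ^ (1/(2:ℝ)) := by rw [hint1]
    _ ≤ (2*c^2) ^ (1/(2:ℝ)) := Real.rpow_le_rpow hnn (by linarith) (by norm_num)
    _ = Real.sqrt (2*c^2) := (Real.sqrt_eq_rpow _).symm
end

section
/- For every δ∈(0,1), every classical solution (u,φ) of the bistable system with diffusion δ, every t∈[0,T] and every x∈[-1,1], the following pointwise lower bound holds: ∂ₓφ(t,x) ≥ −(2/ε) ‖φ(t,·)‖_∞ − (a+1)²/(4ε) − (1/(2ε)) ‖u(t,·)‖₂². -/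
open Set MeasureTheory

theorem phi_deriv_lower_bound_bistable (T ε r a : ℝ) (u₀ : ℝ → ℝ)
    (hT : 0 < T) (hε : 0 < ε) (hr : 0 ≤ r) (ha : a ∈ Set.Ioo (0:ℝ) 1)
    (hu₀ : ContDiff ℝ (⊤ : ℕ∞) u₀) (hu₀nonneg : ∀ x ∈ Set.Icc (-1:ℝ) 1, 0 ≤ u₀ x) :
    ∀ δ ∈ Set.Ioo (0:ℝ) 1, ∀ u φ : ℝ → ℝ → ℝ, IsBistableSol T ε r a δ u₀ u φ →
      ∀ t ∈ Set.Icc (0:ℝ) T, ∀ x ∈ Set.Icc (-1:ℝ) 1,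
        deriv (φ t) x ≥
          -(2 / ε) * supnorm (φ t) - (a + 1) ^ 2 / (4 * ε)
            - 1 / (2 * ε) * pnorm 2 (u t) ^ 2 := by
  rintro δ hδ u φ hsol t ht x hx
  set U : ℝ → ℝ := u t with hUdef
  set P : ℝ → ℝ := φ t with hPdef
  have hU : ContDiff ℝ (⊤ : ℕ∞) U := hsol.smooth_u.comp (contDiff_const.prodMk contDiff_id)
  have hP : ContDiff ℝ (⊤ : ℕ∞) P := hsol.smooth_phi.comp (contDiff_const.prodMk contDiff_id)
  have hPc : Continuous P := hP.continuous
  have hUc : Continuous U := hU.continuous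
  have hPd : Differentiable ℝ P := hP.differentiable (by simp)
  have hP2 : ContDiff ℝ (1 + 1) P := hP.of_le (by exact WithTop.coe_le_coe.mpr le_top)
  have hP1 : ContDiff ℝ 1 (deriv P) := (contDiff_succ_iff_deriv.mp hP2).2.2
  have hP'c : Continuous (deriv P) := hP1.continuous
  have hP'd : Differentiable ℝ (deriv P) := hP1.differentiable one_ne_zero
  have hUd : Differentiable ℝ U := hU.differentiable (by simp)
  set g : ℝ → ℝ := fun y => -(U y ^ 2) + (a + 1) * U y with hgdef
  have hgc : Continuous g := ((hUc.pow 2).neg).add (continuous_const.mul hUc)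
  have hgd : ∀ y, HasDerivAt g ((-2 * U y + a + 1) * deriv U y) y := by
    intro y
    have h1 := (hUd y).hasDerivAt
    have h2 : HasDerivAt g (-((2:ℕ) * U y ^ 1 * deriv U y) + (a + 1) * deriv U y) y :=
      ((h1.pow 2).neg).add (h1.const_mul (a + 1))
    convert h2 using 1
    push_cast; ring
  set Φ : ℝ → ℝ := fun y => ∫ z in (-1:ℝ)..y, P z with hΦdef
  have hΦd : ∀ y, HasDerivAt Φ (P y) y := fun y =>
    (hPc.integral_hasStrictDerivAt (-1) y).hasDerivAt
  have hΦc : Continuous Φ :=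
    continuous_iff_continuousAt.mpr fun y => (hΦd y).continuousAt
  set h : ℝ → ℝ := fun y => ε * deriv P y + g y - Φ y with hhdef
  have hhc : Continuous h := ((continuous_const.mul hP'c).add hgc).sub hΦc
  have hh0 : ∀ y ∈ Set.Icc (-1:ℝ) 1, HasDerivAt h 0 y := by
    intro y hy
    have hD : HasDerivAt (fun z => ε * deriv P z) (ε * deriv (deriv P) y) y :=
      ((hP'd y).hasDerivAt).const_mul ε
    have hsum := (hD.add (hgd y)).sub (hΦd y)
    have heq := hsol.eq_phi t ht y hy
    rw [← hPdef, ← hUdef] at heq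
    exact hsum.congr_deriv (by linarith [heq])
  have hconst : ∀ y ∈ Set.Icc (-1:ℝ) 1, h y = h (-1) :=
    fun y hy => constant_of_has_deriv_right_zero hhc.continuousOn
      (fun z hz => (hh0 z ⟨hz.1, hz.2.le⟩).hasDerivWithinAt) y hy
  clear_value U P g Φ h
  have hid : ∀ y ∈ Set.Icc (-1:ℝ) 1, ε * deriv P y = h (-1) + Φ y - g y := by
    intro y hy
    rw [← hconst y hy, hhdef]
    ring
  -- integral of ε * deriv P over [-1,1] is 0
  have hb := hsol.bc_phi t ht
  rw [← hPdef] at hb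
  have hint1 : ∫ y in (-1:ℝ)..1, ε * deriv P y = 0 := by
    rw [intervalIntegral.integral_const_mul,
      intervalIntegral.integral_deriv_eq_sub (fun z _ => hPd z)
        (hP'c.intervalIntegrable _ _), hb.1, hb.2]
    ring
  have hgΦint : IntervalIntegrable (fun y => g y - Φ y) volume (-1:ℝ) 1 :=
    (hgc.sub hΦc).intervalIntegrable _ _
  have hintid : ∫ y in (-1:ℝ)..1, (h (-1) + Φ y - g y) = 0 := by
    rw [← hint1]
    apply intervalIntegral.integral_congr
    intro y hy
    rw [Set.uIcc_of_le (by norm_num : (-1:ℝ) ≤ 1)] at hy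
    exact (hid y hy).symm
  have hC : 2 * h (-1) = ∫ y in (-1:ℝ)..1, (g y - Φ y) := by
    have hrw : (fun y => h (-1) + Φ y - g y) = fun y => h (-1) - (g y - Φ y) := by
      funext y; ring
    rw [hrw, intervalIntegral.integral_sub (intervalIntegrable_const) hgΦint,
      intervalIntegral.integral_const] at hintid
    simp only [smul_eq_mul] at hintid
    linarith [hintid]
  -- main identity at x
  have hmain : 2 * (ε * deriv P x)
      = ∫ y in (-1:ℝ)..1, (g y - Φ y + Φ x - g x) := by
    have h1 := hid x hx
    have h2 : (fun y => g y - Φ y + Φ x - g x)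
        = fun y => (g y - Φ y) + (Φ x - g x) := by funext y; ring
    rw [h2, intervalIntegral.integral_add hgΦint intervalIntegrable_const,
      intervalIntegral.integral_const]
    simp only [smul_eq_mul]
    linarith [hC, h1]
  -- sup norm facts
  set M : ℝ := supnorm P with hMdef
  have hbdd : BddAbove ((fun z => |P z|) '' Set.Icc (-1:ℝ) 1) :=
    (isCompact_Icc.image_of_continuousOn (hPc.abs.continuousOn)).bddAbove
  have hMle : ∀ z ∈ Set.Icc (-1:ℝ) 1, |P z| ≤ M := by
    intro z hz
    exact le_csSup hbdd ⟨z, hz, rfl⟩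
  have hM0 : 0 ≤ M := le_trans (abs_nonneg _) (hMle (-1) (by norm_num))
  clear_value M
  -- pointwise lower bound for the integrand
  have hptwise : ∀ y ∈ Set.Icc (-1:ℝ) 1,
      -(U y ^ 2) - (a + 1) ^ 2 / 4 - 2 * M ≤ g y - Φ y + Φ x - g x := by
    intro y hy
    have hgylb : -(U y ^ 2) ≤ g y := by
      have hUy : 0 ≤ U y := hUdef ▸ hsol.nonneg t ht y hy
      have ha1 : (0:ℝ) < a := ha.1
      simp only [hgdef]
      nlinarith
    have hgxub : g x ≤ (a + 1) ^ 2 / 4 := by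
      simp only [hgdef]
      nlinarith [sq_nonneg (U x - (a + 1) / 2)]
    have hΦsub : Φ x - Φ y = ∫ z in y..x, P z := by
      simp only [hΦdef]
      exact intervalIntegral.integral_interval_sub_left
        (hPc.intervalIntegrable _ _) (hPc.intervalIntegrable _ _)
    have habs : |∫ z in y..x, P z| ≤ M * |x - y| := by
      have := intervalIntegral.norm_integral_le_of_norm_le_const
        (f := P) (a := y) (b := x) (C := M) ?_
      · simpa [Real.norm_eq_abs] using this
      · intro z hz
        rw [Real.norm_eq_abs]
        apply hMle
        have h1 : Set.uIoc y x ⊆ Set.Icc (-1:ℝ) 1 := by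
          rw [Set.uIoc]
          intro w hw
          constructor
          · have : min y x ≤ w := le_of_lt hw.1
            rcases le_total y x with hyx | hyx
            · rw [min_eq_left hyx] at this; linarith [hy.1]
            · rw [min_eq_right hyx] at this; linarith [hx.1]
          · have : w ≤ max y x := hw.2
            rcases le_total y x with hyx | hyx
            · rw [max_eq_right hyx] at this; linarith [hx.2]
            · rw [max_eq_left hyx] at this; linarith [hy.2]
        exact h1 hz
    have hxy2 : |x - y| ≤ 2 := by
      rw [abs_le]
      constructor <;> [linarith [hx.1, hy.2]; linarith [hx.2, hy.1]]
    have hΦlb : -(2 * M) ≤ Φ x - Φ y := by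
      rw [hΦsub]
      have h1 : |∫ z in y..x, P z| ≤ 2 * M := by
        calc |∫ z in y..x, P z| ≤ M * |x - y| := habs
          _ ≤ M * 2 := by nlinarith
          _ = 2 * M := by ring
      linarith [neg_abs_le (∫ z in y..x, P z), h1]
    linarith
  -- integrate the pointwise bound
  set X : ℝ := ∫ y in (-1:ℝ)..1, U y ^ 2 with hXdef
  have hXnn : 0 ≤ X := intervalIntegral.integral_nonneg (by norm_num)
    (fun y _ => sq_nonneg _)
  clear_value X
  have hlhsint : IntervalIntegrable (fun y => -(U y ^ 2) - (a + 1) ^ 2 / 4 - 2 * M)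
      volume (-1:ℝ) 1 :=
    ((((hUc.pow 2).neg).sub continuous_const).sub continuous_const).intervalIntegrable _ _
  have hrhsint : IntervalIntegrable (fun y => g y - Φ y + Φ x - g x) volume (-1:ℝ) 1 :=
    (((hgc.sub hΦc).add continuous_const).sub continuous_const).intervalIntegrable _ _
  have hintmono : ∫ y in (-1:ℝ)..1, (-(U y ^ 2) - (a + 1) ^ 2 / 4 - 2 * M)
      ≤ ∫ y in (-1:ℝ)..1, (g y - Φ y + Φ x - g x) :=
    intervalIntegral.integral_mono_on (by norm_num) hlhsint hrhsint hptwise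
  have hlhsval : ∫ y in (-1:ℝ)..1, (-(U y ^ 2) - (a + 1) ^ 2 / 4 - 2 * M)
      = -X - ((a + 1) ^ 2 / 4 + 2 * M) * 2 := by
    have hrw : (fun y => -(U y ^ 2) - (a + 1) ^ 2 / 4 - 2 * M)
        = fun y => -(U y ^ 2) - ((a + 1) ^ 2 / 4 + 2 * M) := by funext y; ring
    rw [hrw, intervalIntegral.integral_sub (f := fun y => -(U y ^ 2))
      (((hUc.pow 2).neg).intervalIntegrable _ _) intervalIntegrable_const,
      intervalIntegral.integral_neg, intervalIntegral.integral_const]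
    simp only [smul_eq_mul, hXdef]
    ring
  have hkey : -X - (a + 1) ^ 2 / 2 - 4 * M ≤ 2 * (ε * deriv P x) := by
    rw [hmain]
    calc -X - (a + 1) ^ 2 / 2 - 4 * M
        = -X - ((a + 1) ^ 2 / 4 + 2 * M) * 2 := by ring
      _ = ∫ y in (-1:ℝ)..1, (-(U y ^ 2) - (a + 1) ^ 2 / 4 - 2 * M) := hlhsval.symm
      _ ≤ _ := hintmono
  -- identify pnorm with X
  have hpn : pnorm 2 U ^ 2 = X := by
    have h1 : ∀ z : ℝ, |U z| ^ (2:ℝ) = U z ^ 2 := by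
      intro z
      rw [show (2:ℝ) = ((2:ℕ):ℝ) by norm_num, Real.rpow_natCast, sq_abs]
    have hXnn' : (0:ℝ) ≤ ∫ y in (-1:ℝ)..1, U y ^ 2 :=
      intervalIntegral.integral_nonneg (by norm_num) (fun y _ => sq_nonneg _)
    simp only [pnorm, h1, hXdef]
    rw [← Real.rpow_natCast ((∫ y in (-1:ℝ)..1, U y ^ 2) ^ ((1:ℝ)/2)) 2,
      ← Real.rpow_mul hXnn']
    norm_num
  -- conclude
  rw [ge_iff_le, hpn]
  have h2 : (-X - (a + 1) ^ 2 / 2 - 4 * M) / (2 * ε) ≤ deriv P x := by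
    rw [div_le_iff₀ (by positivity)]
    linarith [hkey]
  calc -(2 / ε) * M - (a + 1) ^ 2 / (4 * ε) - 1 / (2 * ε) * X
      = (-X - (a + 1) ^ 2 / 2 - 4 * M) / (2 * ε) := by
        field_simp
        ring
    _ ≤ deriv P x := h2
end

section
/- Let (u₁, φ₁) and (u₂, φ₂) be two classical solutions of the transport system with the same initial datum u₀. Then (u₁, φ₁) = (u₂, φ₂) on [0,T]×[-1,1]. -/
open Set MeasureTheory intervalIntegral

section TransportAux

section A
variable {F : ℝ → ℝ → ℝ}

lemma smooth_slice_x (hF : ContDiff ℝ (⊤ : ℕ∞) (fun q : ℝ × ℝ => F q.1 q.2)) (t : ℝ) :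
    ContDiff ℝ (⊤ : ℕ∞) (F t) :=
  hF.comp (contDiff_const.prodMk contDiff_id)

lemma smooth_slice_t (hF : ContDiff ℝ (⊤ : ℕ∞) (fun q : ℝ × ℝ => F q.1 q.2)) (x : ℝ) :
    ContDiff ℝ (⊤ : ℕ∞) (fun s => F s x) :=
  hF.comp (contDiff_id.prodMk contDiff_const)

lemma hasDerivAt_slice_x (hF : ContDiff ℝ (⊤ : ℕ∞) (fun q : ℝ × ℝ => F q.1 q.2)) (t x : ℝ) :
    HasDerivAt (F t) ((fderiv ℝ (fun q : ℝ × ℝ => F q.1 q.2) (t, x)) (0, 1)) x := by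
  have h1 : HasFDerivAt (fun q : ℝ × ℝ => F q.1 q.2)
      (fderiv ℝ (fun q : ℝ × ℝ => F q.1 q.2) (t, x)) (t, x) :=
    (hF.differentiable (by simp) (t, x)).hasFDerivAt
  have h2 : HasDerivAt (fun y : ℝ => ((t : ℝ), y)) ((0 : ℝ), (1 : ℝ)) x :=
    (hasDerivAt_const x t).prodMk (hasDerivAt_id x)
  exact h1.comp_hasDerivAt x h2

lemma hasDerivAt_slice_t (hF : ContDiff ℝ (⊤ : ℕ∞) (fun q : ℝ × ℝ => F q.1 q.2)) (t x : ℝ) :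
    HasDerivAt (fun s => F s x) ((fderiv ℝ (fun q : ℝ × ℝ => F q.1 q.2) (t, x)) (1, 0)) t := by
  have h1 : HasFDerivAt (fun q : ℝ × ℝ => F q.1 q.2)
      (fderiv ℝ (fun q : ℝ × ℝ => F q.1 q.2) (t, x)) (t, x) :=
    (hF.differentiable (by simp) (t, x)).hasFDerivAt
  have h2 : HasDerivAt (fun s : ℝ => (s, x)) ((1 : ℝ), (0 : ℝ)) t :=
    (hasDerivAt_id t).prodMk (hasDerivAt_const t x)
  exact h1.comp_hasDerivAt t h2

lemma smooth_partial_x (hF : ContDiff ℝ (⊤ : ℕ∞) (fun q : ℝ × ℝ => F q.1 q.2)) :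
    ContDiff ℝ (⊤ : ℕ∞) (fun q : ℝ × ℝ => deriv (F q.1) q.2) := by
  have h : (fun q : ℝ × ℝ => deriv (F q.1) q.2)
      = fun q : ℝ × ℝ => (fderiv ℝ (fun q : ℝ × ℝ => F q.1 q.2) q) (0, 1) := by
    funext q
    exact (hasDerivAt_slice_x hF q.1 q.2).deriv ▸ rfl
  rw [h]
  exact (hF.fderiv_right (by simp)).clm_apply contDiff_const

lemma smooth_partial_t (hF : ContDiff ℝ (⊤ : ℕ∞) (fun q : ℝ × ℝ => F q.1 q.2)) :
    ContDiff ℝ (⊤ : ℕ∞) (fun q : ℝ × ℝ => deriv (fun s => F s q.2) q.1) := by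
  have h : (fun q : ℝ × ℝ => deriv (fun s => F s q.2) q.1)
      = fun q : ℝ × ℝ => (fderiv ℝ (fun q : ℝ × ℝ => F q.1 q.2) q) (1, 0) := by
    funext q
    exact (hasDerivAt_slice_t hF q.1 q.2).deriv ▸ rfl
  rw [h]
  exact (hF.fderiv_right (by simp)).clm_apply contDiff_const

end A


lemma eq_zero_of_integral_zero {f : ℝ → ℝ} (hf : Continuous f)
    (hnn : ∀ x ∈ Icc (-1:ℝ) 1, 0 ≤ f x)
    (hint : (∫ x in (-1:ℝ)..1, f x) = 0) : ∀ x ∈ Icc (-1:ℝ) 1, f x = 0 := by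
  by_contra hco
  push_neg at hco
  obtain ⟨x₀, hx₀, hne⟩ := hco
  have hpos : 0 < f x₀ := lt_of_le_of_ne (hnn x₀ hx₀) (Ne.symm hne)
  -- continuity: get δ
  obtain ⟨δ, hδ, hball⟩ := Metric.continuousAt_iff.1 hf.continuousAt (f x₀ / 2) (by linarith)
  set δ' : ℝ := min δ 1 with hδ'def
  have hδ'pos : 0 < δ' := lt_min hδ one_pos
  set a : ℝ := max (-1) (x₀ - δ' / 2)
  set b : ℝ := min 1 (x₀ + δ' / 2)
  have hx₀1 : -1 ≤ x₀ := hx₀.1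
  have hx₀2 : x₀ ≤ 1 := hx₀.2
  have hab : a < b := by
    apply max_lt <;> apply lt_min <;> linarith
  have hsub : Icc a b ⊆ Icc (-1:ℝ) 1 := by
    apply Icc_subset_Icc (le_max_left _ _) (min_le_left _ _)
  have hlow : ∀ x ∈ Icc a b, f x₀ / 2 ≤ f x := by
    intro x hx
    have h1 : x₀ - δ' / 2 ≤ x := le_trans (le_max_right _ _) hx.1
    have h2 : x ≤ x₀ + δ' / 2 := le_trans hx.2 (min_le_right _ _)
    have : dist x x₀ < δ := by
      rw [Real.dist_eq]
      have h3 : |x - x₀| ≤ δ' / 2 := abs_le.2 ⟨by linarith, by linarith⟩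
      have hδ'le : δ' ≤ δ := min_le_left _ _
      linarith
    have := hball this
    rw [Real.dist_eq, abs_lt] at this
    linarith [this.1]
  have hi1 : IntervalIntegrable f volume (-1) a := hf.intervalIntegrable _ _
  have hi2 : IntervalIntegrable f volume a b := hf.intervalIntegrable _ _
  have hi3 : IntervalIntegrable f volume b 1 := hf.intervalIntegrable _ _
  have ha1 : -1 ≤ a := le_max_left _ _
  have hb1 : b ≤ 1 := min_le_left _ _
  have h1 : 0 ≤ ∫ x in (-1:ℝ)..a, f x := by
    apply intervalIntegral.integral_nonneg ha1
    intro x hx; exact hnn x ⟨hx.1, le_trans hx.2 (le_trans hab.le hb1)⟩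
  have h3 : 0 ≤ ∫ x in b..(1:ℝ), f x := by
    apply intervalIntegral.integral_nonneg hb1
    intro x hx; exact hnn x ⟨le_trans (le_trans ha1 hab.le) hx.1, hx.2⟩
  have h2 : (b - a) * f x₀ / 2 ≤ ∫ x in a..b, f x := by
    have := intervalIntegral.integral_mono_on hab.le
      (intervalIntegrable_const) hi2 hlow
    simpa using this
  have hsplit : (∫ x in (-1:ℝ)..1, f x)
      = (∫ x in (-1:ℝ)..a, f x) + (∫ x in a..b, f x) + (∫ x in b..(1:ℝ), f x) := by
    rw [intervalIntegral.integral_add_adjacent_intervals hi1 hi2,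
      intervalIntegral.integral_add_adjacent_intervals (hi1.trans hi2) hi3]
  have : 0 < (b - a) * f x₀ / 2 := by
    have hba : 0 < b - a := by linarith
    positivity
  linarith [hsplit ▸ hint]

lemma lip_of_deriv_bound {f : ℝ → ℝ} (hf : ContDiff ℝ 1 f) {R C : ℝ}
    (hC : ∀ y ∈ Icc (-R) R, |deriv f y| ≤ C) :
    ∀ p ∈ Icc (-R) R, ∀ q ∈ Icc (-R) R, |f p - f q| ≤ C * |p - q| := by
  intro p hp q hq
  have h := Convex.norm_image_sub_le_of_norm_deriv_le
    (fun x _ => (hf.differentiable one_ne_zero).differentiableAt)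
    (fun x hx => by simpa using hC x hx) (convex_Icc (-R) R) hq hp
  simpa [Real.norm_eq_abs] using h


lemma elliptic_energy {ε : ℝ} {ψ g : ℝ → ℝ} (hψ : ContDiff ℝ (⊤ : ℕ∞) ψ)
    (hg : ContDiff ℝ 2 g)
    (hbc1 : ψ (-1) = 0) (hbc2 : ψ 1 = 0)
    (heq : ∀ x ∈ Icc (-1:ℝ) 1, -ε * deriv (deriv ψ) x + ψ x = deriv g x) :
    ε * (∫ x in (-1:ℝ)..1, deriv ψ x * deriv ψ x) + (∫ x in (-1:ℝ)..1, ψ x * ψ x)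
      = -∫ x in (-1:ℝ)..1, g x * deriv ψ x := by
  have huIcc : uIcc (-1:ℝ) 1 = Icc (-1:ℝ) 1 := uIcc_of_le (by norm_num)
  have hpsiI : ContDiff ℝ (⊤:ℕ∞) ψ := hψ.of_le (by simp)
  have hψ' : ContDiff ℝ (⊤:ℕ∞) (deriv ψ) := (contDiff_infty_iff_deriv.1 hpsiI).2
  have hψc : Continuous ψ := hψ.continuous
  have hψ'c : Continuous (deriv ψ) := hψ'.continuous
  have hψ''c : Continuous (deriv (deriv ψ)) := (contDiff_infty_iff_deriv.1 hψ').2.continuous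
  have hgc : Continuous g := hg.continuous
  have hg'c : Continuous (deriv g) := hg.continuous_deriv one_le_two
  have hdψ : ∀ x : ℝ, HasDerivAt ψ (deriv ψ x) x :=
    fun x => (hpsiI.differentiable (by simp) x).hasDerivAt
  have hdψ' : ∀ x : ℝ, HasDerivAt (deriv ψ) (deriv (deriv ψ) x) x :=
    fun x => (hψ'.differentiable (by simp) x).hasDerivAt
  have hdg : ∀ x : ℝ, HasDerivAt g (deriv g x) x :=
    fun x => (hg.differentiable two_ne_zero x).hasDerivAt
  -- I1 : ∫ (ψ'' ψ + ψ' ψ') = 0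
  have I1 : (∫ x in (-1:ℝ)..1, (deriv (deriv ψ) x * ψ x + deriv ψ x * deriv ψ x)) = 0 := by
    rw [integral_eq_sub_of_hasDerivAt (fun x _ => (hdψ' x).mul (hdψ x))
      (((hψ''c.mul hψc).add (hψ'c.mul hψ'c)).intervalIntegrable _ _)]
    rw [Pi.mul_apply, Pi.mul_apply, hbc1, hbc2]; ring
  -- I2 : ∫ (g' ψ + g ψ') = 0
  have I2 : (∫ x in (-1:ℝ)..1, (deriv g x * ψ x + g x * deriv ψ x)) = 0 := by
    rw [integral_eq_sub_of_hasDerivAt (fun x _ => (hdg x).mul (hdψ x))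
      (((hg'c.mul hψc).add (hgc.mul hψ'c)).intervalIntegrable _ _)]
    rw [Pi.mul_apply, Pi.mul_apply, hbc1, hbc2]; ring
  -- main : ∫ (-ε (ψ'' ψ) + ψ ψ) = ∫ g' ψ
  have main : (∫ x in (-1:ℝ)..1, (-ε * (deriv (deriv ψ) x * ψ x) + ψ x * ψ x))
      = ∫ x in (-1:ℝ)..1, deriv g x * ψ x := by
    apply integral_congr
    intro x hx
    rw [huIcc] at hx
    have h := heq x hx
    simp only
    linear_combination (ψ x) * h
  -- split the integrals
  have Sψ : (∫ x in (-1:ℝ)..1, (-ε * (deriv (deriv ψ) x * ψ x) + ψ x * ψ x))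
      = -ε * (∫ x in (-1:ℝ)..1, deriv (deriv ψ) x * ψ x) + ∫ x in (-1:ℝ)..1, ψ x * ψ x := by
    rw [integral_add (f := fun x => -ε * (deriv (deriv ψ) x * ψ x)) (g := fun x => ψ x * ψ x)
      ((continuous_const.mul (hψ''c.mul hψc)).intervalIntegrable _ _)
      ((hψc.mul hψc).intervalIntegrable _ _), intervalIntegral.integral_const_mul]
  have S1 : (∫ x in (-1:ℝ)..1, (deriv (deriv ψ) x * ψ x + deriv ψ x * deriv ψ x))
      = (∫ x in (-1:ℝ)..1, deriv (deriv ψ) x * ψ x) + ∫ x in (-1:ℝ)..1, deriv ψ x * deriv ψ x :=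
    integral_add ((hψ''c.mul hψc).intervalIntegrable _ _) ((hψ'c.mul hψ'c).intervalIntegrable _ _)
  have S2 : (∫ x in (-1:ℝ)..1, (deriv g x * ψ x + g x * deriv ψ x))
      = (∫ x in (-1:ℝ)..1, deriv g x * ψ x) + ∫ x in (-1:ℝ)..1, g x * deriv ψ x :=
    integral_add ((hg'c.mul hψc).intervalIntegrable _ _) ((hgc.mul hψ'c).intervalIntegrable _ _)
  rw [S1] at I1
  rw [S2] at I2
  rw [Sψ] at main
  linear_combination main + ε * I1 + I2


lemma elliptic_bounds {ε L : ℝ} (hε : 0 < ε) (hL : 0 ≤ L) {ψ g w : ℝ → ℝ}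
    (hψ : ContDiff ℝ (⊤ : ℕ∞) ψ) (hg : ContDiff ℝ 2 g) (hw : Continuous w)
    (hbc1 : ψ (-1) = 0) (hbc2 : ψ 1 = 0)
    (heq : ∀ x ∈ Icc (-1:ℝ) 1, -ε * deriv (deriv ψ) x + ψ x = deriv g x)
    (hgw : ∀ x ∈ Icc (-1:ℝ) 1, |g x| ≤ L * |w x|) :
    (∫ x in (-1:ℝ)..1, ψ x * ψ x) ≤ L ^ 2 / (2 * ε) * ∫ x in (-1:ℝ)..1, w x * w x ∧
    (∫ x in (-1:ℝ)..1, deriv ψ x * deriv ψ x)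
      ≤ L ^ 2 / ε ^ 2 * ∫ x in (-1:ℝ)..1, w x * w x := by
  have hpsiI : ContDiff ℝ (⊤:ℕ∞) ψ := hψ.of_le (by simp)
  have hψ' : ContDiff ℝ (⊤:ℕ∞) (deriv ψ) := (contDiff_infty_iff_deriv.1 hpsiI).2
  have hψc : Continuous ψ := hψ.continuous
  have hψ'c : Continuous (deriv ψ) := hψ'.continuous
  have hgc : Continuous g := hg.continuous
  set A := ∫ x in (-1:ℝ)..1, deriv ψ x * deriv ψ x with hA
  set B := ∫ x in (-1:ℝ)..1, ψ x * ψ x with hB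
  set W := ∫ x in (-1:ℝ)..1, w x * w x with hW
  have energy := elliptic_energy hψ hg hbc1 hbc2 heq
  have hAnn : 0 ≤ A := integral_nonneg (by norm_num) (fun x _ => mul_self_nonneg _)
  have hBnn : 0 ≤ B := integral_nonneg (by norm_num) (fun x _ => mul_self_nonneg _)
  have hWnn : 0 ≤ W := integral_nonneg (by norm_num) (fun x _ => mul_self_nonneg _)
  -- bound -∫ g ψ'
  have habs : |∫ x in (-1:ℝ)..1, g x * deriv ψ x| ≤ ∫ x in (-1:ℝ)..1, |g x * deriv ψ x| :=
    intervalIntegral.abs_integral_le_integral_abs (by norm_num)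
  have hptw : ∀ x ∈ Icc (-1:ℝ) 1,
      |g x * deriv ψ x| ≤ L ^ 2 / (2 * ε) * (w x * w x) + ε / 2 * (deriv ψ x * deriv ψ x) := by
    intro x hx
    have h1 : |g x * deriv ψ x| ≤ (L * |w x|) * |deriv ψ x| := by
      rw [abs_mul]
      exact mul_le_mul_of_nonneg_right (hgw x hx) (abs_nonneg _)
    have h2 : (L * |w x|) * |deriv ψ x|
        ≤ L ^ 2 / (2 * ε) * (w x * w x) + ε / 2 * (deriv ψ x * deriv ψ x) := by
      have hs := sq_nonneg (ε * |deriv ψ x| - L * |w x|)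
      have hw2 : |w x| ^ 2 = w x * w x := by rw [sq_abs]; ring
      have hd2 : |deriv ψ x| ^ 2 = deriv ψ x * deriv ψ x := by rw [sq_abs]; ring
      have h3 : 2 * ε * (L * |w x| * |deriv ψ x|)
          ≤ L ^ 2 * (w x * w x) + ε ^ 2 * (deriv ψ x * deriv ψ x) := by nlinarith [hs]
      have hi : L ^ 2 / (2 * ε) * (w x * w x) + ε / 2 * (deriv ψ x * deriv ψ x)
          = (L ^ 2 * (w x * w x) + ε ^ 2 * (deriv ψ x * deriv ψ x)) / (2 * ε) := by
        field_simp
      rw [hi, le_div_iff₀ (by positivity : (0:ℝ) < 2 * ε)]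
      linarith [h3]
    linarith
  have hmono : (∫ x in (-1:ℝ)..1, |g x * deriv ψ x|)
      ≤ ∫ x in (-1:ℝ)..1, (L ^ 2 / (2 * ε) * (w x * w x) + ε / 2 * (deriv ψ x * deriv ψ x)) := by
    apply intervalIntegral.integral_mono_on (by norm_num)
      ((hgc.mul hψ'c).abs.intervalIntegrable _ _)
      (((continuous_const.mul (hw.mul hw)).add
        (continuous_const.mul (hψ'c.mul hψ'c))).intervalIntegrable _ _)
    exact hptw
  have hsplit : (∫ x in (-1:ℝ)..1, (L ^ 2 / (2 * ε) * (w x * w x) + ε / 2 * (deriv ψ x * deriv ψ x)))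
      = L ^ 2 / (2 * ε) * W + ε / 2 * A := by
    rw [integral_add (f := fun x => L ^ 2 / (2 * ε) * (w x * w x))
      (g := fun x => ε / 2 * (deriv ψ x * deriv ψ x))
      ((continuous_const.mul (hw.mul hw)).intervalIntegrable _ _)
      ((continuous_const.mul (hψ'c.mul hψ'c)).intervalIntegrable _ _),
      intervalIntegral.integral_const_mul, intervalIntegral.integral_const_mul]
  have hkey : ε * A + B ≤ L ^ 2 / (2 * ε) * W + ε / 2 * A := by
    have : -(∫ x in (-1:ℝ)..1, g x * deriv ψ x) ≤ |∫ x in (-1:ℝ)..1, g x * deriv ψ x| :=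
      neg_le_abs _
    calc ε * A + B = -(∫ x in (-1:ℝ)..1, g x * deriv ψ x) := by linarith [energy]
    _ ≤ |∫ x in (-1:ℝ)..1, g x * deriv ψ x| := this
    _ ≤ ∫ x in (-1:ℝ)..1, |g x * deriv ψ x| := habs
    _ ≤ L ^ 2 / (2 * ε) * W + ε / 2 * A := by rw [← hsplit]; exact hmono
  have hne : ε ≠ 0 := ne_of_gt hε
  constructor
  · have hann : 0 ≤ ε * A := mul_nonneg hε.le hAnn
    linarith [hkey]
  · have h1 : ε / 2 * A ≤ L ^ 2 / (2 * ε) * W := by linarith [hkey, hBnn]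
    have h1' : A ≤ (L ^ 2 / (2 * ε) * W) / (ε / 2) :=
      (le_div_iff₀ (by positivity : (0:ℝ) < ε / 2)).2 (by linarith [h1])
    have h2 : (L ^ 2 / (2 * ε) * W) / (ε / 2) = L ^ 2 / ε ^ 2 * W := by
      field_simp
    linarith [h1', h2.le, h2.ge]


lemma hasDerivAt_energy {w : ℝ → ℝ → ℝ}
    (hw : ContDiff ℝ (⊤ : ℕ∞) (fun q : ℝ × ℝ => w q.1 q.2)) (t : ℝ) :
    HasDerivAt (fun s => ∫ x in (-1:ℝ)..1, w s x * w s x)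
      (∫ x in (-1:ℝ)..1, 2 * w t x * deriv (fun s => w s x) t) t := by
  have hwc : Continuous (fun q : ℝ × ℝ => w q.1 q.2) := hw.continuous
  have hDtc : Continuous (fun q : ℝ × ℝ => deriv (fun s => w s q.2) q.1) :=
    (smooth_partial_t hw).continuous
  have hcx : ∀ s : ℝ, Continuous (fun x => w s x) := fun s =>
    hwc.comp (continuous_const.prodMk continuous_id)
  have hcF' : Continuous (fun x => 2 * w t x * deriv (fun s => w s x) t) := by
    have h1 : Continuous (fun x : ℝ => deriv (fun s => w s x) t) :=
      hDtc.comp (continuous_const.prodMk continuous_id)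
    exact (continuous_const.mul (hcx t)).mul h1
  -- bound on compact set
  obtain ⟨C, hC⟩ := (IsCompact.exists_bound_of_continuousOn
    ((isCompact_Icc (a := t - 1) (b := t + 1)).prod (isCompact_Icc (a := (-1:ℝ)) (b := 1)))
    (((continuous_const.mul hwc).mul hDtc).continuousOn))
  have key := intervalIntegral.hasDerivAt_integral_of_dominated_loc_of_deriv_le
    (F := fun s x => w s x * w s x)
    (F' := fun s x => 2 * w s x * deriv (fun s' => w s' x) s)
    (x₀ := t) (μ := volume) (a := (-1:ℝ)) (b := 1) (bound := fun _ => C) (s := Metric.ball t 1) (Metric.ball_mem_nhds t one_pos)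
    (Filter.Eventually.of_forall fun s => ((hcx s).mul (hcx s)).aestronglyMeasurable)
    (((hcx t).mul (hcx t)).intervalIntegrable _ _)
    hcF'.aestronglyMeasurable
    ?_ (intervalIntegrable_const) ?_
  · exact key.2
  · refine Filter.Eventually.of_forall fun x hx s hs => ?_
    have hxm : x ∈ Icc (-1:ℝ) 1 := by
      have : x ∈ Ioc (-1:ℝ) 1 := by simpa [Set.uIoc_of_le (by norm_num : (-1:ℝ) ≤ 1)] using hx
      exact ⟨this.1.le, this.2⟩
    have hsm : s ∈ Icc (t - 1) (t + 1) := by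
      have := Metric.mem_ball.1 hs
      rw [Real.dist_eq, abs_lt] at this
      constructor <;> linarith [this.1, this.2]
    exact hC (s, x) (Set.mk_mem_prod hsm hxm)
  · refine Filter.Eventually.of_forall fun x hx s hs => ?_
    have hd : HasDerivAt (fun s' => w s' x) (deriv (fun s' => w s' x) s) s :=
      ((smooth_slice_t hw x).differentiable (by simp) s).hasDerivAt
    have h : HasDerivAt (fun s' => w s' x * w s' x)
        (deriv (fun s' => w s' x) s * w s x + w s x * deriv (fun s' => w s' x) s) s := hd.mul hd
    exact h.congr_deriv (by ring)


lemma ptw_bound {a b c p q₁ q₂ z r L₂ M₁ M₂ M₃ : ℝ} (hr : 0 ≤ r)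
    (hM₂0 : 0 ≤ M₂) (hM₃0 : 0 ≤ M₃)
    (hp : |p| ≤ M₁) (hq₁ : |q₁| ≤ M₂) (hq₂ : |q₂| ≤ M₃) (hz : |z| ≤ L₂ * |a|) :
    |-(a * a * p) - 2 * a * (q₁ * b + q₂ * c) + 2 * r * a * z|
      ≤ (M₁ + M₂ + M₃ + 2 * r * L₂) * (a * a) + M₂ * (b * b) + M₃ * (c * c) := by
  have h1 : |-(a * a * p)| ≤ M₁ * (a * a) := by
    rw [abs_neg, abs_mul, abs_of_nonneg (mul_self_nonneg a)]
    nlinarith [mul_self_nonneg a, abs_nonneg p]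
  have h2 : |2 * a * (q₁ * b + q₂ * c)| ≤ M₂ * (a * a) + M₂ * (b * b) + M₃ * (a * a) + M₃ * (c * c) := by
    have e1 : |2 * a * (q₁ * b + q₂ * c)| ≤ 2 * |a| * (M₂ * |b| + M₃ * |c|) := by
      rw [abs_mul, abs_mul]
      have : |q₁ * b + q₂ * c| ≤ M₂ * |b| + M₃ * |c| := by
        calc |q₁ * b + q₂ * c| ≤ |q₁ * b| + |q₂ * c| := abs_add_le _ _
          _ = |q₁| * |b| + |q₂| * |c| := by rw [abs_mul, abs_mul]
          _ ≤ M₂ * |b| + M₃ * |c| := by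
              have := mul_le_mul_of_nonneg_right hq₁ (abs_nonneg b)
              have := mul_le_mul_of_nonneg_right hq₂ (abs_nonneg c)
              linarith
      have h2a : |2| * |a| = 2 * |a| := by norm_num
      rw [h2a]
      exact mul_le_mul_of_nonneg_left this (by positivity)
    have s1 : 2 * |a| * |b| ≤ a * a + b * b := by
      nlinarith [sq_nonneg (|a| - |b|), sq_abs a, sq_abs b]
    have s2 : 2 * |a| * |c| ≤ a * a + c * c := by
      nlinarith [sq_nonneg (|a| - |c|), sq_abs a, sq_abs c]
    have e3 : 2 * |a| * (M₂ * |b| + M₃ * |c|)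
        ≤ M₂ * (a * a) + M₂ * (b * b) + M₃ * (a * a) + M₃ * (c * c) := by
      have t1 := mul_le_mul_of_nonneg_left s1 hM₂0
      have t2 := mul_le_mul_of_nonneg_left s2 hM₃0
      nlinarith [t1, t2]
    linarith
  have h3 : |2 * r * a * z| ≤ 2 * r * L₂ * (a * a) := by
    rw [abs_mul]
    have e : |2 * r * a| = 2 * r * |a| := by
      rw [abs_mul, abs_of_nonneg (by linarith : (0:ℝ) ≤ 2 * r)]
    rw [e]
    calc 2 * r * |a| * |z| ≤ 2 * r * |a| * (L₂ * |a|) :=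
          mul_le_mul_of_nonneg_left hz (by positivity)
      _ = 2 * r * L₂ * (|a| * |a|) := by ring
      _ = 2 * r * L₂ * (a * a) := by rw [abs_mul_abs_self]
  calc |-(a * a * p) - 2 * a * (q₁ * b + q₂ * c) + 2 * r * a * z|
      ≤ |-(a * a * p) - 2 * a * (q₁ * b + q₂ * c)| + |2 * r * a * z| := abs_add_le _ _
    _ ≤ |-(a * a * p)| + |2 * a * (q₁ * b + q₂ * c)| + |2 * r * a * z| := by
        linarith [abs_sub (-(a * a * p)) (2 * a * (q₁ * b + q₂ * c))]
    _ ≤ (M₁ + M₂ + M₃ + 2 * r * L₂) * (a * a) + M₂ * (b * b) + M₃ * (c * c) := by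
        linarith [h1, h2, h3]

lemma Jbound {ε r : ℝ} {E : ℝ → ℝ} (hε : 0 < ε) (hr : 0 ≤ r) (hE : ContDiff ℝ 2 E)
    {u₁ φ₁ u₂ φ₂ dtu₁ dtu₂ : ℝ → ℝ}
    (hu₁ : ContDiff ℝ (⊤ : ℕ∞) u₁) (hφ₁ : ContDiff ℝ (⊤ : ℕ∞) φ₁)
    (hu₂ : ContDiff ℝ (⊤ : ℕ∞) u₂) (hφ₂ : ContDiff ℝ (⊤ : ℕ∞) φ₂)
    (hdt1 : Continuous dtu₁) (hdt2 : Continuous dtu₂)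
    {M₁ M₂ M₃ L L₂ : ℝ}
    (hM₁0 : 0 ≤ M₁) (hM₂0 : 0 ≤ M₂) (hM₃0 : 0 ≤ M₃) (hL0 : 0 ≤ L) (hL₂0 : 0 ≤ L₂)
    (hM₁ : ∀ x ∈ Icc (-1:ℝ) 1, |deriv φ₁ x| ≤ M₁)
    (hM₂ : ∀ x ∈ Icc (-1:ℝ) 1, |deriv u₂ x| ≤ M₂)
    (hM₃ : ∀ x ∈ Icc (-1:ℝ) 1, |u₂ x| ≤ M₃)
    (hgw : ∀ x ∈ Icc (-1:ℝ) 1, |E (u₁ x) - E (u₂ x)| ≤ L * |u₁ x - u₂ x|)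
    (hlip2 : ∀ x ∈ Icc (-1:ℝ) 1,
      |u₁ x * E (u₁ x) - u₂ x * E (u₂ x)| ≤ L₂ * |u₁ x - u₂ x|)
    (hb11 : φ₁ (-1) = 0) (hb12 : φ₁ 1 = 0) (hb21 : φ₂ (-1) = 0) (hb22 : φ₂ 1 = 0)
    (heq1 : ∀ x ∈ Icc (-1:ℝ) 1,
      dtu₁ x = -deriv (fun y => u₁ y * φ₁ y) x + r * u₁ x * E (u₁ x))
    (heq2 : ∀ x ∈ Icc (-1:ℝ) 1,
      dtu₂ x = -deriv (fun y => u₂ y * φ₂ y) x + r * u₂ x * E (u₂ x))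
    (heqp : ∀ x ∈ Icc (-1:ℝ) 1,
      -ε * deriv (deriv (fun y => φ₁ y - φ₂ y)) x + (φ₁ x - φ₂ x)
        = deriv (fun y => E (u₁ y) - E (u₂ y)) x) :
    |∫ x in (-1:ℝ)..1, 2 * (u₁ x - u₂ x) * (dtu₁ x - dtu₂ x)|
      ≤ ((M₁ + M₂ + M₃ + 2 * r * L₂) + M₂ * (L ^ 2 / (2 * ε)) + M₃ * (L ^ 2 / ε ^ 2))
        * ∫ x in (-1:ℝ)..1, (u₁ x - u₂ x) * (u₁ x - u₂ x) := by
  have huIcc : uIcc (-1:ℝ) 1 = Icc (-1:ℝ) 1 := uIcc_of_le (by norm_num)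
  -- basic smoothness
  have hws : ContDiff ℝ (⊤ : ℕ∞) (fun y => u₁ y - u₂ y) := hu₁.sub hu₂
  have hψs : ContDiff ℝ (⊤ : ℕ∞) (fun y => φ₁ y - φ₂ y) := hφ₁.sub hφ₂
  have hgs : ContDiff ℝ 2 (fun y => E (u₁ y) - E (u₂ y)) :=
    (hE.comp (hu₁.of_le (WithTop.coe_le_coe.2 le_top))).sub (hE.comp (hu₂.of_le (WithTop.coe_le_coe.2 le_top)))
  have hwc : Continuous (fun y => u₁ y - u₂ y) := hws.continuous
  have hψc : Continuous (fun y => φ₁ y - φ₂ y) := hψs.continuous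
  have hψ'c : Continuous (deriv (fun y => φ₁ y - φ₂ y)) :=
    (contDiff_infty_iff_deriv.1 (hψs.of_le (by simp))).2.continuous
  have hφ₁'c : Continuous (deriv φ₁) :=
    (contDiff_infty_iff_deriv.1 (hφ₁.of_le (by simp))).2.continuous
  have hu₂'c : Continuous (deriv u₂) :=
    (contDiff_infty_iff_deriv.1 (hu₂.of_le (by simp))).2.continuous
  have hu₁c : Continuous u₁ := hu₁.continuous
  have hu₂c : Continuous u₂ := hu₂.continuous
  have hEc : Continuous E := hE.continuous
  -- elliptic bounds
  obtain ⟨hB, hA⟩ := elliptic_bounds hε hL0 hψs hgs hwc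
    (by simp [hb11, hb21]) (by simp [hb12, hb22]) heqp hgw
  set W := ∫ x in (-1:ℝ)..1, (u₁ x - u₂ x) * (u₁ x - u₂ x) with hWdef
  have hWnn : 0 ≤ W := integral_nonneg (by norm_num) (fun x _ => mul_self_nonneg _)
  -- the J function
  set J : ℝ → ℝ := fun x =>
    -((u₁ x - u₂ x) * (u₁ x - u₂ x) * deriv φ₁ x)
    - 2 * (u₁ x - u₂ x) * (deriv u₂ x * (φ₁ x - φ₂ x)
        + u₂ x * deriv (fun y => φ₁ y - φ₂ y) x)
    + 2 * r * (u₁ x - u₂ x) * (u₁ x * E (u₁ x) - u₂ x * E (u₂ x)) with hJdef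
  have hJc : Continuous J := by
    apply Continuous.add
    apply Continuous.sub
    · exact ((hwc.mul hwc).mul hφ₁'c).neg
    · exact (continuous_const.mul hwc).mul
        ((hu₂'c.mul hψc).add (hu₂c.mul hψ'c))
    · exact ((continuous_const.mul hwc)).mul
        ((hu₁c.mul (hEc.comp hu₁c)).sub (hu₂c.mul (hEc.comp hu₂c)))
  -- pointwise identity
  have key : ∀ x ∈ Icc (-1:ℝ) 1,
      2 * (u₁ x - u₂ x) * (dtu₁ x - dtu₂ x)
        = -(deriv (fun y => (u₁ y - u₂ y) * (u₁ y - u₂ y) * φ₁ y) x) + J x := by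
    intro x hx
    have hd1 : HasDerivAt u₁ (deriv u₁ x) x :=
      ((hu₁.differentiable (by simp)) x).hasDerivAt
    have hd2 : HasDerivAt u₂ (deriv u₂ x) x :=
      ((hu₂.differentiable (by simp)) x).hasDerivAt
    have hd3 : HasDerivAt φ₁ (deriv φ₁ x) x :=
      ((hφ₁.differentiable (by simp)) x).hasDerivAt
    have hd4 : HasDerivAt φ₂ (deriv φ₂ x) x :=
      ((hφ₂.differentiable (by simp)) x).hasDerivAt
    have hdw : HasDerivAt (fun y => u₁ y - u₂ y) (deriv u₁ x - deriv u₂ x) x := hd1.sub hd2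
    have e6 : deriv (fun y => (u₁ y - u₂ y) * (u₁ y - u₂ y) * φ₁ y) x
        = ((deriv u₁ x - deriv u₂ x) * (u₁ x - u₂ x)
            + (u₁ x - u₂ x) * (deriv u₁ x - deriv u₂ x)) * φ₁ x
          + (u₁ x - u₂ x) * (u₁ x - u₂ x) * deriv φ₁ x := ((hdw.mul hdw).mul hd3).deriv
    have eψ : deriv (fun y => φ₁ y - φ₂ y) x = deriv φ₁ x - deriv φ₂ x := (hd3.sub hd4).deriv
    have e3 : deriv (fun y => u₁ y * φ₁ y) x = deriv u₁ x * φ₁ x + u₁ x * deriv φ₁ x :=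
      (hd1.mul hd3).deriv
    have e4 : deriv (fun y => u₂ y * φ₂ y) x = deriv u₂ x * φ₂ x + u₂ x * deriv φ₂ x :=
      (hd2.mul hd4).deriv
    rw [hJdef]
    simp only
    rw [heq1 x hx, heq2 x hx, e3, e4, e6, eψ]
    ring
  -- FTC: the exact-derivative part integrates to zero
  have hPs : ContDiff ℝ (⊤:ℕ∞) (fun y => (u₁ y - u₂ y) * (u₁ y - u₂ y) * φ₁ y) :=
    ((hws.mul hws).mul hφ₁).of_le (by simp)
  have hFTC : (∫ x in (-1:ℝ)..1,
      deriv (fun y => (u₁ y - u₂ y) * (u₁ y - u₂ y) * φ₁ y) x) = 0 := by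
    rw [integral_deriv_eq_sub
      (fun x _ => (hPs.differentiable (by simp)).differentiableAt)
      (((contDiff_infty_iff_deriv.1 hPs).2.continuous).intervalIntegrable _ _)]
    simp [hb11, hb12]
  -- rewrite the integral
  have hPc : Continuous (deriv (fun y => (u₁ y - u₂ y) * (u₁ y - u₂ y) * φ₁ y)) :=
    (contDiff_infty_iff_deriv.1 hPs).2.continuous
  have hsplit : (∫ x in (-1:ℝ)..1, 2 * (u₁ x - u₂ x) * (dtu₁ x - dtu₂ x))
      = ∫ x in (-1:ℝ)..1, J x := by
    rw [integral_congr (g := fun x =>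
        -(deriv (fun y => (u₁ y - u₂ y) * (u₁ y - u₂ y) * φ₁ y) x) + J x)
      (fun x hx => key x (huIcc ▸ hx))]
    rw [integral_add (f := fun x => -(deriv (fun y => (u₁ y - u₂ y) * (u₁ y - u₂ y) * φ₁ y) x))
      (g := fun x => J x) (hPc.neg.intervalIntegrable _ _) (hJc.intervalIntegrable _ _),
      intervalIntegral.integral_neg, hFTC]
    ring
  -- pointwise bound for J
  have hJb : ∀ x ∈ Icc (-1:ℝ) 1,
      |J x| ≤ (M₁ + M₂ + M₃ + 2 * r * L₂) * ((u₁ x - u₂ x) * (u₁ x - u₂ x))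
        + M₂ * ((φ₁ x - φ₂ x) * (φ₁ x - φ₂ x))
        + M₃ * (deriv (fun y => φ₁ y - φ₂ y) x * deriv (fun y => φ₁ y - φ₂ y) x) := by
    intro x hx
    rw [hJdef]
    exact ptw_bound hr hM₂0 hM₃0 (hM₁ x hx) (hM₂ x hx) (hM₃ x hx) (hlip2 x hx)
  -- integrate the bound
  have hintJ : |∫ x in (-1:ℝ)..1, J x| ≤ (M₁ + M₂ + M₃ + 2 * r * L₂) * W
      + M₂ * (∫ x in (-1:ℝ)..1, (φ₁ x - φ₂ x) * (φ₁ x - φ₂ x))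
      + M₃ * (∫ x in (-1:ℝ)..1,
          deriv (fun y => φ₁ y - φ₂ y) x * deriv (fun y => φ₁ y - φ₂ y) x) := by
    calc |∫ x in (-1:ℝ)..1, J x| ≤ ∫ x in (-1:ℝ)..1, |J x| :=
          intervalIntegral.abs_integral_le_integral_abs (by norm_num)
      _ ≤ ∫ x in (-1:ℝ)..1, ((M₁ + M₂ + M₃ + 2 * r * L₂) * ((u₁ x - u₂ x) * (u₁ x - u₂ x))
          + M₂ * ((φ₁ x - φ₂ x) * (φ₁ x - φ₂ x))
          + M₃ * (deriv (fun y => φ₁ y - φ₂ y) x * deriv (fun y => φ₁ y - φ₂ y) x)) := by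
            apply intervalIntegral.integral_mono_on (by norm_num)
              (hJc.abs.intervalIntegrable _ _)
              ((((continuous_const.mul (hwc.mul hwc)).add
                (continuous_const.mul (hψc.mul hψc))).add
                (continuous_const.mul (hψ'c.mul hψ'c))).intervalIntegrable _ _)
            exact hJb
      _ = (M₁ + M₂ + M₃ + 2 * r * L₂) * W
          + M₂ * (∫ x in (-1:ℝ)..1, (φ₁ x - φ₂ x) * (φ₁ x - φ₂ x))
          + M₃ * (∫ x in (-1:ℝ)..1,
            deriv (fun y => φ₁ y - φ₂ y) x * deriv (fun y => φ₁ y - φ₂ y) x) := by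
            have i1 : IntervalIntegrable
                (fun x => (M₁ + M₂ + M₃ + 2 * r * L₂) * ((u₁ x - u₂ x) * (u₁ x - u₂ x)))
                volume (-1) 1 := (continuous_const.mul (hwc.mul hwc)).intervalIntegrable _ _
            have i2 : IntervalIntegrable
                (fun x => M₂ * ((φ₁ x - φ₂ x) * (φ₁ x - φ₂ x))) volume (-1) 1 :=
              (continuous_const.mul (hψc.mul hψc)).intervalIntegrable _ _
            have i3 : IntervalIntegrable
                (fun x => M₃ * (deriv (fun y => φ₁ y - φ₂ y) x * deriv (fun y => φ₁ y - φ₂ y) x))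
                volume (-1) 1 := (continuous_const.mul (hψ'c.mul hψ'c)).intervalIntegrable _ _
            rw [intervalIntegral.integral_add (i1.add i2) i3,
              intervalIntegral.integral_add i1 i2,
              intervalIntegral.integral_const_mul, intervalIntegral.integral_const_mul,
              intervalIntegral.integral_const_mul]
  rw [hsplit]
  calc |∫ x in (-1:ℝ)..1, J x|
      ≤ (M₁ + M₂ + M₃ + 2 * r * L₂) * W
        + M₂ * (∫ x in (-1:ℝ)..1, (φ₁ x - φ₂ x) * (φ₁ x - φ₂ x))
        + M₃ * (∫ x in (-1:ℝ)..1,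
            deriv (fun y => φ₁ y - φ₂ y) x * deriv (fun y => φ₁ y - φ₂ y) x) := hintJ
    _ ≤ (M₁ + M₂ + M₃ + 2 * r * L₂) * W + M₂ * (L ^ 2 / (2 * ε) * W)
        + M₃ * (L ^ 2 / ε ^ 2 * W) := by
          have t1 := mul_le_mul_of_nonneg_left hB hM₂0
          have t2 := mul_le_mul_of_nonneg_left hA hM₃0
          linarith
    _ = ((M₁ + M₂ + M₃ + 2 * r * L₂) + M₂ * (L ^ 2 / (2 * ε)) + M₃ * (L ^ 2 / ε ^ 2)) * W := by
          ring


lemma phi_eq_transform {ε : ℝ} {E u₁ φ₁ u₂ φ₂ : ℝ → ℝ} (hE : ContDiff ℝ 2 E)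
    (hu₁ : ContDiff ℝ (⊤ : ℕ∞) u₁) (hφ₁ : ContDiff ℝ (⊤ : ℕ∞) φ₁)
    (hu₂ : ContDiff ℝ (⊤ : ℕ∞) u₂) (hφ₂ : ContDiff ℝ (⊤ : ℕ∞) φ₂)
    (h1 : ∀ x ∈ Icc (-1:ℝ) 1,
      -ε * deriv (deriv φ₁) x + φ₁ x = deriv E (u₁ x) * deriv u₁ x)
    (h2 : ∀ x ∈ Icc (-1:ℝ) 1,
      -ε * deriv (deriv φ₂) x + φ₂ x = deriv E (u₂ x) * deriv u₂ x) :
    ∀ x ∈ Icc (-1:ℝ) 1,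
      -ε * deriv (deriv (fun y => φ₁ y - φ₂ y)) x + (φ₁ x - φ₂ x)
        = deriv (fun y => E (u₁ y) - E (u₂ y)) x := by
  intro x hx
  have d1 : Differentiable ℝ φ₁ := hφ₁.differentiable (by simp)
  have d2 : Differentiable ℝ φ₂ := hφ₂.differentiable (by simp)
  have d1' : Differentiable ℝ (deriv φ₁) :=
    (contDiff_infty_iff_deriv.1 (hφ₁.of_le (by simp))).2.differentiable (by simp)
  have d2' : Differentiable ℝ (deriv φ₂) :=
    (contDiff_infty_iff_deriv.1 (hφ₂.of_le (by simp))).2.differentiable (by simp)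
  have e1 : deriv (fun y => φ₁ y - φ₂ y) = fun y => deriv φ₁ y - deriv φ₂ y :=
    funext fun y => deriv_sub (d1 y) (d2 y)
  have e2 : deriv (deriv (fun y => φ₁ y - φ₂ y)) x
      = deriv (deriv φ₁) x - deriv (deriv φ₂) x := by
    rw [e1]; exact deriv_sub (d1' x) (d2' x)
  have hEd1 : HasDerivAt E (deriv E (u₁ x)) (u₁ x) :=
    ((hE.differentiable two_ne_zero) (u₁ x)).hasDerivAt
  have hEd2 : HasDerivAt E (deriv E (u₂ x)) (u₂ x) :=
    ((hE.differentiable two_ne_zero) (u₂ x)).hasDerivAt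
  have hud1 : HasDerivAt u₁ (deriv u₁ x) x := ((hu₁.differentiable (by simp)) x).hasDerivAt
  have hud2 : HasDerivAt u₂ (deriv u₂ x) x := ((hu₂.differentiable (by simp)) x).hasDerivAt
  have hc1 : HasDerivAt (fun y => E (u₁ y)) (deriv E (u₁ x) * deriv u₁ x) x :=
    hEd1.comp x hud1
  have hc2 : HasDerivAt (fun y => E (u₂ y)) (deriv E (u₂ x) * deriv u₂ x) x :=
    hEd2.comp x hud2
  have e3 : deriv (fun y => E (u₁ y) - E (u₂ y)) x
      = deriv E (u₁ x) * deriv u₁ x - deriv E (u₂ x) * deriv u₂ x := (hc1.sub hc2).deriv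
  rw [e2, e3]
  linarith [h1 x hx, h2 x hx]


end TransportAux


open Set MeasureTheory

/-- A classical solution of the transport system with reproduction rate `E`:
`∂ₜu = −∂ₓ(u φ) + r u E(u)`, `−ε ∂ₓ²φ + φ = E′(u) ∂ₓu`,
Dirichlet b.c. for `φ`, initial datum `u₀`. -/
structure IsTransportSol (T ε r : ℝ) (E : ℝ → ℝ) (u₀ : ℝ → ℝ) (u φ : ℝ → ℝ → ℝ) : Prop where
  smooth_u : ContDiff ℝ (⊤ : ℕ∞) (fun q : ℝ × ℝ => u q.1 q.2)
  smooth_phi : ContDiff ℝ (⊤ : ℕ∞) (fun q : ℝ × ℝ => φ q.1 q.2)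
  eq_u : ∀ t ∈ Set.Icc (0:ℝ) T, ∀ x ∈ Set.Icc (-1:ℝ) 1,
    deriv (fun s => u s x) t =
      -deriv (fun y => u t y * φ t y) x + r * u t x * E (u t x)
  eq_phi : ∀ t ∈ Set.Icc (0:ℝ) T, ∀ x ∈ Set.Icc (-1:ℝ) 1,
    -ε * deriv (deriv (φ t)) x + φ t x = deriv E (u t x) * deriv (u t) x
  bc_phi : ∀ t ∈ Set.Icc (0:ℝ) T, φ t (-1) = 0 ∧ φ t 1 = 0
  init : ∀ x ∈ Set.Icc (-1:ℝ) 1, u 0 x = u₀ x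

theorem uniqueness_transport (T ε r : ℝ) (E : ℝ → ℝ) (u₀ : ℝ → ℝ)
    (hT : 0 < T) (hε : 0 < ε) (hr : 0 ≤ r) (hE : ContDiff ℝ 2 E)
    (hu₀ : ContDiff ℝ (⊤ : ℕ∞) u₀) (hu₀nonneg : ∀ x ∈ Set.Icc (-1:ℝ) 1, 0 ≤ u₀ x)
    (u₁ φ₁ u₂ φ₂ : ℝ → ℝ → ℝ)
    (h₁ : IsTransportSol T ε r E u₀ u₁ φ₁)
    (h₂ : IsTransportSol T ε r E u₀ u₂ φ₂) :
    ∀ t ∈ Set.Icc (0:ℝ) T, ∀ x ∈ Set.Icc (-1:ℝ) 1,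
      u₁ t x = u₂ t x ∧ φ₁ t x = φ₂ t x := by
  have huIcc : uIcc (-1:ℝ) 1 = Icc (-1:ℝ) 1 := uIcc_of_le (by norm_num)
  have hS1 := h₁.smooth_u
  have hS2 := h₂.smooth_u
  have hP1 := h₁.smooth_phi
  have hP2 := h₂.smooth_phi
  -- compactness constants
  have hKcomp : IsCompact ((Icc (0:ℝ) T) ×ˢ (Icc (-1:ℝ) 1)) :=
    isCompact_Icc.prod isCompact_Icc
  have hKne : ((0:ℝ), (0:ℝ)) ∈ (Icc (0:ℝ) T) ×ˢ (Icc (-1:ℝ) 1) :=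
    Set.mem_prod.2 ⟨⟨le_refl 0, hT.le⟩, by norm_num⟩
  obtain ⟨M₁, hM₁b⟩ := hKcomp.exists_bound_of_continuousOn
    ((smooth_partial_x hP1).continuous.continuousOn)
  obtain ⟨M₂, hM₂b⟩ := hKcomp.exists_bound_of_continuousOn
    ((smooth_partial_x hS2).continuous.continuousOn)
  obtain ⟨M₃, hM₃b⟩ := hKcomp.exists_bound_of_continuousOn (hS2.continuous.continuousOn)
  obtain ⟨R₁, hR₁b⟩ := hKcomp.exists_bound_of_continuousOn (hS1.continuous.continuousOn)
  obtain ⟨R₂, hR₂b⟩ := hKcomp.exists_bound_of_continuousOn (hS2.continuous.continuousOn)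
  have hM₁0 : 0 ≤ M₁ := le_trans (norm_nonneg _) (hM₁b _ hKne)
  have hM₂0 : 0 ≤ M₂ := le_trans (norm_nonneg _) (hM₂b _ hKne)
  have hM₃0 : 0 ≤ M₃ := le_trans (norm_nonneg _) (hM₃b _ hKne)
  set R : ℝ := max R₁ R₂ with hRdef
  have hR0 : 0 ≤ R := le_trans (norm_nonneg _) (le_trans (hR₁b _ hKne) (le_max_left _ _))
  have hmem1 : ∀ t ∈ Icc (0:ℝ) T, ∀ x ∈ Icc (-1:ℝ) 1, u₁ t x ∈ Icc (-R) R := by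
    intro t ht x hx
    have := hR₁b (t, x) (Set.mem_prod.2 ⟨ht, hx⟩)
    rw [Real.norm_eq_abs] at this
    have h' := abs_le.1 (le_trans this (le_max_left R₁ R₂))
    exact ⟨h'.1, h'.2⟩
  have hmem2 : ∀ t ∈ Icc (0:ℝ) T, ∀ x ∈ Icc (-1:ℝ) 1, u₂ t x ∈ Icc (-R) R := by
    intro t ht x hx
    have := hR₂b (t, x) (Set.mem_prod.2 ⟨ht, hx⟩)
    rw [Real.norm_eq_abs] at this
    have h' := abs_le.1 (le_trans this (le_max_right R₁ R₂))
    exact ⟨h'.1, h'.2⟩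
  obtain ⟨L, hLb⟩ := (isCompact_Icc (a := -R) (b := R)).exists_bound_of_continuousOn
    ((hE.continuous_deriv one_le_two).continuousOn)
  have hfE : ContDiff ℝ 2 (fun s : ℝ => s * E s) := contDiff_id.mul hE
  obtain ⟨L₂, hL₂b⟩ := (isCompact_Icc (a := -R) (b := R)).exists_bound_of_continuousOn
    ((hfE.continuous_deriv one_le_two).continuousOn)
  have h0mem : (0:ℝ) ∈ Icc (-R) R := ⟨by linarith, hR0⟩
  have hL0 : 0 ≤ L := le_trans (norm_nonneg _) (hLb 0 h0mem)
  have hL₂0 : 0 ≤ L₂ := le_trans (norm_nonneg _) (hL₂b 0 h0mem)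
  -- Lipschitz estimates
  have hgw : ∀ t ∈ Icc (0:ℝ) T, ∀ x ∈ Icc (-1:ℝ) 1,
      |E (u₁ t x) - E (u₂ t x)| ≤ L * |u₁ t x - u₂ t x| := by
    intro t ht x hx
    exact lip_of_deriv_bound (hE.of_le one_le_two)
      (fun y hy => by simpa [Real.norm_eq_abs] using hLb y hy)
      (u₁ t x) (hmem1 t ht x hx) (u₂ t x) (hmem2 t ht x hx)
  have hlip2 : ∀ t ∈ Icc (0:ℝ) T, ∀ x ∈ Icc (-1:ℝ) 1,
      |u₁ t x * E (u₁ t x) - u₂ t x * E (u₂ t x)| ≤ L₂ * |u₁ t x - u₂ t x| := by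
    intro t ht x hx
    have := lip_of_deriv_bound (hfE.of_le one_le_two)
      (fun y hy => by simpa [Real.norm_eq_abs] using hL₂b y hy)
      (u₁ t x) (hmem1 t ht x hx) (u₂ t x) (hmem2 t ht x hx)
    simpa using this
  -- slices
  have hu1t : ∀ t, ContDiff ℝ (⊤ : ℕ∞) (u₁ t) := fun t => smooth_slice_x hS1 t
  have hu2t : ∀ t, ContDiff ℝ (⊤ : ℕ∞) (u₂ t) := fun t => smooth_slice_x hS2 t
  have hp1t : ∀ t, ContDiff ℝ (⊤ : ℕ∞) (φ₁ t) := fun t => smooth_slice_x hP1 t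
  have hp2t : ∀ t, ContDiff ℝ (⊤ : ℕ∞) (φ₂ t) := fun t => smooth_slice_x hP2 t
  have heqp : ∀ t ∈ Icc (0:ℝ) T, ∀ x ∈ Icc (-1:ℝ) 1,
      -ε * deriv (deriv (fun y => φ₁ t y - φ₂ t y)) x + (φ₁ t x - φ₂ t x)
        = deriv (fun y => E (u₁ t y) - E (u₂ t y)) x := fun t ht =>
    phi_eq_transform hE (hu1t t) (hp1t t) (hu2t t) (hp2t t)
      (h₁.eq_phi t ht) (h₂.eq_phi t ht)
  -- energy function and its derivative
  set KG : ℝ := (M₁ + M₂ + M₃ + 2 * r * L₂) + M₂ * (L ^ 2 / (2 * ε)) + M₃ * (L ^ 2 / ε ^ 2)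
    with hKGdef
  set G : ℝ → ℝ := fun s => ∫ x in (-1:ℝ)..1, (u₁ s x - u₂ s x) * (u₁ s x - u₂ s x) with hGdef
  have hwsmooth : ContDiff ℝ (⊤ : ℕ∞) (fun q : ℝ × ℝ => u₁ q.1 q.2 - u₂ q.1 q.2) := hS1.sub hS2
  have hG' : ∀ s, HasDerivAt G
      (∫ x in (-1:ℝ)..1, 2 * (u₁ s x - u₂ s x) * deriv (fun σ => u₁ σ x - u₂ σ x) s) s :=
    fun s => hasDerivAt_energy (w := fun σ y => u₁ σ y - u₂ σ y) hwsmooth s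
  have hGcont : Continuous G :=
    continuous_iff_continuousAt.2 fun s => (hG' s).differentiableAt.continuousAt
  have hGnonneg : ∀ s, 0 ≤ G s :=
    fun s => integral_nonneg (by norm_num) (fun x _ => mul_self_nonneg _)
  have hG0 : G 0 = 0 := by
    rw [hGdef]
    simp only
    rw [intervalIntegral.integral_congr (g := fun _ => (0:ℝ)) (fun x hx => by
      rw [huIcc] at hx
      rw [h₁.init x hx, h₂.init x hx]; ring)]
    simp
  -- the Grönwall bound hypothesis
  have hbound : ∀ s ∈ Ico (0:ℝ) T,
      ‖∫ x in (-1:ℝ)..1, 2 * (u₁ s x - u₂ s x) * deriv (fun σ => u₁ σ x - u₂ σ x) s‖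
        ≤ KG * ‖G s‖ + 0 := by
    intro s hs
    have hsI : s ∈ Icc (0:ℝ) T := Ico_subset_Icc_self hs
    have hd1x : ∀ x : ℝ, DifferentiableAt ℝ (fun σ => u₁ σ x) s :=
      fun x => ((smooth_slice_t hS1 x).differentiable (by simp) s)
    have hd2x : ∀ x : ℝ, DifferentiableAt ℝ (fun σ => u₂ σ x) s :=
      fun x => ((smooth_slice_t hS2 x).differentiable (by simp) s)
    have hDeq : (∫ x in (-1:ℝ)..1, 2 * (u₁ s x - u₂ s x) * deriv (fun σ => u₁ σ x - u₂ σ x) s)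
        = ∫ x in (-1:ℝ)..1, 2 * (u₁ s x - u₂ s x)
            * (deriv (fun σ => u₁ σ x) s - deriv (fun σ => u₂ σ x) s) :=
      intervalIntegral.integral_congr (fun x _ => by rw [deriv_fun_sub (hd1x x) (hd2x x)])
    rw [Real.norm_eq_abs, Real.norm_eq_abs, abs_of_nonneg (hGnonneg s), hDeq, add_zero]
    have hdt1c : Continuous (fun x => deriv (fun σ => u₁ σ x) s) :=
      (smooth_partial_t hS1).continuous.comp (continuous_const.prodMk continuous_id)
    have hdt2c : Continuous (fun x => deriv (fun σ => u₂ σ x) s) :=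
      (smooth_partial_t hS2).continuous.comp (continuous_const.prodMk continuous_id)
    have hJ := Jbound (E := E) hε hr hE (hu1t s) (hp1t s) (hu2t s) (hp2t s) hdt1c hdt2c
      hM₁0 hM₂0 hM₃0 hL0 hL₂0
      (fun x hx => by
        have := hM₁b (s, x) (Set.mem_prod.2 ⟨hsI, hx⟩)
        rwa [Real.norm_eq_abs] at this)
      (fun x hx => by
        have := hM₂b (s, x) (Set.mem_prod.2 ⟨hsI, hx⟩)
        rwa [Real.norm_eq_abs] at this)
      (fun x hx => by
        have := hM₃b (s, x) (Set.mem_prod.2 ⟨hsI, hx⟩)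
        rwa [Real.norm_eq_abs] at this)
      (fun x hx => hgw s hsI x hx)
      (fun x hx => hlip2 s hsI x hx)
      (h₁.bc_phi s hsI).1 (h₁.bc_phi s hsI).2 (h₂.bc_phi s hsI).1 (h₂.bc_phi s hsI).2
      (h₁.eq_u s hsI) (h₂.eq_u s hsI) (heqp s hsI)
    exact hJ
  have hGr := norm_le_gronwallBound_of_norm_deriv_right_le (a := 0) (b := T)
    (f := G) (δ := 0) (K := KG) (ε := 0)
    hGcont.continuousOn (fun s _ => (hG' s).hasDerivWithinAt)
    (by rw [Real.norm_eq_abs, hG0]; simp) hbound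
  have hGz : ∀ t ∈ Icc (0:ℝ) T, G t = 0 := by
    intro t ht
    have h := hGr t ht
    rw [gronwallBound_ε0_δ0, Real.norm_eq_abs] at h
    exact abs_eq_zero.1 (le_antisymm h (abs_nonneg _))
  -- u uniqueness
  have hueq : ∀ t ∈ Icc (0:ℝ) T, ∀ x ∈ Icc (-1:ℝ) 1, u₁ t x = u₂ t x := by
    intro t ht x hx
    have hc : Continuous (fun y => (u₁ t y - u₂ t y) * (u₁ t y - u₂ t y)) :=
      (((hu1t t).continuous.sub (hu2t t).continuous)).mul
        (((hu1t t).continuous.sub (hu2t t).continuous))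
    have hz := eq_zero_of_integral_zero hc (fun y _ => mul_self_nonneg _) (hGz t ht) x hx
    have := mul_self_eq_zero.1 hz
    linarith [this]
  -- φ uniqueness
  intro t ht x hx
  refine ⟨hueq t ht x hx, ?_⟩
  have hψs : ContDiff ℝ (⊤ : ℕ∞) (fun y => φ₁ t y - φ₂ t y) := (hp1t t).sub (hp2t t)
  have hgs : ContDiff ℝ 2 (fun y => E (u₁ t y) - E (u₂ t y)) :=
    (hE.comp ((hu1t t).of_le (WithTop.coe_le_coe.2 le_top))).sub (hE.comp ((hu2t t).of_le (WithTop.coe_le_coe.2 le_top)))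
  have hwc : Continuous (fun y => u₁ t y - u₂ t y) :=
    (hu1t t).continuous.sub (hu2t t).continuous
  obtain ⟨hB, -⟩ := elliptic_bounds hε hL0 hψs hgs hwc
    (by simp [(h₁.bc_phi t ht).1, (h₂.bc_phi t ht).1])
    (by simp [(h₁.bc_phi t ht).2, (h₂.bc_phi t ht).2])
    (heqp t ht) (fun y hy => hgw t ht y hy)
  have hBz : (∫ y in (-1:ℝ)..1, (φ₁ t y - φ₂ t y) * (φ₁ t y - φ₂ t y)) = 0 := by
    have h1 : (∫ y in (-1:ℝ)..1, (u₁ t y - u₂ t y) * (u₁ t y - u₂ t y)) = 0 := hGz t ht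
    have h2 : (0:ℝ) ≤ ∫ y in (-1:ℝ)..1, (φ₁ t y - φ₂ t y) * (φ₁ t y - φ₂ t y) :=
      integral_nonneg (by norm_num) (fun y _ => mul_self_nonneg _)
    have h3 := hB
    rw [h1] at h3
    simp at h3
    linarith
  have hψc : Continuous (fun y => φ₁ t y - φ₂ t y) :=
    (hp1t t).continuous.sub (hp2t t).continuous
  have hz := eq_zero_of_integral_zero (hψc.mul hψc) (fun y _ => mul_self_nonneg _) hBz x hx
  have := mul_self_eq_zero.1 hz
  linarith [this]
end

section
/- Let ε > 0, let f : [-1,1] → ℝ be continuously differentiable, and let φ : [-1,1] → ℝ be twice continuously differentiable with φ(−1) = φ(1) = 0 and −ε φ″(x) + φ(x) = f′(x) for all x∈[-1,1]. Then for every x∈[-1,1]: φ′(x) = (1/(2ε)) ∫_{-1}^1 ( ∫_y^x φ(z) dz ) dy − (1/ε) f(x) + (1/(2ε)) ∫_{-1}^1 f(y) dy. -/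
open Set MeasureTheory

/-!
Integrating `ε φ'' = φ - f'` from `y` to `x` gives
`ε (φ'(x) - φ'(y)) = ∫_y^x φ - (f(x) - f(y))`. Integrating this once more in `y` over `[-1, 1]`,
the term `∫_{-1}^1 φ'` equals `φ(1) - φ(-1) = 0`, which leaves `2 ε φ'(x)` on the left.
-/

theorem integral_deriv_eq_sub_of_contDiff_one {g : ℝ → ℝ} (hg : ContDiff ℝ 1 g) (a b : ℝ) :
    ∫ z in a..b, deriv g z = g b - g a :=
  intervalIntegral.integral_deriv_eq_sub (fun z _ => hg.differentiable one_ne_zero z)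
    ((hg.continuous_deriv le_rfl).intervalIntegrable a b)

theorem continuous_integral_lower {φ : ℝ → ℝ} (hφ : Continuous φ) (x : ℝ) :
    Continuous fun y => ∫ z in y..x, φ z := by
  simp only [intervalIntegral.integral_symm x]
  exact (intervalIntegral.continuous_primitive (fun a b => hφ.intervalIntegrable a b) x).neg

section SecondOrderODE

variable {ε a b : ℝ} {f φ : ℝ → ℝ}

theorem mul_deriv_sub_deriv_eq_of_ode (hf : ContDiff ℝ 1 f) (hφ : ContDiff ℝ 2 φ)
    (heq : ∀ x ∈ Icc a b, -ε * deriv (deriv φ) x + φ x = deriv f x)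
    {x y : ℝ} (hx : x ∈ Icc a b) (hy : y ∈ Icc a b) :
    ε * (deriv φ x - deriv φ y) = (∫ z in y..x, φ z) - (f x - f y) := by
  have hφ' : ContDiff ℝ 1 (deriv φ) := ((contDiff_succ_iff_deriv (n := 1)).mp hφ).2.2
  calc ε * (deriv φ x - deriv φ y) = ∫ z in y..x, ε * deriv (deriv φ) z := by
        rw [intervalIntegral.integral_const_mul, integral_deriv_eq_sub_of_contDiff_one hφ']
    _ = ∫ z in y..x, (φ z - deriv f z) := intervalIntegral.integral_congr fun z hz => by
        have := heq z (uIcc_subset_Icc hy hx hz)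
        linarith
    _ = (∫ z in y..x, φ z) - (f x - f y) := by
        rw [intervalIntegral.integral_sub (hφ.continuous.intervalIntegrable _ _)
          ((hf.continuous_deriv le_rfl).intervalIntegrable _ _),
          integral_deriv_eq_sub_of_contDiff_one hf]

theorem mul_deriv_eq_of_ode_averaged (hf : ContDiff ℝ 1 f) (hφ : ContDiff ℝ 2 φ)
    (heq : ∀ x ∈ Icc a b, -ε * deriv (deriv φ) x + φ x = deriv f x)
    {x : ℝ} (hx : x ∈ Icc a b) :
    ε * ((b - a) * deriv φ x - (φ b - φ a)) =
      (∫ y in a..b, ∫ z in y..x, φ z) - (b - a) * f x + ∫ y in a..b, f y := by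
  have hφ1 : ContDiff ℝ 1 φ := hφ.of_le (by norm_num)
  have hpointwise : ∫ y in a..b, ε * (deriv φ x - deriv φ y) =
      ∫ y in a..b, ((∫ z in y..x, φ z) - (f x - f y)) :=
    intervalIntegral.integral_congr fun y hy =>
      mul_deriv_sub_deriv_eq_of_ode hf hφ heq hx (by rwa [uIcc_of_le (hx.1.trans hx.2)] at hy)
  rw [intervalIntegral.integral_const_mul, intervalIntegral.integral_sub intervalIntegrable_const
      ((hφ1.continuous_deriv le_rfl).intervalIntegrable _ _),
    integral_deriv_eq_sub_of_contDiff_one hφ1,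
    intervalIntegral.integral_sub (g := fun y => f x - f y)
      ((continuous_integral_lower hφ.continuous x).intervalIntegrable _ _)
      ((continuous_const.sub hf.continuous).intervalIntegrable _ _),
    intervalIntegral.integral_sub intervalIntegrable_const (hf.continuous.intervalIntegrable _ _),
    intervalIntegral.integral_const, intervalIntegral.integral_const, smul_eq_mul,
    smul_eq_mul] at hpointwise
  linear_combination hpointwise

end SecondOrderODE

theorem phi_deriv_representation (ε : ℝ) (hε : 0 < ε) (f φ : ℝ → ℝ)
    (hf : ContDiff ℝ 1 f) (hφ : ContDiff ℝ 2 φ)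
    (hbc : φ (-1) = 0 ∧ φ 1 = 0)
    (heq : ∀ x ∈ Set.Icc (-1:ℝ) 1, -ε * deriv (deriv φ) x + φ x = deriv f x) :
    ∀ x ∈ Set.Icc (-1:ℝ) 1,
      deriv φ x = (1 / (2 * ε)) * (∫ y in (-1:ℝ)..1, ∫ z in y..x, φ z)
        - (1 / ε) * f x + (1 / (2 * ε)) * ∫ y in (-1:ℝ)..1, f y := by
  intro x hx
  have h := mul_deriv_eq_of_ode_averaged hf hφ heq hx
  rw [hbc.1, hbc.2] at h
  field_simp
  linear_combination h
end

section
/- There exists a constant C₇ > 0, depending only on T, ε, r and u₀ (but not on δ), such that for every δ∈(0,1) and every classical solution (u,φ) of the monostable system with diffusion δ satisfying in addition u(t,x) > 0 for all (t,x)∈[0,T]×[-1,1]: (i) ∫₀^T ( ε ‖∂ₓφ(t,·)‖₂² + ‖φ(t,·)‖₂² + 4 δ ∫_{-1}^1 |∂ₓ√(u(t,x))|² dx ) dt ≤ C₇, and (ii) ∫₀^T ‖φ(t,·)‖_∞² dt ≤ C₇. -/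
open Set MeasureTheory

/-- A classical solution of the monostable system with diffusion `δ`:
`∂ₜu = δ ∂ₓ²u − ∂ₓ(u φ) + r u (1−u)`, `−ε ∂ₓ²φ + φ = −∂ₓu`,
Neumann b.c. for `u`, Dirichlet b.c. for `φ`, initial datum `u₀`. -/
structure IsMonostableSol (T ε r δ : ℝ) (u₀ : ℝ → ℝ) (u φ : ℝ → ℝ → ℝ) : Prop where
  smooth_u : ContDiff ℝ (⊤ : ℕ∞) (fun q : ℝ × ℝ => u q.1 q.2)
  smooth_phi : ContDiff ℝ (⊤ : ℕ∞) (fun q : ℝ × ℝ => φ q.1 q.2)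
  nonneg : ∀ t ∈ Set.Icc (0:ℝ) T, ∀ x ∈ Set.Icc (-1:ℝ) 1, 0 ≤ u t x
  eq_u : ∀ t ∈ Set.Icc (0:ℝ) T, ∀ x ∈ Set.Icc (-1:ℝ) 1,
    deriv (fun s => u s x) t =
      δ * deriv (deriv (u t)) x - deriv (fun y => u t y * φ t y) x
        + r * u t x * (1 - u t x)
  eq_phi : ∀ t ∈ Set.Icc (0:ℝ) T, ∀ x ∈ Set.Icc (-1:ℝ) 1,
    -ε * deriv (deriv (φ t)) x + φ t x = -deriv (u t) x
  bc_u : ∀ t ∈ Set.Icc (0:ℝ) T, deriv (u t) (-1) = 0 ∧ deriv (u t) 1 = 0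
  bc_phi : ∀ t ∈ Set.Icc (0:ℝ) T, φ t (-1) = 0 ∧ φ t 1 = 0
  init : ∀ x ∈ Set.Icc (-1:ℝ) 1, u 0 x = u₀ x

lemma neg_one_le_mul_log {s : ℝ} (hs : 0 < s) : -1 ≤ s * Real.log s := by
  have h := Real.log_le_sub_one_of_pos (inv_pos.2 hs)
  rw [Real.log_inv] at h
  have h2 : s * (-Real.log s) ≤ s * (s⁻¹ - 1) := mul_le_mul_of_nonneg_left h hs.le
  rw [mul_sub, mul_inv_cancel₀ hs.ne'] at h2
  nlinarith

lemma logistic_le_one {s : ℝ} (hs : 0 < s) : s * (1 - s) * (Real.log s + 1) ≤ 1 := by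
  rcases le_total s 1 with h1 | h1
  · have hl : Real.log s ≤ 0 := Real.log_nonpos hs.le h1
    rcases le_total (Real.log s + 1) 0 with h2 | h2
    · have h3 : 0 ≤ s * (1 - s) := mul_nonneg hs.le (by linarith)
      nlinarith
    · nlinarith [mul_nonneg hs.le (by linarith : (0:ℝ) ≤ 1 - s)]
  · have hl : 0 ≤ Real.log s := Real.log_nonneg h1
    have h3 : s * (1 - s) ≤ 0 := mul_nonpos_of_nonneg_of_nonpos hs.le (by linarith)
    nlinarith

lemma pnorm_two_sq (f : ℝ → ℝ) :
    (pnorm 2 f) ^ 2 = ∫ x in (-1:ℝ)..1, f x ^ 2 := by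
  have h1 : (fun x => |f x| ^ (2:ℝ)) = fun x => f x ^ 2 := by
    funext x
    rw [show (2:ℝ) = ((2:ℕ):ℝ) by norm_num, Real.rpow_natCast, sq_abs]
  have h3 : 0 ≤ ∫ x in (-1:ℝ)..1, f x ^ 2 :=
    intervalIntegral.integral_nonneg (by norm_num) (fun x _ => sq_nonneg _)
  unfold pnorm
  rw [h1]
  rw [← Real.rpow_natCast ((∫ x in (-1:ℝ)..1, f x ^ 2) ^ (1/(2:ℝ))) 2, ← Real.rpow_mul h3]
  norm_num

section AuxMain
variable {T ε r δ : ℝ} {u₀ : ℝ → ℝ} {u φ : ℝ → ℝ → ℝ}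

lemma main_aux (hT : 0 < T) (hε : 0 < ε) (hr : 0 ≤ r) (hδ : 0 < δ)
    (sol : IsMonostableSol T ε r δ u₀ u φ)
    (hpos : ∀ t ∈ Set.Icc (0:ℝ) T, ∀ x ∈ Set.Icc (-1:ℝ) 1, 0 < u t x) :
    IntervalIntegrable (fun t => ε * pnorm 2 (deriv (φ t)) ^ 2 + pnorm 2 (φ t) ^ 2
      + 4 * δ * ∫ x in (-1:ℝ)..1, |deriv (fun y => Real.sqrt (u t y)) x| ^ 2) volume 0 T ∧
    (∫ t in (0:ℝ)..T, (ε * pnorm 2 (deriv (φ t)) ^ 2 + pnorm 2 (φ t) ^ 2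
      + 4 * δ * ∫ x in (-1:ℝ)..1, |deriv (fun y => Real.sqrt (u t y)) x| ^ 2))
      ≤ 2*r*T + (∫ x in (-1:ℝ)..1, u₀ x * Real.log (u₀ x)) + 2 ∧
    ∀ t ∈ Set.Icc (0:ℝ) T, supnorm (φ t) ^ 2 ≤ (max ε⁻¹ 1) *
      (ε * pnorm 2 (deriv (φ t)) ^ 2 + pnorm 2 (φ t) ^ 2
        + 4 * δ * ∫ x in (-1:ℝ)..1, |deriv (fun y => Real.sqrt (u t y)) x| ^ 2) := by
  have hone : ((⊤:ℕ∞) : WithTop ℕ∞) ≠ 0 := by simp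
  have huIcc : uIcc (-1:ℝ) 1 = Icc (-1:ℝ) 1 := uIcc_of_le (by norm_num)
  have huIccT : uIcc (0:ℝ) T = Icc (0:ℝ) T := uIcc_of_le hT.le
  set W : ℝ × ℝ → ℝ := fun q => u q.1 q.2 with hWdef
  have hW : ContDiff ℝ (⊤:ℕ∞) W := sol.smooth_u.of_le (by simp)
  have hWc : Continuous W := hW.continuous
  have hWd : Differentiable ℝ W := hW.differentiable hone
  have hV : ContDiff ℝ (⊤:ℕ∞) (fun q : ℝ × ℝ => φ q.1 q.2) := sol.smooth_phi.of_le (by simp)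
  have hu_t : ∀ t, ContDiff ℝ (⊤:ℕ∞) (u t) := fun t =>
    hW.comp (ContDiff.prodMk (contDiff_const (c := t)) contDiff_id)
  have hφ_t : ∀ t, ContDiff ℝ (⊤:ℕ∞) (φ t) := fun t =>
    hV.comp (ContDiff.prodMk (contDiff_const (c := t)) contDiff_id)
  have hUc : ∀ t, Continuous (u t) := fun t => (hu_t t).continuous
  have hUd : ∀ t, Differentiable ℝ (u t) := fun t => (hu_t t).differentiable hone
  have hU'cd : ∀ t, ContDiff ℝ (⊤:ℕ∞) (deriv (u t)) := fun t => (contDiff_infty_iff_deriv.mp (hu_t t)).2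
  have hU'c : ∀ t, Continuous (deriv (u t)) := fun t => (hU'cd t).continuous
  have hU'd : ∀ t, Differentiable ℝ (deriv (u t)) := fun t => (hU'cd t).differentiable hone
  have hU''c : ∀ t, Continuous (deriv (deriv (u t))) := fun t =>
    (contDiff_infty_iff_deriv.mp (hU'cd t)).2.continuous
  have hΦc : ∀ t, Continuous (φ t) := fun t => (hφ_t t).continuous
  have hΦd : ∀ t, Differentiable ℝ (φ t) := fun t => (hφ_t t).differentiable hone
  have hΦ'cd : ∀ t, ContDiff ℝ (⊤:ℕ∞) (deriv (φ t)) := fun t => (contDiff_infty_iff_deriv.mp (hφ_t t)).2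
  have hΦ'c : ∀ t, Continuous (deriv (φ t)) := fun t => (hΦ'cd t).continuous
  have hΦ'd : ∀ t, Differentiable ℝ (deriv (φ t)) := fun t => (hΦ'cd t).differentiable hone
  have hΦ''c : ∀ t, Continuous (deriv (deriv (φ t))) := fun t =>
    (contDiff_infty_iff_deriv.mp (hΦ'cd t)).2.continuous
  have hUΦd : ∀ t, Differentiable ℝ (fun y => u t y * φ t y) := fun t => (hUd t).mul (hΦd t)
  have hUΦ'c : ∀ t, Continuous (deriv (fun y => u t y * φ t y)) := fun t =>
    (contDiff_infty_iff_deriv.mp ((hu_t t).mul (hφ_t t))).2.continuous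
  set pt : ℝ × ℝ → ℝ := fun p => fderiv ℝ W p (1, 0) with hptdef
  have hpt_cont : Continuous pt :=
    (ContinuousLinearMap.apply ℝ ℝ ((1:ℝ),(0:ℝ))).continuous.comp (hW.continuous_fderiv hone)
  have hptd : ∀ t x : ℝ, HasDerivAt (fun s => u s x) (pt (t, x)) t := fun t x =>
    by have h := ((hWd (t,x)).hasFDerivAt).comp_hasDerivAt t ((hasDerivAt_id' t).prodMk (hasDerivAt_const t x)); exact h
  -- compactness and positivity margin
  set K : Set (ℝ×ℝ) := Icc (0:ℝ) T ×ˢ Icc (-1:ℝ) 1 with hKdef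
  have hKc : IsCompact K := isCompact_Icc.prod isCompact_Icc
  have hKA : K ⊆ {p : ℝ×ℝ | 0 < W p} := fun p hp => hpos p.1 hp.1 p.2 hp.2
  obtain ⟨η, hη, hthick⟩ := hKc.exists_thickening_subset_open (isOpen_lt continuous_const hWc) hKA
  set K' : Set (ℝ×ℝ) := Metric.cthickening (η/2) K with hK'def
  have hK'c : IsCompact K' := hKc.cthickening
  have hK'A : ∀ p ∈ K', 0 < W p := fun p hp =>
    hthick (Metric.cthickening_subset_thickening' hη (half_lt_self hη) K hp)
  have hKK' : K ⊆ K' := Metric.self_subset_cthickening K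
  have hmemK : ∀ t ∈ Icc (0:ℝ) T, ∀ x ∈ Icc (-1:ℝ) 1, ((t,x) : ℝ×ℝ) ∈ K :=
    fun t ht x hx => ⟨ht, hx⟩
  have hK'ne : K'.Nonempty :=
    ⟨(0,(-1:ℝ)), hKK' (hmemK 0 (left_mem_Icc.2 hT.le) (-1) (left_mem_Icc.2 (by norm_num)))⟩
  obtain ⟨p₀, hp₀K, hp₀min⟩ := hK'c.exists_isMinOn hK'ne hWc.continuousOn
  have hm : 0 < W p₀ := hK'A p₀ hp₀K
  have hmle : ∀ p ∈ K', W p₀ ≤ W p := fun p hp => hp₀min hp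
  set L : ℝ → ℝ := fun s => Real.log (max s (W p₀ / 2)) with hLdef
  have hLc : Continuous L := (continuous_id.max continuous_const).log
    (fun s => (lt_of_lt_of_le (half_pos hm) (le_max_right s _)).ne')
  have hLeq : ∀ p ∈ K', L (W p) = Real.log (W p) := by
    intro p hp
    simp only [hLdef]
    rw [max_eq_left ((half_le_self hm.le).trans (hmle p hp))]
  have hball : ∀ t₀ ∈ Icc (0:ℝ) T, ∀ t ∈ Metric.ball t₀ (η/2), ∀ x ∈ Icc (-1:ℝ) 1,
      ((t,x):ℝ×ℝ) ∈ K' := by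
    intro t₀ ht₀ t ht x hx
    refine Metric.mem_cthickening_of_dist_le (t,x) (t₀,x) _ _ (hmemK t₀ ht₀ x hx) ?_
    rw [Prod.dist_eq]
    simp only [dist_self]
    exact max_le (Metric.mem_ball.mp ht).le (by positivity)
  -- main functionals
  set F : ℝ → ℝ → ℝ := fun t x => u t x * L (u t x) with hFdef
  set Fp : ℝ → ℝ → ℝ := fun t x => pt (t,x) * (L (u t x) + 1) with hFpdef
  set Qi : ℝ → ℝ → ℝ := fun t x => u t x * (1 - u t x) * (L (u t x) + 1) with hQidef
  set G : ℝ → ℝ := fun t => ∫ x in (-1:ℝ)..1, F t x with hGdef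
  set g : ℝ → ℝ := fun t => ∫ x in (-1:ℝ)..1, Fp t x with hgdef
  set Qf : ℝ → ℝ := fun t => ∫ x in (-1:ℝ)..1, Qi t x with hQfdef
  have hFc : Continuous (Function.uncurry F) := hWc.mul (hLc.comp hWc)
  have hFpc : Continuous (Function.uncurry Fp) :=
    hpt_cont.mul ((hLc.comp hWc).add continuous_const)
  have hQic : Continuous (Function.uncurry Qi) :=
    (hWc.mul (continuous_const.sub hWc)).mul ((hLc.comp hWc).add continuous_const)
  have hFtc : ∀ t, Continuous (F t) := fun t => (hUc t).mul (hLc.comp (hUc t))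
  have hFptc : ∀ t, Continuous (Fp t) := fun t =>
    (hpt_cont.comp (continuous_const.prodMk continuous_id)).mul
      ((hLc.comp (hUc t)).add continuous_const)
  have hQitc : ∀ t, Continuous (Qi t) := fun t =>
    ((hUc t).mul (continuous_const.sub (hUc t))).mul ((hLc.comp (hUc t)).add continuous_const)
  have hg_cont : Continuous g :=
    intervalIntegral.continuous_parametric_intervalIntegral_of_continuous' hFpc (-1) 1
  have hQf_cont : Continuous Qf :=
    intervalIntegral.continuous_parametric_intervalIntegral_of_continuous' hQic (-1) 1
  -- differentiation under the integral sign
  have hGderiv : ∀ t₀ ∈ Icc (0:ℝ) T, HasDerivAt G (g t₀) t₀ := by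
    intro t₀ ht₀
    obtain ⟨M, hM⟩ := (isCompact_Icc (a := t₀ - η/2) (b := t₀ + η/2) |>.prod
      (isCompact_Icc (a := (-1:ℝ)) (b := 1))).exists_bound_of_continuousOn hFpc.continuousOn
    have hxmem : ∀ x ∈ Set.uIoc (-1:ℝ) 1, x ∈ Icc (-1:ℝ) 1 := by
      intro x hx
      rw [uIoc_of_le (by norm_num : (-1:ℝ) ≤ 1)] at hx
      exact Ioc_subset_Icc_self hx
    have hbnd : ∀ᵐ x ∂(volume : Measure ℝ), x ∈ Set.uIoc (-1:ℝ) 1 →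
        ∀ t ∈ Metric.ball t₀ (η/2), ‖Fp t x‖ ≤ M := by
      refine Filter.Eventually.of_forall (fun x hx t ht => ?_)
      have htmem : t ∈ Icc (t₀ - η/2) (t₀ + η/2) := by
        have h1 := Metric.mem_ball.mp ht
        rw [Real.dist_eq, abs_sub_lt_iff] at h1
        constructor <;> linarith
      exact hM (t, x) ⟨htmem, hxmem x hx⟩
    have hdiff : ∀ᵐ x ∂(volume : Measure ℝ), x ∈ Set.uIoc (-1:ℝ) 1 →
        ∀ t ∈ Metric.ball t₀ (η/2), HasDerivAt (fun s => F s x) (Fp t x) t := by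
      refine Filter.Eventually.of_forall (fun x hx t ht => ?_)
      have hx' : x ∈ Icc (-1:ℝ) 1 := hxmem x hx
      have hmem : ((t,x):ℝ×ℝ) ∈ K' := hball t₀ ht₀ t ht x hx'
      have hpos' : 0 < u t x := hK'A _ hmem
      have hlog : HasDerivAt (fun s => Real.log (u s x)) ((u t x)⁻¹ * pt (t,x)) t :=
        by have h := (Real.hasDerivAt_log hpos'.ne').comp t (hptd t x); exact h
      have hmain : HasDerivAt (fun s => u s x * Real.log (u s x))
          (pt (t,x) * Real.log (u t x) + u t x * ((u t x)⁻¹ * pt (t,x))) t :=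
        (hptd t x).mul hlog
      have heq : (fun s => F s x) =ᶠ[nhds t] (fun s => u s x * Real.log (u s x)) := by
        filter_upwards [Metric.isOpen_ball.mem_nhds ht] with s hs
        simp only [hFdef]
        rw [hLeq (s,x) (hball t₀ ht₀ s hs x hx')]
      have hval : Fp t x = pt (t,x) * Real.log (u t x) + u t x * ((u t x)⁻¹ * pt (t,x)) := by
        simp only [hFpdef]
        rw [hLeq (t,x) hmem]
        field_simp
        ring
      rw [hval]
      exact hmain.congr_of_eventuallyEq heq
    have key := intervalIntegral.hasDerivAt_integral_of_dominated_loc_of_deriv_le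
      (F := F) (F' := Fp) (a := (-1:ℝ)) (b := 1) (μ := volume) (x₀ := t₀)
      (bound := fun _ => M) (Metric.ball_mem_nhds t₀ (half_pos hη))
      (Filter.Eventually.of_forall (fun t => (hFtc t).aestronglyMeasurable))
      ((hFtc t₀).intervalIntegrable _ _)
      ((hFptc t₀).aestronglyMeasurable)
      hbnd (intervalIntegrable_const) hdiff
    exact key.2
  have hFTC : ∫ t in (0:ℝ)..T, g t = G T - G 0 :=
    intervalIntegral.integral_eq_sub_of_hasDerivAt
      (fun t ht => hGderiv t (huIccT ▸ ht)) (hg_cont.intervalIntegrable _ _)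
  -- the key spatial identity
  have hkey : ∀ t ∈ Icc (0:ℝ) T,
      ε * pnorm 2 (deriv (φ t)) ^ 2 + pnorm 2 (φ t) ^ 2
        + 4 * δ * (∫ x in (-1:ℝ)..1, |deriv (fun y => Real.sqrt (u t y)) x| ^ 2)
      = r * Qf t - g t := by
    intro t ht
    have hUpos : ∀ x ∈ Icc (-1:ℝ) 1, 0 < u t x := hpos t ht
    set w : ℝ → ℝ := fun x => Real.log (u t x) + 1 with hwdef
    set w' : ℝ → ℝ := fun x => (u t x)⁻¹ * deriv (u t) x with hw'def
    have hwder : ∀ x ∈ uIcc (-1:ℝ) 1, HasDerivAt w (w' x) x := fun x hx =>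
      ((Real.hasDerivAt_log (hUpos x (huIcc ▸ hx)).ne').comp x ((hUd t) x).hasDerivAt).add_const 1
    have hwcont : ContinuousOn w (uIcc (-1:ℝ) 1) := by
      rw [huIcc]
      exact ((hUc t).continuousOn.log (fun x hx => (hUpos x hx).ne')).add continuousOn_const
    have hw'cont : ContinuousOn w' (uIcc (-1:ℝ) 1) := by
      rw [huIcc]
      exact ((hUc t).continuousOn.inv₀ (fun x hx => (hUpos x hx).ne')).mul (hU'c t).continuousOn
    have hw'int : IntervalIntegrable w' volume (-1) 1 := hw'cont.intervalIntegrable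
    have ibp1 : ∫ x in (-1:ℝ)..1, w x * deriv (deriv (u t)) x
        = - ∫ x in (-1:ℝ)..1, w' x * deriv (u t) x := by
      have h := intervalIntegral.integral_mul_deriv_eq_deriv_mul
        hwder (fun x _ => ((hU'd t) x).hasDerivAt) hw'int ((hU''c t).intervalIntegrable _ _)
      rw [(sol.bc_u t ht).1, (sol.bc_u t ht).2] at h
      simpa using h
    have ibp2 : ∫ x in (-1:ℝ)..1, w x * deriv (fun y => u t y * φ t y) x
        = - ∫ x in (-1:ℝ)..1, deriv (u t) x * φ t x := by
      have h := intervalIntegral.integral_mul_deriv_eq_deriv_mul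
        hwder (fun x _ => ((hUΦd t) x).hasDerivAt) hw'int ((hUΦ'c t).intervalIntegrable _ _)
      rw [(sol.bc_phi t ht).1, (sol.bc_phi t ht).2] at h
      have hcongr : ∫ x in (-1:ℝ)..1, w' x * (u t x * φ t x)
          = ∫ x in (-1:ℝ)..1, deriv (u t) x * φ t x := by
        apply intervalIntegral.integral_congr
        intro x hx
        have h0 : u t x ≠ 0 := (hUpos x (huIcc ▸ hx)).ne'
        simp only [hw'def]
        field_simp
      rw [hcongr] at h
      simpa using h
    have ibp3 : ∫ x in (-1:ℝ)..1, φ t x * deriv (deriv (φ t)) x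
        = - ∫ x in (-1:ℝ)..1, deriv (φ t) x * deriv (φ t) x := by
      have h := intervalIntegral.integral_mul_deriv_eq_deriv_mul (a := (-1:ℝ)) (b := 1)
        (fun x _ => ((hΦd t) x).hasDerivAt) (fun x _ => ((hΦ'd t) x).hasDerivAt)
        ((hΦ'c t).intervalIntegrable _ _) ((hΦ''c t).intervalIntegrable _ _)
      rw [(sol.bc_phi t ht).1, (sol.bc_phi t ht).2] at h
      simpa using h
    have e3 : ∫ x in (-1:ℝ)..1, deriv (u t) x * φ t x
        = ε * (- ∫ x in (-1:ℝ)..1, deriv (φ t) x * deriv (φ t) x)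
          - ∫ x in (-1:ℝ)..1, φ t x * φ t x := by
      have hc1 : EqOn (fun x => deriv (u t) x * φ t x)
          (fun x => ε * (φ t x * deriv (deriv (φ t)) x) - φ t x * φ t x) (uIcc (-1:ℝ) 1) := by
        intro x hx
        have he := sol.eq_phi t ht x (huIcc ▸ hx)
        have hx1 : deriv (u t) x = ε * deriv (deriv (φ t)) x - φ t x := by linarith
        simp only
        rw [hx1]
        ring
      rw [intervalIntegral.integral_congr hc1,
        intervalIntegral.integral_sub (f := fun x => ε * (φ t x * deriv (deriv (φ t)) x))
          (g := fun x => φ t x * φ t x)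
          ((continuous_const.mul ((hΦc t).mul (hΦ''c t))).intervalIntegrable _ _)
          (((hΦc t).mul (hΦc t)).intervalIntegrable _ _),
        intervalIntegral.integral_const_mul, ibp3]
    have esqrt : ∫ x in (-1:ℝ)..1, |deriv (fun y => Real.sqrt (u t y)) x| ^ 2
        = 4⁻¹ * ∫ x in (-1:ℝ)..1, w' x * deriv (u t) x := by
      rw [← intervalIntegral.integral_const_mul]
      apply intervalIntegral.integral_congr
      intro x hx
      have hp : 0 < u t x := hUpos x (huIcc ▸ hx)
      have hs : HasDerivAt (fun y => Real.sqrt (u t y))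
          (1/(2*Real.sqrt (u t x)) * deriv (u t) x) x :=
        (Real.hasDerivAt_sqrt hp.ne').comp x ((hUd t) x).hasDerivAt
      have h1 : Real.sqrt (u t x) ^ 2 = u t x := Real.sq_sqrt hp.le
      have h2 : Real.sqrt (u t x) ≠ 0 := (Real.sqrt_pos.mpr hp).ne'
      simp only
      rw [hs.deriv, sq_abs, hw'def, mul_pow, div_pow, one_pow, mul_pow, h1]
      field_simp
      ring
    have iw1 : IntervalIntegrable (fun x => w x * deriv (deriv (u t)) x) volume (-1) 1 :=
      (hwcont.mul (hU''c t).continuousOn).intervalIntegrable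
    have iw2 : IntervalIntegrable (fun x => w x * deriv (fun y => u t y * φ t y) x) volume (-1) 1 :=
      (hwcont.mul (hUΦ'c t).continuousOn).intervalIntegrable
    have iw3 : IntervalIntegrable (fun x => Qi t x) volume (-1) 1 := (hQitc t).intervalIntegrable _ _
    have hgt : g t = δ * (∫ x in (-1:ℝ)..1, w x * deriv (deriv (u t)) x)
        - (∫ x in (-1:ℝ)..1, w x * deriv (fun y => u t y * φ t y) x) + r * Qf t := by
      have hstep1 : g t = ∫ x in (-1:ℝ)..1,
          (δ * (w x * deriv (deriv (u t)) x) - (w x * deriv (fun y => u t y * φ t y) x)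
            + r * Qi t x) := by
        apply intervalIntegral.integral_congr
        intro x hx
        have hxI : x ∈ Icc (-1:ℝ) 1 := huIcc ▸ hx
        have hmem : ((t,x):ℝ×ℝ) ∈ K' := hKK' (hmemK t ht x hxI)
        have hL' : L (u t x) = Real.log (u t x) := hLeq (t,x) hmem
        have hpt' : pt (t,x) = deriv (fun s => u s x) t := ((hptd t x).deriv).symm
        simp only [hFpdef, hQidef, hwdef]
        rw [hL', hpt', sol.eq_u t ht x hxI]
        ring
      rw [hstep1, intervalIntegral.integral_add ((iw1.const_mul δ).sub iw2) (iw3.const_mul r),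
        intervalIntegral.integral_sub (iw1.const_mul δ) iw2,
        intervalIntegral.integral_const_mul, intervalIntegral.integral_const_mul]
    have hsqmul1 : (∫ x in (-1:ℝ)..1, deriv (φ t) x ^ 2)
        = ∫ x in (-1:ℝ)..1, deriv (φ t) x * deriv (φ t) x := by
      apply intervalIntegral.integral_congr
      intro x _
      simp [sq]
    have hsqmul2 : (∫ x in (-1:ℝ)..1, φ t x ^ 2) = ∫ x in (-1:ℝ)..1, φ t x * φ t x := by
      apply intervalIntegral.integral_congr
      intro x _
      simp [sq]
    rw [pnorm_two_sq, pnorm_two_sq, hsqmul1, hsqmul2, esqrt, hgt, ibp1, ibp2, e3]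
    ring
  -- conjunct 1: integrability
  have hf_cont : Continuous (fun t => r * Qf t - g t) := (continuous_const.mul hQf_cont).sub hg_cont
  have hInt : IntervalIntegrable (fun t => ε * pnorm 2 (deriv (φ t)) ^ 2 + pnorm 2 (φ t) ^ 2
      + 4 * δ * ∫ x in (-1:ℝ)..1, |deriv (fun y => Real.sqrt (u t y)) x| ^ 2) volume 0 T := by
    rw [intervalIntegrable_iff]
    refine (intervalIntegrable_iff.mp (hf_cont.intervalIntegrable 0 T)).congr_fun ?_ measurableSet_uIoc
    intro t htI
    exact (hkey t (Ioc_subset_Icc_self ((uIoc_of_le hT.le) ▸ htI))).symm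
  refine ⟨hInt, ?_, ?_⟩
  · -- conjunct 2: the energy bound
    have hQb : ∫ t in (0:ℝ)..T, Qf t ≤ 2 * T := by
      have h1' : ∀ t ∈ Icc (0:ℝ) T, Qf t ≤ 2 := by
        intro t ht
        have h3 : Qf t ≤ ∫ x in (-1:ℝ)..1, (1:ℝ) := by
          apply intervalIntegral.integral_mono_on (by norm_num)
            ((hQitc t).intervalIntegrable _ _) intervalIntegrable_const
          intro x hx
          have hp := hpos t ht x hx
          have hL' : L (u t x) = Real.log (u t x) := hLeq (t,x) (hKK' (hmemK t ht x hx))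
          simp only [hQidef]
          rw [hL']
          exact logistic_le_one hp
        have h4 : (∫ x in (-1:ℝ)..1, (1:ℝ)) = 2 := by norm_num
        linarith
      calc ∫ t in (0:ℝ)..T, Qf t ≤ ∫ t in (0:ℝ)..T, (2:ℝ) :=
            intervalIntegral.integral_mono_on hT.le (hQf_cont.intervalIntegrable _ _)
              intervalIntegrable_const h1'
        _ = 2 * T := by simp [mul_comm]
    have hGT : (-2:ℝ) ≤ G T := by
      have hTm : T ∈ Icc (0:ℝ) T := right_mem_Icc.2 hT.le
      have h3 : ∫ x in (-1:ℝ)..1, (-1:ℝ) ≤ G T := by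
        apply intervalIntegral.integral_mono_on (by norm_num) intervalIntegrable_const
          ((hFtc T).intervalIntegrable _ _)
        intro x hx
        have hp := hpos T hTm x hx
        have hL' : L (u T x) = Real.log (u T x) := hLeq (T,x) (hKK' (hmemK T hTm x hx))
        simp only [hFdef]
        rw [hL']
        exact neg_one_le_mul_log hp
      have h4 : (∫ x in (-1:ℝ)..1, (-1:ℝ)) = -2 := by norm_num
      linarith
    have hG0 : G 0 = ∫ x in (-1:ℝ)..1, u₀ x * Real.log (u₀ x) := by
      apply intervalIntegral.integral_congr
      intro x hx
      have hxI : x ∈ Icc (-1:ℝ) 1 := huIcc ▸ hx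
      have h0m : (0:ℝ) ∈ Icc (0:ℝ) T := left_mem_Icc.2 hT.le
      have hL' : L (u 0 x) = Real.log (u 0 x) := hLeq (0,x) (hKK' (hmemK 0 h0m x hxI))
      simp only [hFdef]
      rw [hL', sol.init x hxI]
    have hrq : r * (∫ t in (0:ℝ)..T, Qf t) ≤ r * (2*T) := mul_le_mul_of_nonneg_left hQb hr
    have hchain : (∫ t in (0:ℝ)..T, (ε * pnorm 2 (deriv (φ t)) ^ 2 + pnorm 2 (φ t) ^ 2
          + 4 * δ * ∫ x in (-1:ℝ)..1, |deriv (fun y => Real.sqrt (u t y)) x| ^ 2))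
        = r * (∫ t in (0:ℝ)..T, Qf t) - (G T - G 0) := by
      rw [intervalIntegral.integral_congr (g := fun t => r * Qf t - g t)
          (fun t ht => hkey t (huIccT ▸ ht)),
        intervalIntegral.integral_sub (f := fun t => r * Qf t) (g := g) ((continuous_const.mul hQf_cont).intervalIntegrable _ _)
          (hg_cont.intervalIntegrable _ _),
        intervalIntegral.integral_const_mul, hFTC]
    rw [hchain, hG0]
    linarith [hrq, hGT]
  · -- conjunct 3: sup bound
    intro t ht
    have hI1 : (0:ℝ) ≤ ∫ x in (-1:ℝ)..1, deriv (φ t) x ^ 2 :=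
      intervalIntegral.integral_nonneg (by norm_num) (fun x _ => sq_nonneg _)
    have hI2 : (0:ℝ) ≤ ∫ x in (-1:ℝ)..1, φ t x ^ 2 :=
      intervalIntegral.integral_nonneg (by norm_num) (fun x _ => sq_nonneg _)
    have h4 : (0:ℝ) ≤ 4 * δ * ∫ x in (-1:ℝ)..1, |deriv (fun y => Real.sqrt (u t y)) x| ^ 2 := by
      apply mul_nonneg (by linarith)
      exact intervalIntegral.integral_nonneg (by norm_num) (fun x _ => by positivity)
    have hcont2 : Continuous (fun y => deriv (φ t) y ^ 2 + φ t y ^ 2) :=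
      ((hΦ'c t).pow 2).add ((hΦc t).pow 2)
    have hptw : ∀ x ∈ Icc (-1:ℝ) 1, φ t x * φ t x
        ≤ (∫ x in (-1:ℝ)..1, deriv (φ t) x ^ 2) + ∫ x in (-1:ℝ)..1, φ t x ^ 2 := by
      intro x hx
      have hder : ∀ y ∈ uIcc (-1:ℝ) x, HasDerivAt (fun z => φ t z * φ t z)
          (deriv (φ t) y * φ t y + φ t y * deriv (φ t) y) y := fun y _ =>
        (((hΦd t) y).hasDerivAt).mul (((hΦd t) y).hasDerivAt)
      have hic : Continuous (fun y => deriv (φ t) y * φ t y + φ t y * deriv (φ t) y) :=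
        ((hΦ'c t).mul (hΦc t)).add ((hΦc t).mul (hΦ'c t))
      have hFTCx := intervalIntegral.integral_eq_sub_of_hasDerivAt hder (hic.intervalIntegrable _ _)
      rw [(sol.bc_phi t ht).1] at hFTCx
      have hmono1 : (∫ y in (-1:ℝ)..x, (deriv (φ t) y * φ t y + φ t y * deriv (φ t) y))
          ≤ ∫ y in (-1:ℝ)..x, (deriv (φ t) y ^ 2 + φ t y ^ 2) := by
        apply intervalIntegral.integral_mono_on hx.1 (hic.intervalIntegrable _ _)
          (hcont2.intervalIntegrable _ _)
        intro y _
        nlinarith [sq_nonneg (deriv (φ t) y - φ t y)]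
      have hmono2 : (∫ y in (-1:ℝ)..x, (deriv (φ t) y ^ 2 + φ t y ^ 2))
          ≤ ∫ y in (-1:ℝ)..1, (deriv (φ t) y ^ 2 + φ t y ^ 2) :=
        intervalIntegral.integral_mono_interval le_rfl hx.1 hx.2
          (Filter.Eventually.of_forall (fun y => by positivity)) (hcont2.intervalIntegrable _ _)
      have hsplitx : (∫ y in (-1:ℝ)..1, (deriv (φ t) y ^ 2 + φ t y ^ 2))
          = (∫ x in (-1:ℝ)..1, deriv (φ t) x ^ 2) + ∫ x in (-1:ℝ)..1, φ t x ^ 2 :=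
        intervalIntegral.integral_add (((hΦ'c t).pow 2).intervalIntegrable _ _)
          (((hΦc t).pow 2).intervalIntegrable _ _)
      nlinarith [hFTCx, hmono1, hmono2]
    have hB0 : (0:ℝ) ≤ (∫ x in (-1:ℝ)..1, deriv (φ t) x ^ 2) + ∫ x in (-1:ℝ)..1, φ t x ^ 2 :=
      add_nonneg hI1 hI2
    have hSle : supnorm (φ t)
        ≤ Real.sqrt ((∫ x in (-1:ℝ)..1, deriv (φ t) x ^ 2) + ∫ x in (-1:ℝ)..1, φ t x ^ 2) := by
      apply Real.sSup_le
      · rintro z ⟨x, hx, rfl⟩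
        refine (Real.le_sqrt (abs_nonneg _) hB0).mpr ?_
        rw [sq_abs]
        calc φ t x ^ 2 = φ t x * φ t x := by ring
          _ ≤ _ := hptw x hx
      · exact Real.sqrt_nonneg _
    have hS0 : 0 ≤ supnorm (φ t) :=
      Real.sSup_nonneg (by rintro z ⟨x, hx, rfl⟩; exact abs_nonneg _)
    have hS2 : supnorm (φ t) ^ 2
        ≤ (∫ x in (-1:ℝ)..1, deriv (φ t) x ^ 2) + ∫ x in (-1:ℝ)..1, φ t x ^ 2 := by
      have h5 := pow_le_pow_left₀ hS0 hSle 2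
      rwa [Real.sq_sqrt hB0] at h5
    have hKε : (1:ℝ) ≤ max ε⁻¹ 1 * ε := by
      calc (1:ℝ) = ε⁻¹ * ε := (inv_mul_cancel₀ hε.ne').symm
        _ ≤ max ε⁻¹ 1 * ε := mul_le_mul_of_nonneg_right (le_max_left _ _) hε.le
    have hK2 : (1:ℝ) ≤ max ε⁻¹ 1 := le_max_right _ _
    rw [pnorm_two_sq, pnorm_two_sq]
    have a1 : (∫ x in (-1:ℝ)..1, deriv (φ t) x ^ 2)
        ≤ (max ε⁻¹ 1 * ε) * ∫ x in (-1:ℝ)..1, deriv (φ t) x ^ 2 := le_mul_of_one_le_left hI1 hKε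
    have a2 : (∫ x in (-1:ℝ)..1, φ t x ^ 2)
        ≤ max ε⁻¹ 1 * ∫ x in (-1:ℝ)..1, φ t x ^ 2 := le_mul_of_one_le_left hI2 hK2
    have a3 : (0:ℝ) ≤ max ε⁻¹ 1
        * (4 * δ * ∫ x in (-1:ℝ)..1, |deriv (fun y => Real.sqrt (u t y)) x| ^ 2) :=
      mul_nonneg (by linarith) h4
    calc supnorm (φ t) ^ 2
        ≤ (∫ x in (-1:ℝ)..1, deriv (φ t) x ^ 2) + ∫ x in (-1:ℝ)..1, φ t x ^ 2 := hS2
      _ ≤ (max ε⁻¹ 1 * ε) * (∫ x in (-1:ℝ)..1, deriv (φ t) x ^ 2)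
          + max ε⁻¹ 1 * (∫ x in (-1:ℝ)..1, φ t x ^ 2)
          + max ε⁻¹ 1 * (4 * δ * ∫ x in (-1:ℝ)..1, |deriv (fun y => Real.sqrt (u t y)) x| ^ 2) := by
            linarith
      _ = max ε⁻¹ 1 * (ε * (∫ x in (-1:ℝ)..1, deriv (φ t) x ^ 2)
          + (∫ x in (-1:ℝ)..1, φ t x ^ 2)
          + 4 * δ * ∫ x in (-1:ℝ)..1, |deriv (fun y => Real.sqrt (u t y)) x| ^ 2) := by ring
end AuxMain

theorem energy_estimates_monostable (T ε r : ℝ) (u₀ : ℝ → ℝ)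
    (hT : 0 < T) (hε : 0 < ε) (hr : 0 ≤ r)
    (hu₀ : ContDiff ℝ (⊤ : ℕ∞) u₀) (hu₀nonneg : ∀ x ∈ Set.Icc (-1:ℝ) 1, 0 ≤ u₀ x) :
    ∃ C₇ > (0:ℝ), ∀ δ ∈ Set.Ioo (0:ℝ) 1, ∀ u φ : ℝ → ℝ → ℝ, IsMonostableSol T ε r δ u₀ u φ →
      (∀ t ∈ Set.Icc (0:ℝ) T, ∀ x ∈ Set.Icc (-1:ℝ) 1, 0 < u t x) →
      ((∫ t in (0:ℝ)..T,
          (ε * pnorm 2 (deriv (φ t)) ^ 2 + pnorm 2 (φ t) ^ 2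
            + 4 * δ * ∫ x in (-1:ℝ)..1, |deriv (fun y => Real.sqrt (u t y)) x| ^ 2)) ≤ C₇) ∧
      ((∫ t in (0:ℝ)..T, supnorm (φ t) ^ 2) ≤ C₇) := by
  set B : ℝ := max 1 (2*r*T + (∫ x in (-1:ℝ)..1, u₀ x * Real.log (u₀ x)) + 2) with hBdef
  have hεi : (0:ℝ) ≤ ε⁻¹ := by positivity
  have hB1 : (1:ℝ) ≤ B := le_max_left _ _
  have hC7pos : (0:ℝ) < (1 + ε⁻¹) * B := mul_pos (by linarith) (by linarith)
  refine ⟨(1 + ε⁻¹) * B, hC7pos, ?_⟩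
  intro δ hδ u φ sol hpos
  obtain ⟨hint, hbound, hsup⟩ := main_aux hT hε hr hδ.1 sol hpos
  have hBb : 2*r*T + (∫ x in (-1:ℝ)..1, u₀ x * Real.log (u₀ x)) + 2 ≤ B := le_max_right _ _
  constructor
  · calc (∫ t in (0:ℝ)..T,
          (ε * pnorm 2 (deriv (φ t)) ^ 2 + pnorm 2 (φ t) ^ 2
            + 4 * δ * ∫ x in (-1:ℝ)..1, |deriv (fun y => Real.sqrt (u t y)) x| ^ 2))
        ≤ 2*r*T + (∫ x in (-1:ℝ)..1, u₀ x * Real.log (u₀ x)) + 2 := hbound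
      _ ≤ B := hBb
      _ ≤ (1 + ε⁻¹) * B := le_mul_of_one_le_left (by linarith) (by linarith)
  · by_cases hcase : IntervalIntegrable (fun t => supnorm (φ t) ^ 2) volume 0 T
    · have h1 : (∫ t in (0:ℝ)..T, supnorm (φ t) ^ 2)
          ≤ ∫ t in (0:ℝ)..T, (max ε⁻¹ 1) * (ε * pnorm 2 (deriv (φ t)) ^ 2 + pnorm 2 (φ t) ^ 2
            + 4 * δ * ∫ x in (-1:ℝ)..1, |deriv (fun y => Real.sqrt (u t y)) x| ^ 2) :=
        intervalIntegral.integral_mono_on hT.le hcase (hint.const_mul _) hsup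
      rw [intervalIntegral.integral_const_mul] at h1
      have h2 : max ε⁻¹ 1 ≤ 1 + ε⁻¹ := max_le (by linarith) (by linarith)
      have h3 : (0:ℝ) ≤ max ε⁻¹ 1 := le_trans zero_le_one (le_max_right _ _)
      calc (∫ t in (0:ℝ)..T, supnorm (φ t) ^ 2)
          ≤ max ε⁻¹ 1 * (∫ t in (0:ℝ)..T,
            (ε * pnorm 2 (deriv (φ t)) ^ 2 + pnorm 2 (φ t) ^ 2
              + 4 * δ * ∫ x in (-1:ℝ)..1, |deriv (fun y => Real.sqrt (u t y)) x| ^ 2)) := h1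
        _ ≤ max ε⁻¹ 1 * B := mul_le_mul_of_nonneg_left (hbound.trans hBb) h3
        _ ≤ (1 + ε⁻¹) * B := mul_le_mul_of_nonneg_right h2 (by linarith)
    · rw [intervalIntegral.integral_undef hcase]
      exact hC7pos.le
end

section
/- For every δ∈(0,1), every classical solution (u,φ) of the monostable system with diffusion δ, every t∈[0,T] and every x∈[-1,1], the following pointwise lower bound holds: ∂ₓφ(t,x) ≥ −(2/ε) ‖φ(t,·)‖_∞ − (1/(2ε)) ‖u(t,·)‖₁. -/
open Set MeasureTheory

theorem phi_deriv_lower_bound_monostable (T ε r : ℝ) (u₀ : ℝ → ℝ)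
    (hT : 0 < T) (hε : 0 < ε) (hr : 0 ≤ r)
    (hu₀ : ContDiff ℝ (⊤ : ℕ∞) u₀) (hu₀nonneg : ∀ x ∈ Set.Icc (-1:ℝ) 1, 0 ≤ u₀ x) :
    ∀ δ ∈ Set.Ioo (0:ℝ) 1, ∀ u φ : ℝ → ℝ → ℝ, IsMonostableSol T ε r δ u₀ u φ →
      ∀ t ∈ Set.Icc (0:ℝ) T, ∀ x ∈ Set.Icc (-1:ℝ) 1,
        deriv (φ t) x ≥ -(2 / ε) * supnorm (φ t) - 1 / (2 * ε) * pnorm 1 (u t) := by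
  rintro δ hδ u φ hsol t ht x hx
  set p := φ t with hpdef
  set v := u t with hvdef
  have hp : ContDiff ℝ (⊤ : ℕ∞) p :=
    hsol.smooth_phi.comp (ContDiff.prodMk (contDiff_const (c := t)) contDiff_id)
  have hv : ContDiff ℝ (⊤ : ℕ∞) v :=
    hsol.smooth_u.comp (ContDiff.prodMk (contDiff_const (c := t)) contDiff_id)
  have hpc : Continuous p := hp.continuous
  have hvc : Continuous v := hv.continuous
  have h1top : (1 : WithTop ℕ∞) ≤ ⊤ := le_top
  have h1inf : (1 : WithTop ℕ∞) ≤ ((⊤:ℕ∞):WithTop ℕ∞) := by exact_mod_cast (le_top : (1:ℕ∞) ≤ ⊤)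
  have hp' : ContDiff ℝ ((⊤:ℕ∞):WithTop ℕ∞) (deriv p) := (contDiff_infty_iff_deriv.mp (hp.of_le (by simp))).2
  have hpdiff : Differentiable ℝ p := hp.differentiable (by simp)
  have hp'diff : Differentiable ℝ (deriv p) := hp'.differentiable (by simp)
  have hvdiff : Differentiable ℝ v := hv.differentiable (by simp)
  set S := supnorm p with hSdef
  have hbdd : BddAbove ((fun z => |p z|) '' Set.Icc (-1:ℝ) 1) :=
    (isCompact_Icc.image hpc.abs).bddAbove
  have hS : ∀ y ∈ Set.Icc (-1:ℝ) 1, |p y| ≤ S := fun y hy => le_csSup hbdd ⟨y, hy, rfl⟩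
  have hS0 : 0 ≤ S := le_trans (abs_nonneg _) (hS x hx)
  set P : ℝ → ℝ := fun y => ∫ s in (-1:ℝ)..y, p s with hPdef
  have hPint : ∀ a b : ℝ, IntervalIntegrable p volume a b :=
    fun a b => hpc.intervalIntegrable a b
  have hPderiv : ∀ y : ℝ, HasDerivAt P (p y) y := fun y =>
    intervalIntegral.integral_hasDerivAt_right (hPint _ _)
      (hpc.stronglyMeasurableAtFilter _ _) hpc.continuousAt
  have hPc : Continuous P :=
    Differentiable.continuous (fun y => (hPderiv y).differentiableAt)
  -- H is constant on [-1,1]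
  set H : ℝ → ℝ := fun y => ε * deriv p y - P y - v y with hHdef
  have hHcont : ContinuousOn H (Set.Icc (-1:ℝ) 1) :=
    (((continuous_const.mul hp'.continuous).sub hPc).sub hvc).continuousOn
  have hHderiv : ∀ y ∈ Set.Ico (-1:ℝ) 1, HasDerivWithinAt H 0 (Set.Ici y) y := by
    intro y hy
    have hy' : y ∈ Set.Icc (-1:ℝ) 1 := ⟨hy.1, le_of_lt hy.2⟩
    have h1 : HasDerivAt (deriv p) (deriv (deriv p) y) y := (hp'diff y).hasDerivAt
    have h2 : HasDerivAt v (deriv v y) y := (hvdiff y).hasDerivAt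
    have h3 : HasDerivAt H (ε * deriv (deriv p) y - p y - deriv v y) y :=
      ((h1.const_mul ε).sub (hPderiv y)).sub h2
    have heq : -ε * deriv (deriv p) y + p y = -deriv v y := hsol.eq_phi t ht y hy'
    have h0 : ε * deriv (deriv p) y - p y - deriv v y = 0 := by linarith
    rw [h0] at h3
    exact h3.hasDerivWithinAt
  have hconst := constant_of_has_deriv_right_zero hHcont hHderiv
  have hkey : ∀ y ∈ Set.Icc (-1:ℝ) 1,
      ε * deriv p x = ε * deriv p y + (P x + v x - P y - v y) := by
    intro y hy
    have h1 := hconst y hy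
    have h2 := hconst x hx
    simp only [hHdef] at h1 h2
    linarith
  -- integrate the identity over y ∈ [-1,1]
  have i1 : IntervalIntegrable (fun y => ε * deriv p y) volume (-1) 1 :=
    (continuous_const.mul hp'.continuous).intervalIntegrable _ _
  have i2 : IntervalIntegrable (fun y => P x + v x - P y - v y) volume (-1) 1 :=
    ((continuous_const.sub hPc).sub hvc).intervalIntegrable _ _
  have hid : 2 * (ε * deriv p x)
      = (∫ y in (-1:ℝ)..1, ε * deriv p y)
        + ∫ y in (-1:ℝ)..1, (P x + v x - P y - v y) := by
    rw [← intervalIntegral.integral_add i1 i2]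
    have hcg : ∫ y in (-1:ℝ)..1, (ε * deriv p y + (P x + v x - P y - v y))
        = ∫ _y in (-1:ℝ)..1, (ε * deriv p x) := by
      apply intervalIntegral.integral_congr
      intro y hy
      rw [Set.uIcc_of_le (by norm_num : (-1:ℝ) ≤ 1)] at hy
      exact (hkey y hy).symm
    rw [hcg, intervalIntegral.integral_const]
    norm_num
  have hA : (∫ y in (-1:ℝ)..1, ε * deriv p y) = 0 := by
    rw [intervalIntegral.integral_const_mul,
      intervalIntegral.integral_deriv_eq_sub (fun y _ => hpdiff y)
        (hp'.continuous.intervalIntegrable _ _)]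
    have hb := hsol.bc_phi t ht
    have hb1 : p 1 = 0 := hb.2
    have hb2 : p (-1) = 0 := hb.1
    rw [hb1, hb2]; ring
  have hmono : (∫ y in (-1:ℝ)..1, (-(2*S) - |v y|))
      ≤ ∫ y in (-1:ℝ)..1, (P x + v x - P y - v y) := by
    apply intervalIntegral.integral_mono_on (by norm_num)
      ((continuous_const.sub hvc.abs).intervalIntegrable _ _) i2
    intro y hy
    have hPxy : |P x - P y| ≤ 2 * S := by
      have hsub : P x - P y = ∫ s in y..x, p s :=
        intervalIntegral.integral_interval_sub_left (hPint _ _) (hPint _ _)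
      rw [hsub]
      have hnorm : ‖∫ s in y..x, p s‖ ≤ S * |x - y| := by
        apply intervalIntegral.norm_integral_le_of_norm_le_const
        intro s hs
        have hs' : s ∈ Set.Icc (-1:ℝ) 1 :=
          Set.uIcc_subset_Icc hy hx (Set.uIoc_subset_uIcc hs)
        simpa [Real.norm_eq_abs] using hS s hs'
      rw [Real.norm_eq_abs] at hnorm
      have hxy : |x - y| ≤ 2 := by
        rw [abs_le]
        constructor <;> [linarith [hx.1, hy.2]; linarith [hx.2, hy.1]]
      calc |∫ s in y..x, p s| ≤ S * |x - y| := hnorm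
        _ ≤ 2 * S := by nlinarith
    have hvx : 0 ≤ v x := hsol.nonneg t ht x hx
    have hvy : v y ≤ |v y| := le_abs_self _
    have := abs_le.mp hPxy
    show -(2*S) - |v y| ≤ P x + v x - P y - v y; linarith [this.1]
  have hlhs : (∫ y in (-1:ℝ)..1, (-(2*S) - |v y|))
      = -(4*S) - ∫ y in (-1:ℝ)..1, |v y| := by
    rw [intervalIntegral.integral_sub intervalIntegrable_const
      (hvc.abs.intervalIntegrable _ _), intervalIntegral.integral_const]
    norm_num; ring
  have hN : pnorm 1 v = ∫ y in (-1:ℝ)..1, |v y| := by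
    unfold pnorm
    norm_num
  rw [ge_iff_le, hN]
  set N := ∫ y in (-1:ℝ)..1, |v y| with hNdef
  have hfin : -(4*S) - N ≤ 2 * (ε * deriv p x) := by
    rw [hid, hA]
    calc -(4*S) - N = ∫ y in (-1:ℝ)..1, (-(2*S) - |v y|) := by rw [hlhs]
      _ ≤ ∫ y in (-1:ℝ)..1, (P x + v x - P y - v y) := hmono
      _ = 0 + ∫ y in (-1:ℝ)..1, (P x + v x - P y - v y) := by ring
  have h2e : (0:ℝ) < 2 * ε := by linarith
  rw [show -(2/ε) * S - 1/(2*ε) * N = (-(4*S) - N) / (2*ε) by field_simp; ring,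
    div_le_iff₀ h2e]
  linarith
end
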